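/- arXiv:1006.2258 — 3 statements merged into one kernel-verified Lean document; each statement's English description precedes it below -/
import Mathlib

section
/- Let n ≥ 3 and k ≥ 1. Then β ∈ B_{n+2}^+ and Δ_{n+2}^{−1}β ∉ B_{n+2}^+; moreover β⁻¹Δ_{n+2}^{4k+1} ∈ B_{n+2}^+ and β⁻¹Δ_{n+2}^{4k} ∉ B_{n+2}^+ (that is, β has infimum 0 and canonical length 4k+1). -/
/-- Relations for the braid group on `n` strands, with generators `σ_1, …, σ_{n-1}`
(generators with indices outside `{1, …, n-1}` are killed). -/
def braidRels (n : ℕ) : Set (FreeGroup ℕ) :=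
  { r | (∃ i : ℕ, 1 ≤ i ∧ i + 2 ≤ n ∧
          r = FreeGroup.of i * FreeGroup.of (i + 1) * FreeGroup.of i *
              (FreeGroup.of (i + 1) * FreeGroup.of i * FreeGroup.of (i + 1))⁻¹) ∨
       (∃ i j : ℕ, 1 ≤ i ∧ i + 2 ≤ j ∧ j + 1 ≤ n ∧
          r = FreeGroup.of i * FreeGroup.of j * (FreeGroup.of j * FreeGroup.of i)⁻¹) ∨
       (∃ i : ℕ, (i = 0 ∨ n ≤ i) ∧ r = FreeGroup.of i) }

/-- The braid group `B_n` on `n` strands. -/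
abbrev B (n : ℕ) : Type := PresentedGroup (braidRels n)

/-- The Artin generator `σ_i` of `B n`. -/
def σb (n i : ℕ) : B n := PresentedGroup.of i

/-- The element of `B n` represented by a word in the generators. -/
def word (n : ℕ) (l : List ℕ) : B n := (l.map (σb n)).prod

/-- The positive braid monoid `B_n^+`. -/
def Bpos (n : ℕ) : Submonoid (B n) :=
  Submonoid.closure { x | ∃ i : ℕ, 1 ≤ i ∧ i ≤ n - 1 ∧ x = σb n i }

/-- The prefix order: `a ≼ b`. -/
def bLe (n : ℕ) (a b : B n) : Prop := a⁻¹ * b ∈ Bpos n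

/-- The suffix order: `a ≽ b`. -/
def bGe (n : ℕ) (a b : B n) : Prop := a * b⁻¹ ∈ Bpos n

/-- The list `[a, a-1, …, b]` (empty if `a < b`). -/
def descList (a b : ℕ) : List ℕ := (List.range' b (a + 1 - b)).reverse

/-- The Garside element `Δ_n = σ_1 (σ_2 σ_1) ⋯ (σ_{n-1} σ_{n-2} ⋯ σ_1)`. -/
def DeltaB (n : ℕ) : B n :=
  word n (((List.range' 1 (n - 1)).map fun t => descList t 1).flatten)

/-- The element `δ = σ_1 σ_2 ⋯ σ_{n-1}`. -/
def deltaB (n : ℕ) : B n := word n (List.range' 1 (n - 1))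

/-- Simple elements: positive prefixes of `Δ_n`. -/
def isSimple (n : ℕ) (s : B n) : Prop := s ∈ Bpos n ∧ bLe n s (DeltaB n)

/-- The starting set `S(a) = {i : σ_i ≼ a}`. -/
def startSet (n : ℕ) (a : B n) : Set ℕ :=
  { i | 1 ≤ i ∧ i ≤ n - 1 ∧ bLe n (σb n i) a }

/-- The finishing set `F(a) = {i : a ≽ σ_i}`. -/
def finishSet (n : ℕ) (a : B n) : Set ℕ :=
  { i | 1 ≤ i ∧ i ≤ n - 1 ∧ bGe n a (σb n i) }

/-- The simple conjugate `δ_{d_1,…,d_m}` of `δ`, where `l = [d_1, …, d_m]`. -/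
def deltaD (n : ℕ) (l : List ℕ) : B n :=
  word n ((((1 :: l).zip (l ++ [n])).map fun p => descList (p.2 - 1) p.1).flatten)

/-- The simple element `α_{i,j}`. -/
def alphaB (n i j : ℕ) : B n :=
  if i ≤ j then word n (List.range' i (j + 1 - i)) else word n (descList i j)

/-- The conjugate `x_{η,i_1,…,i_{l+1}} = w⁻¹ η w`, `w = α_{i_1,i_2} α_{i_2,i_3} ⋯ α_{i_l,i_{l+1}}`. -/
def xbraid (n : ℕ) (η : B n) (i : ℕ → ℕ) (l : ℕ) : B n :=
  (((List.range l).map fun idx => alphaB n (i (idx + 1)) (i (idx + 2))).prod)⁻¹ * η *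
    ((List.range l).map fun idx => alphaB n (i (idx + 1)) (i (idx + 2))).prod

/-- A left-weighted sequence of proper simple factors. -/
def LWSeq (n : ℕ) (ys : List (B n)) : Prop :=
  (∀ y ∈ ys, isSimple n y ∧ y ≠ 1 ∧ y ≠ DeltaB n) ∧
  List.Chain' (fun a b => startSet n b ⊆ finishSet n a) ys

namespace Braid

variable {m : ℕ}

theorem rel_one {r : FreeGroup ℕ} (h : r ∈ braidRels m) :
    PresentedGroup.mk (braidRels m) r = 1 :=
  (QuotientGroup.eq_one_iff _).2 (Subgroup.subset_normalClosure h)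

theorem braid_rel {i : ℕ} (h1 : 1 ≤ i) (h2 : i + 2 ≤ m) :
    σb m i * σb m (i+1) * σb m i = σb m (i+1) * σb m i * σb m (i+1) := by
  have := rel_one (m := m) (r := FreeGroup.of i * FreeGroup.of (i + 1) * FreeGroup.of i *
              (FreeGroup.of (i + 1) * FreeGroup.of i * FreeGroup.of (i + 1))⁻¹)
    (Or.inl ⟨i, h1, h2, rfl⟩)
  simp only [map_mul, map_inv] at this
  have h := mul_inv_eq_one.1 this
  exact h

theorem comm_rel {i j : ℕ} (h1 : 1 ≤ i) (h2 : i + 2 ≤ j) (h3 : j + 1 ≤ m) :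
    σb m i * σb m j = σb m j * σb m i := by
  have := rel_one (m := m) (r := FreeGroup.of i * FreeGroup.of j *
      (FreeGroup.of j * FreeGroup.of i)⁻¹) (Or.inr (Or.inl ⟨i, j, h1, h2, h3, rfl⟩))
  simp only [map_mul, map_inv] at this
  exact mul_inv_eq_one.1 this

theorem kill_rel {i : ℕ} (h : i = 0 ∨ m ≤ i) : σb m i = 1 :=
  rel_one (m := m) (Or.inr (Or.inr ⟨i, h, rfl⟩))

/-- commutation for any indices at distance ≥ 2 -/
theorem comm' {i j : ℕ} (h2 : i + 2 ≤ j) : σb m i * σb m j = σb m j * σb m i := by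
  rcases Nat.eq_zero_or_pos i with hi | hi
  · subst hi; rw [kill_rel (Or.inl rfl)]; simp
  · rcases le_or_gt (j+1) m with hj | hj
    · exact comm_rel hi h2 hj
    · rw [kill_rel (i := j) (Or.inr (by omega))]; simp

theorem comm'' {i j : ℕ} (h : i + 2 ≤ j ∨ j + 2 ≤ i) : σb m i * σb m j = σb m j * σb m i := by
  rcases h with h | h
  · exact comm' h
  · exact (comm' h).symm

theorem word_append (l1 l2 : List ℕ) : word m (l1 ++ l2) = word m l1 * word m l2 := by
  simp [word]

theorem word_cons (a : ℕ) (l : List ℕ) : word m (a :: l) = σb m a * word m l := by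
  simp [word]

theorem word_nil : word m [] = 1 := rfl

theorem word_singleton (a : ℕ) : word m [a] = σb m a := by simp [word]

/-- a generator commutes with a word whose letters are all far from it -/
theorem word_comm {j : ℕ} {l : List ℕ} (h : ∀ x ∈ l, x + 2 ≤ j ∨ j + 2 ≤ x) :
    σb m j * word m l = word m l * σb m j := by
  induction l with
  | nil => simp [word]
  | cons a t ih =>
    rw [word_cons, ← mul_assoc, comm'' (Or.symm (h a (by simp))), mul_assoc,
      ih (fun x hx => h x (by simp [hx])), mul_assoc]

end Braid

namespace Braid

def Alist (t : ℕ) : List ℕ := List.range' 1 t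
def Clist (t : ℕ) : List ℕ := (List.range' 1 t).reverse
def Wlist (t : ℕ) : List ℕ := ((List.range' 1 t).map Clist).flatten

variable {m : ℕ}

theorem Alist_succ (t : ℕ) : Alist (t+1) = Alist t ++ [t+1] := by
  simp [Alist, List.range'_concat, Nat.add_comm]

theorem Clist_succ (t : ℕ) : Clist (t+1) = (t+1) :: Clist t := by
  simp [Clist, List.range'_concat, Nat.add_comm]

theorem Wlist_succ (t : ℕ) : Wlist (t+1) = Wlist t ++ Clist (t+1) := by
  simp [Wlist, List.range'_concat, Nat.add_comm]

theorem mem_Alist {x t : ℕ} (h : x ∈ Alist t) : 1 ≤ x ∧ x ≤ t := by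
  simp [Alist, List.mem_range'] at h; omega

theorem mem_Clist {x t : ℕ} (h : x ∈ Clist t) : 1 ≤ x ∧ x ≤ t := by
  simp [Clist, List.mem_range'] at h; omega

theorem mem_Wlist {x t : ℕ} (h : x ∈ Wlist t) : 1 ≤ x ∧ x ≤ t := by
  simp only [Wlist, List.mem_flatten, List.mem_map] at h
  obtain ⟨l, ⟨j, hj, rfl⟩, hx⟩ := h
  have := mem_Clist hx
  simp [List.mem_range'] at hj
  omega

def Ael (m t : ℕ) : B m := word m (Alist t)
def Cel (m t : ℕ) : B m := word m (Clist t)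
def Wel (m t : ℕ) : B m := word m (Wlist t)

theorem Ael_succ (t : ℕ) : Ael m (t+1) = Ael m t * σb m (t+1) := by
  rw [Ael, Alist_succ, word_append, word_singleton]; rfl

theorem Cel_succ (t : ℕ) : Cel m (t+1) = σb m (t+1) * Cel m t := by
  rw [Cel, Clist_succ, word_cons]; rfl

theorem Wel_succ (t : ℕ) : Wel m (t+1) = Wel m t * Cel m (t+1) := by
  rw [Wel, Wlist_succ, word_append]; rfl

theorem Ael_zero : Ael m 0 = 1 := rfl
theorem Cel_zero : Cel m 0 = 1 := rfl
theorem Wel_zero : Wel m 0 = 1 := rfl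

/-- C-lemma : σ_i C_t = C_t σ_{i+1} for 1 ≤ i ≤ t-1 -/
theorem C_lem (t : ℕ) : ∀ i, t + 1 ≤ m → 1 ≤ i → i + 1 ≤ t →
    σb m i * Cel m t = Cel m t * σb m (i+1) := by
  induction t with
  | zero => intro i _ _ h; omega
  | succ t ih =>
    intro i hm hi hit
    rw [Cel_succ]
    rcases Nat.lt_or_ge (i+1) (t+1) with h | h
    · -- i+1 ≤ t
      rw [← mul_assoc, comm' (by omega), mul_assoc, ih i (by omega) hi (by omega),
        ← mul_assoc, mul_assoc]
    · -- i = t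
      have hit' : i = t := by omega
      subst hit'
      obtain ⟨s, rfl⟩ : ∃ s, i = s + 1 := ⟨i - 1, by omega⟩
      rw [Cel_succ, ← mul_assoc, ← mul_assoc, braid_rel (by omega) (by omega)]
      have hc : σb m (s+1+1) * Cel m s = Cel m s * σb m (s+1+1) :=
        word_comm (fun x hx => by have := mem_Clist hx; omega)
      rw [mul_assoc, mul_assoc, hc, ← mul_assoc, ← mul_assoc, ← mul_assoc]

/-- A-lemma : σ_{i+1} A_t = A_t σ_i for 1 ≤ i ≤ t-1 -/
theorem A_lem (t : ℕ) : ∀ i, t + 1 ≤ m → 1 ≤ i → i + 1 ≤ t →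
    σb m (i+1) * Ael m t = Ael m t * σb m i := by
  induction t with
  | zero => intro i _ _ h; omega
  | succ t ih =>
    intro i hm hi hit
    rw [Ael_succ]
    rcases Nat.lt_or_ge (i+1) (t+1) with h | h
    · rw [← mul_assoc, ih i (by omega) hi (by omega), mul_assoc,
        comm' (i := i) (j := t+1) (by omega), ← mul_assoc]
    · -- i = t
      have hit' : i = t := by omega
      subst hit'
      obtain ⟨s, rfl⟩ : ∃ s, i = s + 1 := ⟨i - 1, by omega⟩
      have hc : σb m (s+1+1) * Ael m s = Ael m s * σb m (s+1+1) :=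
        word_comm (m := m) (j := s+1+1) (l := Alist s)
          (fun x hx => by have := mem_Alist hx; omega)
      have hb := braid_rel (m := m) (i := s+1) (by omega) (by omega)
      calc σb m (s+1+1) * (Ael m (s+1) * σb m (s+1+1))
          = Ael m s * (σb m (s+1+1) * σb m (s+1) * σb m (s+1+1)) := by
            rw [Ael_succ, ← mul_assoc, ← mul_assoc, hc]
            simp [mul_assoc]
        _ = Ael m s * (σb m (s+1) * σb m (s+1+1) * σb m (s+1)) := by rw [← hb]
        _ = Ael m (s+1) * σb m (s+1+1) * σb m (s+1) := by
            rw [Ael_succ]; simp [mul_assoc]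

/-- conjugation by A_t shifts letters up -/
theorem A_conj_up (t : ℕ) (hm : t + 1 ≤ m) (l : List ℕ)
    (hl : ∀ x ∈ l, 1 ≤ x ∧ x + 1 ≤ t) :
    Ael m t * word m l = word m (l.map (· + 1)) * Ael m t := by
  induction l with
  | nil => simp [word]
  | cons a l ih =>
    rw [word_cons, List.map_cons, word_cons, ← mul_assoc,
      ← A_lem t a hm (hl a (by simp)).1 (hl a (by simp)).2, mul_assoc,
      ih (fun x hx => hl x (by simp [hx])), ← mul_assoc]

/-- conjugation by A_t shifts letters down -/
theorem A_conj_down (t : ℕ) (hm : t + 1 ≤ m) (l : List ℕ)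
    (hl : ∀ x ∈ l, 2 ≤ x ∧ x ≤ t) :
    word m l * Ael m t = Ael m t * word m (l.map (· - 1)) := by
  induction l with
  | nil => simp [word]
  | cons a l ih =>
    have ha := hl a (by simp)
    obtain ⟨b, rfl⟩ : ∃ b, a = b + 1 := ⟨a - 1, by omega⟩
    rw [word_cons, List.map_cons, word_cons, mul_assoc,
      ih (fun x hx => hl x (by simp [hx])), ← mul_assoc,
      A_lem t b hm (by omega) (by omega), mul_assoc]
    simp

/-- L-lemma : A_t C_{t+1} = sh(C_t) A_{t+1} -/
theorem L_lem (t : ℕ) : t + 2 ≤ m →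
    Ael m t * Cel m (t+1) = word m ((Clist t).map (· + 1)) * Ael m (t+1) := by
  induction t with
  | zero =>
    intro hm
    simp [Ael, Cel, Alist, Clist, word]
  | succ t ih =>
    intro hm
    have hc : σb m (t+1+1) * Ael m t = Ael m t * σb m (t+1+1) :=
      word_comm (m := m) (j := t+1+1) (l := Alist t)
        (fun x hx => by have := mem_Alist hx; omega)
    calc Ael m (t+1) * Cel m (t+1+1)
        = Ael m t * (σb m (t+1) * Cel m (t+1+1)) := by rw [Ael_succ]; simp [mul_assoc]
      _ = Ael m t * (Cel m (t+1+1) * σb m (t+1+1)) := by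
          rw [C_lem (t+1+1) (t+1) (by omega) (by omega) (by omega)]
      _ = Ael m t * σb m (t+1+1) * (Cel m (t+1) * σb m (t+1+1)) := by
          rw [Cel_succ (t+1)]; simp [mul_assoc]
      _ = σb m (t+1+1) * (Ael m t * Cel m (t+1)) * σb m (t+1+1) := by
          rw [← hc]; simp [mul_assoc]
      _ = σb m (t+1+1) * (word m ((Clist t).map (· + 1)) * Ael m (t+1)) * σb m (t+1+1) := by
          rw [ih (by omega)]
      _ = (σb m (t+1+1) * word m ((Clist t).map (· + 1))) * (Ael m (t+1) * σb m (t+1+1)) := by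
          simp [mul_assoc]
      _ = word m ((Clist (t+1)).map (· + 1)) * Ael m (t+1+1) := by
          rw [← word_cons, ← Ael_succ, Clist_succ]
          rfl

/-- P1 : W_{t+1} = sh(W_t) A_{t+1} -/
theorem P1 (t : ℕ) : t + 2 ≤ m →
    Wel m (t+1) = word m ((Wlist t).map (· + 1)) * Ael m (t+1) := by
  induction t with
  | zero =>
    intro hm
    simp [Wel, Wlist, Clist, Ael, Alist, word]
  | succ t ih =>
    intro hm
    rw [Wel_succ, ih (by omega), mul_assoc, L_lem (t+1) (by omega)]
    rw [← mul_assoc, ← word_append, ← List.map_append, ← Wlist_succ]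

/-- P2 : W_{t+1} = A_{t+1} W_t -/
theorem P2 (t : ℕ) : t + 2 ≤ m → Wel m (t+1) = Ael m (t+1) * Wel m t := by
  intro hm
  rw [P1 t hm]
  exact (A_conj_up (t+1) (by omega) (Wlist t)
    (fun x hx => by have := mem_Wlist hx; omega)).symm

/-- τ-lemma : σ_i W_t = W_t σ_{t+1-i}, stated additively as i + j = t + 1 -/
theorem tau_lem (t : ℕ) : ∀ i j, t + 1 ≤ m → 1 ≤ i → 1 ≤ j → i + j = t + 1 →
    σb m i * Wel m t = Wel m t * σb m j := by
  induction t with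
  | zero => intro i j _ _ _ h; omega
  | succ t ih =>
    intro i j hm hi hj hij
    rcases Nat.lt_or_ge i (t+1) with h | h
    · -- i ≤ t : use W_{t+1} = W_t C_{t+1}
      rw [Wel_succ, ← mul_assoc, ih i (j-1) (by omega) hi (by omega) (by omega),
        mul_assoc, C_lem (t+1) (j-1) (by omega) (by omega) (by omega), ← mul_assoc]
      congr 2
      omega
    · -- i = t+1, j = 1
      have : i = t + 1 := by omega
      subst this
      have hj1 : j = 1 := by omega
      subst hj1
      rcases Nat.eq_zero_or_pos t with rfl | ht
      · -- t = 0 : W_1 = σ_1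
        have : Wel m 1 = σb m 1 := by simp [Wel, Wlist, Clist, word]
        rw [this]
      · rw [P2 t hm, ← mul_assoc]
        obtain ⟨s, rfl⟩ : ∃ s, t = s + 1 := ⟨t - 1, by omega⟩
        rw [A_lem (s+2) (s+1) (by omega) (by omega) (by omega), mul_assoc,
          ih (s+1) 1 (by omega) (by omega) (by omega) (by omega), ← mul_assoc]

end Braid

namespace Braid

variable {m : ℕ}

theorem range'_map_sub (a len : ℕ) :
    (List.range' (a+1) len).map (· - 1) = List.range' a len := by
  induction len generalizing a with
  | zero => simp
  | succ len ih =>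
    rw [List.range'_succ, List.range'_succ, List.map_cons, ih (a+1)]
    simp

theorem range'_map_rev (t c : ℕ) (h : t ≤ c) :
    (List.range' 1 t).map (fun x => c + 1 - x) = (List.range' (c + 1 - t) t).reverse := by
  induction t with
  | zero => simp
  | succ t ih =>
    rw [List.range'_concat, List.map_append, ih (by omega),
      show c + 1 - (t+1) = c - t by omega, List.range'_succ,
      show (c - t) + 1 = c + 1 - t by omega, List.reverse_cons]
    congr 1
    simp
    omega

/-- helper : σ_{t+1} A_t σ_{t+1} = A_t σ_{t+1} σ_t  (t ≥ 1) -/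
theorem sAs (t : ℕ) (ht : 1 ≤ t) (hm : t + 2 ≤ m) :
    σb m (t+1) * Ael m t * σb m (t+1) = Ael m t * σb m (t+1) * σb m t := by
  obtain ⟨s, rfl⟩ : ∃ s, t = s + 1 := ⟨t - 1, by omega⟩
  have hc : σb m (s+1+1) * Ael m s = Ael m s * σb m (s+1+1) :=
    word_comm (m := m) (j := s+1+1) (l := Alist s)
      (fun x hx => by have := mem_Alist hx; omega)
  have hb := braid_rel (m := m) (i := s+1) (by omega) (by omega)
  calc σb m (s+1+1) * Ael m (s+1) * σb m (s+1+1)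
      = Ael m s * (σb m (s+1+1) * σb m (s+1) * σb m (s+1+1)) := by
        rw [Ael_succ, ← mul_assoc, ← mul_assoc, hc]; simp [mul_assoc]
    _ = Ael m s * (σb m (s+1) * σb m (s+1+1) * σb m (s+1)) := by rw [← hb]
    _ = Ael m (s+1) * σb m (s+1+1) * σb m (s+1) := by rw [Ael_succ]; simp [mul_assoc]

/-- G-lemma : A_{t+1}^j = A_t^j ⬝ (σ_{t+1} σ_t ⋯ σ_{t+2-j}) -/
theorem G_lem (t : ℕ) : ∀ j, 1 ≤ j → j ≤ t + 1 → t + 2 ≤ m →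
    (Ael m (t+1))^j = (Ael m t)^j * word m ((List.range' (t+2-j) j).reverse) := by
  intro j
  induction j with
  | zero => omega
  | succ j ih =>
    intro _ hj hm
    rcases Nat.eq_zero_or_pos j with rfl | hj1
    · show (Ael m (t+1))^1 = (Ael m t)^1 * word m ((List.range' (t+2-1) 1).reverse)
      have h1 : (List.range' (t+2-1) 1).reverse = [t+1] := by
        rw [List.range'_one, show t+2-1 = t+1 by omega]
        rfl
      rw [pow_one, pow_one, h1, Ael_succ, word_singleton]
    · -- j ≥ 1, j + 1 ≤ t+1 so j ≤ t, t ≥ 1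
      have hjt : j ≤ t := by omega
      have ht1 : 1 ≤ t := by omega
      -- DC_j list decomposition
      have hDCj : (List.range' (t+2-j) j).reverse
          = (t+1) :: (List.range' (t+2-j) (j-1)).reverse := by
        have : List.range' (t+2-j) j = List.range' (t+2-j) (j-1) ++ [t+1] := by
          have h2 : j = (j - 1) + 1 := by omega
          rw [h2, List.range'_concat]
          congr 2
          omega
        simp [this]
      have hDCj1 : (List.range' (t+1-j) (j+1)).reverse
          = (t+1) :: (t) :: (List.range' (t+1-j) (j-1)).reverse := by
        have e1 : List.range' (t+1-j) (j+1) = List.range' (t+1-j) j ++ [t+1] := by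
          rw [List.range'_concat]; congr 2; omega
        have e2 : List.range' (t+1-j) j = List.range' (t+1-j) (j-1) ++ [t] := by
          have h2 : j = (j - 1) + 1 := by omega
          rw [h2, List.range'_concat]
          congr 2
          omega
        simp [e1, e2]
      have hmap : ((List.range' (t+2-j) (j-1)).reverse).map (· - 1)
          = (List.range' (t+1-j) (j-1)).reverse := by
        have : t+2-j = (t+1-j)+1 := by omega
        rw [this, List.map_reverse, range'_map_sub]
      -- key step
      have key : word m ((List.range' (t+2-j) j).reverse) * Ael m t * σb m (t+1)
          = Ael m t * word m ((List.range' (t+1-j) (j+1)).reverse) := by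
        have hAconj : word m ((List.range' (t+2-j) (j-1)).reverse) * Ael m t
            = Ael m t * word m ((List.range' (t+1-j) (j-1)).reverse) := by
          rw [← hmap]
          exact A_conj_down t (by omega) _
            (fun x hx => by simp at hx; omega)
        have hcomm : σb m (t+1) * word m ((List.range' (t+1-j) (j-1)).reverse)
            = word m ((List.range' (t+1-j) (j-1)).reverse) * σb m (t+1) :=
          word_comm (fun x hx => by simp at hx; omega)
        calc word m ((List.range' (t+2-j) j).reverse) * Ael m t * σb m (t+1)
            = σb m (t+1) * (word m ((List.range' (t+2-j) (j-1)).reverse) * Ael m t)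
              * σb m (t+1) := by rw [hDCj, word_cons]; simp [mul_assoc]
          _ = σb m (t+1) * (Ael m t * word m ((List.range' (t+1-j) (j-1)).reverse))
              * σb m (t+1) := by rw [hAconj]
          _ = (σb m (t+1) * Ael m t * σb m (t+1))
              * word m ((List.range' (t+1-j) (j-1)).reverse) := by
              rw [mul_assoc, mul_assoc, ← hcomm]; simp [mul_assoc]
          _ = Ael m t * σb m (t+1) * σb m t
              * word m ((List.range' (t+1-j) (j-1)).reverse) := by
              rw [sAs t ht1 hm]
          _ = Ael m t * word m ((List.range' (t+1-j) (j+1)).reverse) := by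
              rw [hDCj1, word_cons, word_cons]; simp [mul_assoc]
      calc (Ael m (t+1))^(j+1)
          = (Ael m (t+1))^j * Ael m (t+1) := pow_succ _ _
        _ = (Ael m t)^j * word m ((List.range' (t+2-j) j).reverse)
            * (Ael m t * σb m (t+1)) := by rw [ih hj1 (by omega) hm, Ael_succ]
        _ = (Ael m t)^j * (word m ((List.range' (t+2-j) j).reverse) * Ael m t * σb m (t+1)) := by
            simp [mul_assoc]
        _ = (Ael m t)^j * (Ael m t * word m ((List.range' (t+1-j) (j+1)).reverse)) := by rw [key]
        _ = (Ael m t)^(j+1) * word m ((List.range' (t+1-j) (j+1)).reverse) := by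
            rw [pow_succ]; simp [mul_assoc]
        _ = (Ael m t)^(j+1) * word m ((List.range' (t+2-(j+1)) (j+1)).reverse) := by
            rw [show t+2-(j+1) = t+1-j from by omega]

/-- mover : W_t ⬝ w(l) = w(map (t+1-·) l) ⬝ W_t -/
theorem W_mover (t : ℕ) (hm : t + 1 ≤ m) (l : List ℕ) (hl : ∀ x ∈ l, 1 ≤ x ∧ x ≤ t) :
    Wel m t * word m l = word m (l.map (fun x => t + 1 - x)) * Wel m t := by
  induction l with
  | nil => simp [word]
  | cons a l ih =>
    have ha := hl a (by simp)
    have htau : σb m (t+1-a) * Wel m t = Wel m t * σb m a :=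
      tau_lem t (t+1-a) a hm (by omega) (by omega) (by omega)
    rw [word_cons, List.map_cons, word_cons, ← mul_assoc, ← htau, mul_assoc,
      ih (fun x hx => hl x (by simp [hx])), ← mul_assoc]

theorem WA_lem (t : ℕ) (hm : t + 1 ≤ m) :
    Wel m t * Ael m t = Cel m t * Wel m t := by
  have h := W_mover t hm (Alist t) (fun x hx => mem_Alist hx)
  have hmap : (Alist t).map (fun x => t + 1 - x) = Clist t := by
    have := range'_map_rev t t le_rfl
    simpa [Alist, Clist] using this
  rw [hmap] at h
  exact h

theorem Wsq_comm (t : ℕ) (hm : t + 1 ≤ m) (l : List ℕ) (hl : ∀ x ∈ l, 1 ≤ x ∧ x ≤ t) :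
    Wel m t * Wel m t * word m l = word m l * (Wel m t * Wel m t) := by
  have h1 := W_mover t hm l hl
  have h2 := W_mover t hm (l.map (fun x => t + 1 - x))
    (fun x hx => by
      simp only [List.mem_map] at hx
      obtain ⟨y, hy, rfl⟩ := hx
      have := hl y hy
      omega)
  have hmap : (l.map (fun x => t + 1 - x)).map (fun x => t + 1 - x) = l := by
    rw [List.map_map]
    conv_rhs => rw [← List.map_id l]
    apply List.map_congr_left
    intro x hx
    have := hl x hx
    simp
    omega
  rw [hmap] at h2
  rw [mul_assoc, h1, ← mul_assoc, h2, mul_assoc]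

theorem conj_sig (t : ℕ) (ht : 1 ≤ t) (hm : t + 2 ≤ m) :
    (Wel m t)⁻¹ * σb m (t+1) * Wel m t = (Cel m t)⁻¹ * (σb m (t+1) * Cel m t) := by
  obtain ⟨s, rfl⟩ : ∃ s, t = s + 1 := ⟨t - 1, by omega⟩
  have hcom : σb m (s+1+1) * Wel m s = Wel m s * σb m (s+1+1) :=
    word_comm (m := m) (j := s+1+1) (l := Wlist s)
      (fun x hx => by have := mem_Wlist hx; omega)
  rw [Wel_succ]
  rw [mul_inv_rev]
  calc (Cel m (s+1))⁻¹ * (Wel m s)⁻¹ * σb m (s+1+1) * (Wel m s * Cel m (s+1))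
      = (Cel m (s+1))⁻¹ * ((Wel m s)⁻¹ * (σb m (s+1+1) * Wel m s)) * Cel m (s+1) := by
        simp [mul_assoc]
    _ = (Cel m (s+1))⁻¹ * ((Wel m s)⁻¹ * (Wel m s * σb m (s+1+1))) * Cel m (s+1) := by
        rw [hcom]
    _ = (Cel m (s+1))⁻¹ * (σb m (s+1+1) * Cel m (s+1)) := by
        rw [← mul_assoc (Wel m s)⁻¹, inv_mul_cancel, one_mul]; simp [mul_assoc]

/-- The fundamental identity δ^{t+1} = Δ_t² -/
theorem delta_pow (t : ℕ) : 1 ≤ t → t + 1 ≤ m →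
    (Ael m t)^(t+1) = Wel m t * Wel m t := by
  induction t with
  | zero => omega
  | succ t ih =>
    intro _ hm
    rcases Nat.eq_zero_or_pos t with rfl | ht
    · -- t+1 = 1
      have hA : Ael m 1 = σb m 1 := by simp [Ael, Alist, word]
      have hW : Wel m 1 = σb m 1 := by simp [Wel, Wlist, Clist, word]
      rw [hA, hW, pow_two]
    · -- main case, t ≥ 1
      have ihX : (Ael m t)^(t+1) = Wel m t * Wel m t := ih ht (by omega)
      set X := (Ael m t)^(t+1) with hX
      have hCX : Cel m t * X = X * Cel m t := by
        rw [ihX]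
        exact (Wsq_comm (m := m) t (by omega) (Clist t) (fun x hx => mem_Clist hx)).symm
      have hG : (Ael m (t+1))^(t+1) = X * (σb m (t+1) * Cel m t) := by
        have := G_lem (m := m) t (t+1) (by omega) le_rfl (by omega)
        have hr : (List.range' (t+2-(t+1)) (t+1)).reverse = Clist (t+1) := by
          have : t+2-(t+1) = 1 := by omega
          rw [this]; rfl
        rw [hr] at this
        rw [this, ← hX]
        have : word m (Clist (t+1)) = Cel m (t+1) := rfl
        rw [this, Cel_succ]
      have hconj := conj_sig (m := m) t ht (by omega)
      have hWA := WA_lem (m := m) t (by omega)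
      -- H : (A_{t+1})^{t+1} = W_t A_{t+1} W_t
      have H : (Ael m (t+1))^(t+1) = Wel m t * Ael m (t+1) * Wel m t := by
        calc (Ael m (t+1))^(t+1) = X * (σb m (t+1) * Cel m t) := hG
          _ = (Cel m t * X * (Cel m t)⁻¹) * (σb m (t+1) * Cel m t) := by
              rw [hCX]; simp [mul_assoc]
          _ = Cel m t * X * ((Cel m t)⁻¹ * (σb m (t+1) * Cel m t)) := by simp [mul_assoc]
          _ = Cel m t * X * ((Wel m t)⁻¹ * σb m (t+1) * Wel m t) := by rw [hconj]
          _ = Cel m t * (Wel m t * Wel m t) * ((Wel m t)⁻¹ * σb m (t+1) * Wel m t) := by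
              rw [← ihX]
          _ = Cel m t * Wel m t * (σb m (t+1) * Wel m t) := by simp [mul_assoc]
          _ = Wel m t * Ael m t * (σb m (t+1) * Wel m t) := by rw [hWA]
          _ = Wel m t * Ael m (t+1) * Wel m t := by rw [Ael_succ]; simp [mul_assoc]
      calc (Ael m (t+1))^(t+1+1) = Ael m (t+1) * (Ael m (t+1))^(t+1) := pow_succ' _ _
        _ = Ael m (t+1) * (Wel m t * Ael m (t+1) * Wel m t) := by rw [H]
        _ = (Ael m (t+1) * Wel m t) * (Ael m (t+1) * Wel m t) := by simp [mul_assoc]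
        _ = Wel m (t+1) * Wel m (t+1) := by rw [← P2 t hm]

end Braid

namespace Braid

variable {m : ℕ}

theorem sig_mem {i : ℕ} (h1 : 1 ≤ i) (h2 : i + 1 ≤ m) : σb m i ∈ Bpos m :=
  Submonoid.subset_closure ⟨i, h1, by omega, rfl⟩

theorem word_mem_Bpos {l : List ℕ} (h : ∀ x ∈ l, 1 ≤ x ∧ x + 1 ≤ m) :
    word m l ∈ Bpos m := by
  induction l with
  | nil => exact one_mem _
  | cons a l ih =>
    rw [word_cons]
    exact mul_mem (sig_mem (h a (by simp)).1 (h a (by simp)).2)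
      (ih (fun x hx => h x (by simp [hx])))

theorem Delta_eq : DeltaB m = Wel m (m-1) := rfl

theorem conj_pos {x : B m} (hx : x ∈ Bpos m) :
    (DeltaB m)⁻¹ * x * DeltaB m ∈ Bpos m := by
  rw [Delta_eq]
  induction hx using Submonoid.closure_induction with
  | mem y hy =>
    obtain ⟨i, hi1, hi2, rfl⟩ := hy
    have hm1 : 1 ≤ m - 1 := by omega
    have htau : σb m i * Wel m (m-1) = Wel m (m-1) * σb m (m - i) :=
      tau_lem (m-1) i (m-i) (by omega) hi1 (by omega) (by omega)
    have : (Wel m (m-1))⁻¹ * σb m i * Wel m (m-1) = σb m (m - i) := by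
      rw [mul_assoc, htau, ← mul_assoc, inv_mul_cancel, one_mul]
    rw [this]
    exact sig_mem (by omega) (by omega)
  | one => simpa using one_mem _
  | mul y z _ _ hy hz =>
    have : (Wel m (m-1))⁻¹ * (y * z) * Wel m (m-1)
        = ((Wel m (m-1))⁻¹ * y * Wel m (m-1)) * ((Wel m (m-1))⁻¹ * z * Wel m (m-1)) := by
      group
    rw [this]
    exact mul_mem hy hz

theorem conj_pow_pos {x : B m} (hx : x ∈ Bpos m) (q : ℕ) :
    ((DeltaB m) ^ q)⁻¹ * x * (DeltaB m) ^ q ∈ Bpos m := by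
  induction q with
  | zero => simpa using hx
  | succ q ih =>
    have : ((DeltaB m)^(q+1))⁻¹ * x * (DeltaB m)^(q+1)
        = (DeltaB m)⁻¹ * (((DeltaB m)^q)⁻¹ * x * (DeltaB m)^q) * DeltaB m := by
      rw [pow_succ]
      group
    rw [this]
    exact conj_pos ih

theorem div_mul {a b : B m} {p q : ℕ}
    (ha : a⁻¹ * (DeltaB m) ^ p ∈ Bpos m) (hb : b⁻¹ * (DeltaB m) ^ q ∈ Bpos m) :
    (a * b)⁻¹ * (DeltaB m) ^ (p + q) ∈ Bpos m := by
  have : (a * b)⁻¹ * (DeltaB m) ^ (p + q)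
      = (b⁻¹ * (DeltaB m) ^ q) * (((DeltaB m)^q)⁻¹ * (a⁻¹ * (DeltaB m)^p) * (DeltaB m)^q) := by
    rw [pow_add]
    group
  rw [this]
  exact mul_mem hb (conj_pow_pos ha q)

theorem div_pow {x : B m} {p : ℕ} (hx : x⁻¹ * (DeltaB m) ^ p ∈ Bpos m) (r : ℕ) :
    (x ^ r)⁻¹ * (DeltaB m) ^ (p * r) ∈ Bpos m := by
  induction r with
  | zero => simpa using one_mem _
  | succ r ih =>
    have h := div_mul ih hx
    have e : p * r + p = p * (r + 1) := by ring
    rw [e] at h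
    rw [pow_succ]
    exact h

/-- R-lemma : C_t C_{t+1} = σ_{t+1} ⬝ (positive) -/
theorem R_lem (t : ℕ) : t + 2 ≤ m →
    ∃ p ∈ Bpos m, Cel m t * Cel m (t+1) = σb m (t+1) * p := by
  induction t with
  | zero =>
    intro hm
    refine ⟨1, one_mem _, ?_⟩
    have h1 : Cel m 1 = σb m 1 := by simp [Cel, Clist, word]
    rw [Cel_zero, h1, one_mul, mul_one]
  | succ t ih =>
    intro hm
    obtain ⟨p, hp, hcc⟩ := ih (by omega)
    have hcomm : σb m (t+1+1) * Cel m t = Cel m t * σb m (t+1+1) :=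
      word_comm (m := m) (j := t+1+1) (l := Clist t)
        (fun x hx => by have := mem_Clist hx; omega)
    have hb := braid_rel (m := m) (i := t+1) (by omega) (by omega)
    refine ⟨σb m (t+1) * σb m (t+1+1) * p,
      mul_mem (mul_mem (sig_mem (by omega) (by omega)) (sig_mem (by omega) (by omega))) hp, ?_⟩
    calc Cel m (t+1) * Cel m (t+1+1)
        = σb m (t+1) * (Cel m t * σb m (t+1+1)) * (σb m (t+1) * Cel m t) := by
          rw [Cel_succ (t+1), Cel_succ t]; simp [mul_assoc]
      _ = σb m (t+1) * (σb m (t+1+1) * Cel m t) * (σb m (t+1) * Cel m t) := by rw [hcomm]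
      _ = σb m (t+1) * σb m (t+1+1) * (Cel m t * Cel m (t+1)) := by
          rw [Cel_succ t]; simp [mul_assoc]
      _ = σb m (t+1) * σb m (t+1+1) * (σb m (t+1) * p) := by rw [hcc]
      _ = σb m (t+1) * σb m (t+1+1) * σb m (t+1) * p := by simp [mul_assoc]
      _ = σb m (t+1+1) * σb m (t+1) * σb m (t+1+1) * p := by rw [hb]
      _ = σb m (t+1+1) * (σb m (t+1) * σb m (t+1+1) * p) := by simp [mul_assoc]

def ADlist (t : ℕ) : List ℕ := ((List.range' 1 t).reverse.map Alist).flatten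

def ADel (m t : ℕ) : B m := word m (ADlist t)

theorem ADlist_succ (t : ℕ) : ADlist (t+1) = Alist (t+1) ++ ADlist t := by
  simp [ADlist, List.range'_concat, Nat.add_comm]

theorem ADel_succ (t : ℕ) : ADel m (t+1) = Ael m (t+1) * ADel m t := by
  rw [ADel, ADlist_succ, word_append]; rfl

theorem W_eq_AD (t : ℕ) : t + 1 ≤ m → Wel m t = ADel m t := by
  induction t with
  | zero => intro _; rfl
  | succ t ih =>
    intro hm
    rw [P2 t hm, ih (by omega), ADel_succ]

/-- S-lemma : AD_{t+1} = σ_{t+1} ⬝ (positive) -/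
theorem S_lem (t : ℕ) : t + 2 ≤ m →
    ∃ p ∈ Bpos m, ADel m (t+1) = σb m (t+1) * p := by
  induction t with
  | zero =>
    intro hm
    refine ⟨1, one_mem _, ?_⟩
    have : ADel m 1 = σb m 1 := by
      rw [show (1:ℕ) = 0 + 1 from rfl, ADel_succ]
      have h1 : Ael m 1 = σb m 1 := by simp [Ael, Alist, word]
      rw [h1]
      simp [ADel, ADlist, word]
    rw [this, mul_one]
  | succ t ih =>
    intro hm
    obtain ⟨p, hp, hS⟩ := ih (by omega)
    have hcomm : σb m (t+1+1) * Ael m t = Ael m t * σb m (t+1+1) :=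
      word_comm (m := m) (j := t+1+1) (l := Alist t)
        (fun x hx => by have := mem_Alist hx; omega)
    have hb := braid_rel (m := m) (i := t+1) (by omega) (by omega)
    have hA : Ael m t ∈ Bpos m :=
      word_mem_Bpos (fun x hx => by have := mem_Alist hx; omega)
    refine ⟨Ael m t * σb m (t+1) * σb m (t+1+1) * p,
      mul_mem (mul_mem (mul_mem hA (sig_mem (by omega) (by omega)))
        (sig_mem (by omega) (by omega))) hp, ?_⟩
    calc ADel m (t+1+1)
        = Ael m t * σb m (t+1) * σb m (t+1+1) * ADel m (t+1) := by
          rw [ADel_succ, Ael_succ, Ael_succ]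
      _ = Ael m t * σb m (t+1) * σb m (t+1+1) * (σb m (t+1) * p) := by rw [hS]
      _ = Ael m t * (σb m (t+1) * σb m (t+1+1) * σb m (t+1)) * p := by simp [mul_assoc]
      _ = Ael m t * (σb m (t+1+1) * σb m (t+1) * σb m (t+1+1)) * p := by rw [hb]
      _ = (Ael m t * σb m (t+1+1)) * (σb m (t+1) * σb m (t+1+1) * p) := by simp [mul_assoc]
      _ = (σb m (t+1+1) * Ael m t) * (σb m (t+1) * σb m (t+1+1) * p) := by rw [hcomm]
      _ = σb m (t+1+1) * (Ael m t * σb m (t+1) * σb m (t+1+1) * p) := by simp [mul_assoc]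

end Braid

namespace Braid

abbrev LkV := Multiplicative (ℕ × ℕ → ℤ)

def permAut (π : Equiv.Perm ℕ) : MulAut LkV where
  toFun f := Multiplicative.ofAdd fun p => (Multiplicative.toAdd f) (π⁻¹ p.1, π⁻¹ p.2)
  invFun f := Multiplicative.ofAdd fun p => (Multiplicative.toAdd f) (π p.1, π p.2)
  left_inv f := by
    apply Multiplicative.toAdd.injective
    funext p
    simp
  right_inv f := by
    apply Multiplicative.toAdd.injective
    funext p
    simp
  map_mul' f g := by
    apply Multiplicative.toAdd.injective
    funext p
    rfl

def permHom : Equiv.Perm ℕ →* MulAut LkV where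
  toFun := permAut
  map_one' := by
    apply MulEquiv.ext
    intro f
    apply Multiplicative.toAdd.injective
    funext p
    simp [permAut]
  map_mul' π ρ := by
    apply MulEquiv.ext
    intro f
    apply Multiplicative.toAdd.injective
    funext p
    simp [permAut, MulAut.mul_apply]

abbrev LkG := SemidirectProduct LkV (Equiv.Perm ℕ) permHom

def eeP (a b : ℕ) : ℕ × ℕ → ℤ := fun p =>
  if (p.1 = a ∧ p.2 = b) ∨ (p.1 = b ∧ p.2 = a) then 1 else 0

def lgen (m i : ℕ) : LkG :=
  if 1 ≤ i ∧ i + 1 ≤ m then ⟨Multiplicative.ofAdd (eeP i (i+1)), Equiv.swap i (i+1)⟩ else 1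

theorem permAut_eval (π : Equiv.Perm ℕ) (f : ℕ × ℕ → ℤ) (p : ℕ × ℕ) :
    Multiplicative.toAdd (permAut π (Multiplicative.ofAdd f)) p = f (π⁻¹ p.1, π⁻¹ p.2) := rfl

theorem eeP_swap_eval (a b j : ℕ) (p : ℕ × ℕ) :
    eeP a b (Equiv.swap j (j+1) p.1, Equiv.swap j (j+1) p.2)
      = eeP (Equiv.swap j (j+1) a) (Equiv.swap j (j+1) b) p := by
  simp only [eeP]
  congr 1
  rw [eq_iff_iff]
  constructor
  · rintro (⟨h1, h2⟩ | ⟨h1, h2⟩)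
    · exact Or.inl ⟨by rw [← h1, Equiv.swap_apply_self], by rw [← h2, Equiv.swap_apply_self]⟩
    · exact Or.inr ⟨by rw [← h1, Equiv.swap_apply_self], by rw [← h2, Equiv.swap_apply_self]⟩
  · rintro (⟨h1, h2⟩ | ⟨h1, h2⟩)
    · exact Or.inl ⟨by rw [h1, Equiv.swap_apply_self], by rw [h2, Equiv.swap_apply_self]⟩
    · exact Or.inr ⟨by rw [h1, Equiv.swap_apply_self], by rw [h2, Equiv.swap_apply_self]⟩

end Braid

namespace Braid

theorem eeP_comm (a b : ℕ) (p : ℕ × ℕ) : eeP a b p = eeP b a p := by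
  simp only [eeP]
  congr 1
  rw [eq_iff_iff]
  exact or_comm

theorem toAdd_mul (x y : LkV) (p : ℕ × ℕ) :
    Multiplicative.toAdd (x * y) p
      = Multiplicative.toAdd x p + Multiplicative.toAdd y p := rfl

theorem permHom_eval (π : Equiv.Perm ℕ) (f : LkV) (p : ℕ × ℕ) :
    Multiplicative.toAdd (permHom π f) p
      = Multiplicative.toAdd f (π⁻¹ p.1, π⁻¹ p.2) := rfl

theorem eeP_perm (a b : ℕ) (π : Equiv.Perm ℕ) (x y : ℕ) :
    eeP a b (π x, π y) = eeP (π⁻¹ a) (π⁻¹ b) (x, y) := by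
  simp only [eeP]
  congr 1
  rw [eq_iff_iff]
  constructor
  · rintro (⟨h1, h2⟩ | ⟨h1, h2⟩)
    · exact Or.inl ⟨by rw [← h1]; simp, by rw [← h2]; simp⟩
    · exact Or.inr ⟨by rw [← h1]; simp, by rw [← h2]; simp⟩
  · rintro (⟨h1, h2⟩ | ⟨h1, h2⟩)
    · exact Or.inl ⟨by rw [h1]; simp, by rw [h2]; simp⟩
    · exact Or.inr ⟨by rw [h1]; simp, by rw [h2]; simp⟩

theorem swap_pair_eval (j : ℕ) (p : ℕ × ℕ) :
    ((Equiv.swap j (j+1))⁻¹ p.1, (Equiv.swap j (j+1))⁻¹ p.2)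
      = (Equiv.swap j (j+1) p.1, Equiv.swap j (j+1) p.2) := by simp

theorem lgen_rels (m : ℕ) : ∀ r ∈ braidRels m, FreeGroup.lift (lgen m) r = 1 := by
  intro r hr
  rcases hr with ⟨i, hi1, hi2, rfl⟩ | ⟨i, j, hi1, hij, hjm, rfl⟩ | ⟨i, hi, rfl⟩
  · -- braid relation
    simp only [map_mul, map_inv, FreeGroup.lift_apply_of]
    rw [mul_inv_eq_one]
    have e1 : lgen m i = (⟨Multiplicative.ofAdd (eeP i (i+1)), Equiv.swap i (i+1)⟩ : LkG) :=
      if_pos ⟨hi1, by omega⟩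
    have e2 : lgen m (i+1)
        = (⟨Multiplicative.ofAdd (eeP (i+1) (i+2)), Equiv.swap (i+1) (i+2)⟩ : LkG) :=
      if_pos ⟨by omega, by omega⟩
    rw [e1, e2]
    have hswap : Equiv.swap i (i+1) * Equiv.swap (i+1) (i+2) * Equiv.swap i (i+1)
        = Equiv.swap (i+1) (i+2) * Equiv.swap i (i+1) * Equiv.swap (i+1) (i+2) := by
      have h1 : Equiv.swap (i+1) i * Equiv.swap (i+2) (i+1) * Equiv.swap (i+1) i
          = Equiv.swap i (i+2) := Equiv.swap_mul_swap_mul_swap (by omega) (by omega)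
      have h2 : Equiv.swap (i+1) (i+2) * Equiv.swap i (i+1) * Equiv.swap (i+1) (i+2)
          = Equiv.swap (i+2) i := Equiv.swap_mul_swap_mul_swap (by omega) (by omega)
      rw [Equiv.swap_comm (i+1) i, Equiv.swap_comm (i+2) (i+1)] at h1
      rw [h1, h2, Equiv.swap_comm]
    apply SemidirectProduct.ext
    swap
    · exact hswap
    · apply Multiplicative.toAdd.injective
      funext p
      rw [SemidirectProduct.mul_left, SemidirectProduct.mul_left,
          SemidirectProduct.mul_left, SemidirectProduct.mul_left]
      simp only [SemidirectProduct.mul_right]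
      rw [toAdd_mul, toAdd_mul, toAdd_mul, toAdd_mul, permHom_eval, permHom_eval,
        permHom_eval, permHom_eval]
      simp only [toAdd_ofAdd, mul_inv_rev, Equiv.swap_inv, Equiv.Perm.mul_apply]
      -- now pure eeP arithmetic
      have s1i1 : Equiv.swap i (i+1) (i+1) = i := Equiv.swap_apply_right _ _
      have s1i : Equiv.swap i (i+1) i = i+1 := Equiv.swap_apply_left _ _
      have s1i2 : Equiv.swap i (i+1) (i+2) = i+2 :=
        Equiv.swap_apply_of_ne_of_ne (by omega) (by omega)
      have s2i : Equiv.swap (i+1) (i+2) i = i :=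
        Equiv.swap_apply_of_ne_of_ne (by omega) (by omega)
      have s2i1 : Equiv.swap (i+1) (i+2) (i+1) = i+2 := Equiv.swap_apply_left _ _
      have s2i2 : Equiv.swap (i+1) (i+2) (i+2) = i+1 := Equiv.swap_apply_right _ _
      have T2 : eeP (i+1) (i+2) (Equiv.swap i (i+1) p.1, Equiv.swap i (i+1) p.2)
          = eeP i (i+2) (p.1, p.2) := by
        rw [eeP_perm]
        simp only [Equiv.swap_inv]
        rw [s1i1, s1i2]
      have T3 : eeP i (i+1)
            (Equiv.swap (i+1) (i+2) (Equiv.swap i (i+1) p.1),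
             Equiv.swap (i+1) (i+2) (Equiv.swap i (i+1) p.2))
          = eeP (i+1) (i+2) (p.1, p.2) := by
        rw [eeP_perm]
        simp only [Equiv.swap_inv]
        rw [s2i, s2i1, eeP_perm]
        simp only [Equiv.swap_inv]
        rw [s1i, s1i2]
      have T2' : eeP i (i+1) (Equiv.swap (i+1) (i+2) p.1, Equiv.swap (i+1) (i+2) p.2)
          = eeP i (i+2) (p.1, p.2) := by
        rw [eeP_perm]
        simp only [Equiv.swap_inv]
        rw [s2i, s2i1]
      have T3' : eeP (i+1) (i+2)
            (Equiv.swap i (i+1) (Equiv.swap (i+1) (i+2) p.1),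
             Equiv.swap i (i+1) (Equiv.swap (i+1) (i+2) p.2))
          = eeP i (i+1) (p.1, p.2) := by
        rw [eeP_perm]
        simp only [Equiv.swap_inv]
        rw [s1i1, s1i2, eeP_perm]
        simp only [Equiv.swap_inv]
        rw [s2i, s2i2]
      rw [T2, T3, T2', T3']
      simp only [Prod.mk.eta]
      ring
  · -- commuting relation
    simp only [map_mul, map_inv, FreeGroup.lift_apply_of]
    rw [mul_inv_eq_one]
    have e1 : lgen m i = (⟨Multiplicative.ofAdd (eeP i (i+1)), Equiv.swap i (i+1)⟩ : LkG) :=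
      if_pos ⟨hi1, by omega⟩
    have e2 : lgen m j = (⟨Multiplicative.ofAdd (eeP j (j+1)), Equiv.swap j (j+1)⟩ : LkG) :=
      if_pos ⟨by omega, by omega⟩
    rw [e1, e2]
    have s1j : Equiv.swap i (i+1) j = j :=
      Equiv.swap_apply_of_ne_of_ne (by omega) (by omega)
    have s1j1 : Equiv.swap i (i+1) (j+1) = j+1 :=
      Equiv.swap_apply_of_ne_of_ne (by omega) (by omega)
    have s2i : Equiv.swap j (j+1) i = i :=
      Equiv.swap_apply_of_ne_of_ne (by omega) (by omega)
    have s2i1 : Equiv.swap j (j+1) (i+1) = i+1 :=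
      Equiv.swap_apply_of_ne_of_ne (by omega) (by omega)
    have hswap : Equiv.swap i (i+1) * Equiv.swap j (j+1)
        = Equiv.swap j (j+1) * Equiv.swap i (i+1) := by
      have hs := Equiv.swap_apply_apply (Equiv.swap i (i+1)) j (j+1)
      rw [s1j, s1j1] at hs
      conv_rhs => rw [hs]
      group
    apply SemidirectProduct.ext
    swap
    · exact hswap
    · apply Multiplicative.toAdd.injective
      funext p
      rw [SemidirectProduct.mul_left, SemidirectProduct.mul_left]
      rw [toAdd_mul, toAdd_mul, permHom_eval, permHom_eval]
      simp only [toAdd_ofAdd, Equiv.swap_inv]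
      have U1 : eeP j (j+1) (Equiv.swap i (i+1) p.1, Equiv.swap i (i+1) p.2)
          = eeP j (j+1) (p.1, p.2) := by
        rw [eeP_perm]
        simp only [Equiv.swap_inv]
        rw [s1j, s1j1]
      have U2 : eeP i (i+1) (Equiv.swap j (j+1) p.1, Equiv.swap j (j+1) p.2)
          = eeP i (i+1) (p.1, p.2) := by
        rw [eeP_perm]
        simp only [Equiv.swap_inv]
        rw [s2i, s2i1]
      rw [U1, U2]
      simp only [Prod.mk.eta]
      ring
  · -- killed generators
    simp only [FreeGroup.lift_apply_of]
    exact if_neg (by omega)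

end Braid

namespace Braid

variable {m : ℕ}

def lkhom (m : ℕ) : B m →* LkG := PresentedGroup.toGroup (lgen_rels m)

def lk (m : ℕ) (x : B m) (p : ℕ × ℕ) : ℤ := Multiplicative.toAdd ((lkhom m x).left) p

def lkp (m : ℕ) (x : B m) : Equiv.Perm ℕ := (lkhom m x).right

theorem lk_mul (x y : B m) (p : ℕ × ℕ) :
    lk m (x * y) p = lk m x p + lk m y ((lkp m x)⁻¹ p.1, (lkp m x)⁻¹ p.2) := by
  unfold lk lkp
  rw [map_mul, SemidirectProduct.mul_left, toAdd_mul, permHom_eval]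

theorem lk_mul' (x y : B m) (u v : ℕ) :
    lk m (x * y) (u, v) = lk m x (u, v) + lk m y ((lkp m x)⁻¹ u, (lkp m x)⁻¹ v) :=
  lk_mul x y (u, v)

theorem lkp_mul (x y : B m) : lkp m (x * y) = lkp m x * lkp m y := by
  unfold lkp
  rw [map_mul]
  rfl

theorem lk_one (p : ℕ × ℕ) : lk m 1 p = 0 := by
  unfold lk
  rw [map_one]
  rfl

theorem lkp_one : lkp m 1 = 1 := by
  unfold lkp
  rw [map_one]
  rfl

theorem lk_sigma {i : ℕ} (h1 : 1 ≤ i) (h2 : i + 1 ≤ m) (p : ℕ × ℕ) :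
    lk m (σb m i) p = eeP i (i+1) p := by
  unfold lk
  have : lkhom m (σb m i) = lgen m i := PresentedGroup.toGroup.of (lgen_rels m)
  rw [this, lgen, if_pos ⟨h1, h2⟩]
  rfl

theorem lkp_sigma {i : ℕ} (h1 : 1 ≤ i) (h2 : i + 1 ≤ m) :
    lkp m (σb m i) = Equiv.swap i (i+1) := by
  unfold lkp
  have : lkhom m (σb m i) = lgen m i := PresentedGroup.toGroup.of (lgen_rels m)
  rw [this, lgen, if_pos ⟨h1, h2⟩]

theorem eeP_nonneg (a b : ℕ) (p : ℕ × ℕ) : 0 ≤ eeP a b p := by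
  unfold eeP
  split <;> norm_num

theorem lk_nonneg {x : B m} (hx : x ∈ Bpos m) : ∀ p, 0 ≤ lk m x p := by
  induction hx using Submonoid.closure_induction with
  | mem y hy =>
    obtain ⟨i, hi1, hi2, rfl⟩ := hy
    intro p
    rw [lk_sigma hi1 (by omega)]
    exact eeP_nonneg _ _ _
  | one => intro p; rw [lk_one]
  | mul y z _ _ hy hz =>
    intro p
    rw [lk_mul]
    exact add_nonneg (hy p) (hz _)

/-- cons step for lk over words -/
theorem lk_cons {a : ℕ} (h1 : 1 ≤ a) (h2 : a + 1 ≤ m) (l : List ℕ) (p : ℕ × ℕ) :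
    lk m (word m (a :: l)) p
      = eeP a (a+1) p
        + lk m (word m l) (Equiv.swap a (a+1) p.1, Equiv.swap a (a+1) p.2) := by
  rw [word_cons, lk_mul, lk_sigma h1 h2, lkp_sigma h1 h2, Equiv.swap_inv]

theorem lk_append (l1 l2 : List ℕ) (p : ℕ × ℕ) :
    lk m (word m (l1 ++ l2)) p
      = lk m (word m l1) p
        + lk m (word m l2)
            ((lkp m (word m l1))⁻¹ p.1, (lkp m (word m l1))⁻¹ p.2) := by
  rw [word_append, lk_mul]

theorem eeP_eval_ne {a b x y : ℕ} (h : (x ≠ a ∨ y ≠ b) ∧ (x ≠ b ∨ y ≠ a)) :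
    eeP a b (x, y) = 0 := by
  unfold eeP
  rw [if_neg]
  rintro (⟨h1, h2⟩ | ⟨h1, h2⟩) <;> tauto

theorem eeP_eval_eq1 (a b : ℕ) : eeP a b (a, b) = 1 := by
  unfold eeP
  rw [if_pos (Or.inl ⟨rfl, rfl⟩)]

theorem eeP_eval_eq2 (a b : ℕ) : eeP a b (b, a) = 1 := by
  unfold eeP
  rw [if_pos (Or.inr ⟨rfl, rfl⟩)]

/-- the inverse of the permutation of an ascending run -/
theorem lkp_run (len : ℕ) : ∀ a, 1 ≤ a → a + len ≤ m → ∀ v,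
    (lkp m (word m (List.range' a len)))⁻¹ v
      = if v < a then v else if v = a then a + len else if v ≤ a + len then v - 1 else v := by
  induction len with
  | zero =>
    intro a _ _ v
    rw [List.range'_zero, word_nil, lkp_one, inv_one]
    simp only [Equiv.Perm.one_apply]
    split_ifs <;> omega
  | succ len ih =>
    intro a ha ham v
    rw [List.range'_succ, word_cons, lkp_mul, lkp_sigma ha (by omega), mul_inv_rev]
    have base : ∀ w, (lkp m (word m (List.range' (a+1) len)))⁻¹ w
        = if w < a+1 then w else if w = a+1 then a+1+len else if w ≤ a+1+len then w-1 else w :=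
      ih (a+1) (by omega) (by omega)
    show (lkp m (word m (List.range' (a+1) len)))⁻¹ ((Equiv.swap a (a+1))⁻¹ v) = _
    rw [Equiv.swap_inv]
    rcases Nat.lt_trichotomy v a with hv | hv | hv
    · rw [Equiv.swap_apply_of_ne_of_ne (by omega) (by omega), base]
      split_ifs <;> omega
    · subst hv
      rw [Equiv.swap_apply_left, base]
      split_ifs <;> omega
    · rcases Nat.eq_or_lt_of_le hv with hv2 | hv2
      · rw [← hv2, Equiv.swap_apply_right, base]
        split_ifs <;> omega
      · rw [Equiv.swap_apply_of_ne_of_ne (by omega) (by omega), base]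
        split_ifs <;> omega

theorem run_skipTop (len : ℕ) : ∀ a x y, 1 ≤ a → a + len ≤ m → a + len < y →
    lk m (word m (List.range' a len)) (x, y) = 0 := by
  induction len with
  | zero => intro a x y _ _ _; rw [List.range'_zero, word_nil, lk_one]
  | succ len ih =>
    intro a x y ha ham hy
    rw [List.range'_succ, lk_cons ha (by omega)]
    rw [eeP_eval_ne ⟨Or.inr (by omega), Or.inr (by omega)⟩, zero_add,
      show Equiv.swap a (a+1) y = y from Equiv.swap_apply_of_ne_of_ne (by omega) (by omega)]
    exact ih (a+1) _ y (by omega) (by omega) (by omega)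

theorem run_skip (len : ℕ) : ∀ a x y, 1 ≤ a → a + len ≤ m →
    (x < a ∨ a + len < x) → (y < a ∨ a + len < y) →
    lk m (word m (List.range' a len)) (x, y) = 0 := by
  induction len with
  | zero => intro a x y _ _ _ _; rw [List.range'_zero, word_nil, lk_one]
  | succ len ih =>
    intro a x y ha ham hx hy
    rw [List.range'_succ, lk_cons ha (by omega)]
    rw [eeP_eval_ne ⟨Or.inl (by omega), Or.inl (by omega)⟩, zero_add,
      show Equiv.swap a (a+1) x = x from Equiv.swap_apply_of_ne_of_ne (by omega) (by omega),
      show Equiv.swap a (a+1) y = y from Equiv.swap_apply_of_ne_of_ne (by omega) (by omega)]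
    exact ih (a+1) x y (by omega) (by omega) (by omega) (by omega)

theorem run_climb0 (len : ℕ) : ∀ a y, 1 ≤ a → a + len ≤ m → y < a →
    lk m (word m (List.range' a len)) (a, y) = 0 := by
  induction len with
  | zero => intro a y _ _ _; rw [List.range'_zero, word_nil, lk_one]
  | succ len ih =>
    intro a y ha ham hy
    rw [List.range'_succ, lk_cons ha (by omega)]
    rw [eeP_eval_ne ⟨Or.inr (by omega), Or.inl (by omega)⟩, zero_add,
      Equiv.swap_apply_left,
      show Equiv.swap a (a+1) y = y from Equiv.swap_apply_of_ne_of_ne (by omega) (by omega)]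
    exact ih (a+1) y (by omega) (by omega) (by omega)

theorem run_climb1 (len : ℕ) : ∀ a, 1 ≤ a → a + len ≤ m → 1 ≤ len →
    lk m (word m (List.range' a len)) (a, a + len) = 1 := by
  induction len with
  | zero => omega
  | succ len ih =>
    intro a ha ham _
    rw [List.range'_succ, lk_cons ha (by omega)]
    rcases Nat.eq_zero_or_pos len with rfl | hlen
    · rw [show a + (0+1) = a + 1 from rfl, eeP_eval_eq1, List.range'_zero, word_nil, lk_one]
      norm_num
    · rw [eeP_eval_ne ⟨Or.inr (by omega), Or.inr (by omega)⟩, zero_add,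
        Equiv.swap_apply_left,
        show Equiv.swap a (a+1) (a + (len+1)) = a + (len+1) from
          Equiv.swap_apply_of_ne_of_ne (by omega) (by omega)]
      have := ih (a+1) (by omega) (by omega) hlen
      rw [show a+1+len = a + (len+1) by omega] at this
      exact this

theorem run_climb1' (len : ℕ) : ∀ a, 1 ≤ a → a + len ≤ m → 1 ≤ len →
    lk m (word m (List.range' a len)) (a + len, a) = 1 := by
  induction len with
  | zero => omega
  | succ len ih =>
    intro a ha ham _
    rw [List.range'_succ, lk_cons ha (by omega)]
    rcases Nat.eq_zero_or_pos len with rfl | hlen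
    · rw [show a + (0+1) = a + 1 from rfl, eeP_eval_eq2, List.range'_zero, word_nil, lk_one]
      norm_num
    · rw [eeP_eval_ne ⟨Or.inl (by omega), Or.inl (by omega)⟩, zero_add,
        show Equiv.swap a (a+1) (a + (len+1)) = a + (len+1) from
          Equiv.swap_apply_of_ne_of_ne (by omega) (by omega),
        Equiv.swap_apply_left]
      have := ih (a+1) (by omega) (by omega) hlen
      rw [show a+1+len = a + (len+1) by omega] at this
      exact this

theorem run_desc2 (len : ℕ) : ∀ b x, 1 ≤ b → b + len ≤ m → x < b →
    lk m (word m (List.range' b len)) (x, b+1) = 0 := by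
  induction len with
  | zero => intro b x _ _ _; rw [List.range'_zero, word_nil, lk_one]
  | succ len ih =>
    intro b x hb hbm hx
    rw [List.range'_succ, lk_cons hb (by omega)]
    rw [eeP_eval_ne ⟨Or.inl (by omega), Or.inr (by omega)⟩, zero_add,
      show Equiv.swap b (b+1) x = x from Equiv.swap_apply_of_ne_of_ne (by omega) (by omega),
      Equiv.swap_apply_right]
    exact run_skip len (b+1) x b (by omega) (by omega) (by omega) (by omega)

theorem run_desc (len : ℕ) : ∀ a j, 1 ≤ a → a + len ≤ m → a + 1 ≤ j →
    lk m (word m (List.range' a len)) (j, j+1) = 0 := by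
  induction len with
  | zero => intro a j _ _ _; rw [List.range'_zero, word_nil, lk_one]
  | succ len ih =>
    intro a j ha ham hj
    rw [List.range'_succ, lk_cons ha (by omega)]
    rcases Nat.lt_or_ge (a+1) j with h | h
    · rw [eeP_eval_ne ⟨Or.inl (by omega), Or.inl (by omega)⟩, zero_add,
        show Equiv.swap a (a+1) j = j from Equiv.swap_apply_of_ne_of_ne (by omega) (by omega),
        show Equiv.swap a (a+1) (j+1) = j+1 from
          Equiv.swap_apply_of_ne_of_ne (by omega) (by omega)]
      exact ih (a+1) j (by omega) (by omega) (by omega)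
    · have hja : j = a + 1 := by omega
      subst hja
      rw [eeP_eval_ne ⟨Or.inl (by omega), Or.inr (by omega)⟩, zero_add,
        Equiv.swap_apply_right,
        show Equiv.swap a (a+1) (a+1+1) = a+1+1 from
          Equiv.swap_apply_of_ne_of_ne (by omega) (by omega)]
      exact run_desc2 len (a+1) a (by omega) (by omega) (by omega)

theorem run_dropTop (len : ℕ) : ∀ a x, 1 ≤ a → a + len ≤ m → a + len < x →
    lk m (word m (List.range' a len)) (x, a + len) = 0 := by
  induction len with
  | zero => intro a x _ _ _; rw [List.range'_zero, word_nil, lk_one]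
  | succ len ih =>
    intro a x ha ham hx
    rw [List.range'_succ, lk_cons ha (by omega)]
    rw [eeP_eval_ne ⟨Or.inl (by omega), Or.inl (by omega)⟩, zero_add,
      show Equiv.swap a (a+1) x = x from Equiv.swap_apply_of_ne_of_ne (by omega) (by omega)]
    rcases Nat.eq_zero_or_pos len with rfl | hlen
    · rw [List.range'_zero, word_nil, lk_one]
    · rw [show Equiv.swap a (a+1) (a + (len+1)) = a + (len+1) from
        Equiv.swap_apply_of_ne_of_ne (by omega) (by omega)]
      have := ih (a+1) x (by omega) (by omega) (by omega)
      rw [show a+1+len = a + (len+1) by omega] at this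
      exact this

end Braid

namespace Braid

variable {m : ℕ}

theorem AD_trace (t : ℕ) : t + 1 ≤ m → ∀ x, t + 1 < x →
    lk m (ADel m t) (x, t + 1) = 0 := by
  induction t with
  | zero =>
    intro _ x _
    show lk m (word m []) _ = 0
    rw [word_nil, lk_one]
  | succ t ih =>
    intro hm x hx
    have hrun := run_dropTop (m := m) (t+1) 1 x (by omega) (by omega) (by omega)
    have hperm := lkp_run (m := m) (t+1) 1 (by omega) (by omega)
    rw [ADel, ADlist_succ, lk_append]
    have e1 : lk m (word m (Alist (t+1))) (x, t+1+1) = 0 := by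
      show lk m (word m (List.range' 1 (t+1))) (x, t+1+1) = 0
      rw [show t+1+1 = 1 + (t+1) from by omega]
      exact hrun
    have e2 : (lkp m (word m (Alist (t+1))))⁻¹ x = x := by
      show (lkp m (word m (List.range' 1 (t+1))))⁻¹ x = x
      rw [hperm x]
      split_ifs <;> omega
    have e3 : (lkp m (word m (Alist (t+1))))⁻¹ (t+1+1) = t+1 := by
      show (lkp m (word m (List.range' 1 (t+1))))⁻¹ (t+1+1) = t+1
      rw [hperm (t+1+1)]
      split_ifs <;> omega
    rw [e1, e2, e3, zero_add]
    exact ih (by omega) x (by omega)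

theorem pow_invariant (x : B m) (Q : ℕ × ℕ → Prop) (c : ℤ)
    (h : ∀ u v, Q (u, v) → lk m x (u, v) = c ∧ Q ((lkp m x)⁻¹ u, (lkp m x)⁻¹ v)) :
    ∀ (a : ℕ) (u v : ℕ), Q (u, v) → lk m (x^a) (u, v) = (a : ℤ) * c
      ∧ Q ((lkp m (x^a))⁻¹ u, (lkp m (x^a))⁻¹ v) := by
  intro a
  induction a with
  | zero =>
    intro u v hQ
    rw [pow_zero, lk_one, lkp_one]
    simpa using hQ
  | succ a ih =>
    intro u v hQ
    have h1 := h u v hQ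
    have h2 := ih ((lkp m x)⁻¹ u) ((lkp m x)⁻¹ v) h1.2
    constructor
    · rw [pow_succ', lk_mul, h1.1, h2.1]
      push_cast
      ring
    · rw [pow_succ', lkp_mul, mul_inv_rev]
      simpa using h2.2

theorem desc_X (L : ℕ) (hL : m = L + 1) : ∀ j, 1 ≤ j → j ≤ L →
    lk m (word m (List.range' 1 L) ^ j) (j, j+1) = 1
    ∧ (lkp m (word m (List.range' 1 L) ^ j))⁻¹ j = m
    ∧ (lkp m (word m (List.range' 1 L) ^ j))⁻¹ (j+1) = 1 := by
  subst hL
  have hperm := lkp_run (m := L+1) L 1 (by omega) (by omega)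
  intro j
  induction j with
  | zero => omega
  | succ j ih =>
    intro _ hj
    rcases Nat.eq_zero_or_pos j with rfl | hj1
    · -- base case j+1 = 1
      rw [pow_one]
      obtain ⟨s, rfl⟩ : ∃ s, L = s + 1 := ⟨L - 1, by omega⟩
      refine ⟨?_, ?_, ?_⟩
      · rw [List.range'_succ, lk_cons (by omega) (by omega), show (0:ℕ)+1 = 1 from rfl,
          eeP_eval_eq1, Equiv.swap_apply_left, show Equiv.swap 1 (1+1) (1+1) = 1 from
            Equiv.swap_apply_right _ _]
        rw [run_climb0 s 2 1 (by omega) (by omega) (by omega)]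
        norm_num
      · rw [hperm]
        split_ifs <;> omega
      · rw [hperm]
        split_ifs <;> omega
    · -- inductive step
      obtain ⟨h1, h2, h3⟩ := ih hj1 (by omega)
      have hmul : word (L+1) (List.range' 1 L) ^ (j+1)
          = word (L+1) (List.range' 1 L) * word (L+1) (List.range' 1 L) ^ j := pow_succ' _ _
      have hp1 : (lkp (L+1) (word (L+1) (List.range' 1 L)))⁻¹ (j+1) = j := by
        rw [hperm]
        split_ifs <;> omega
      have hp2 : (lkp (L+1) (word (L+1) (List.range' 1 L)))⁻¹ (j+1+1) = j+1 := by
        rw [hperm]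
        split_ifs <;> omega
      refine ⟨?_, ?_, ?_⟩
      · rw [hmul, lk_mul, hp1, hp2,
          run_desc L 1 (j+1) (by omega) (by omega) (by omega), h1]
        norm_num
      · rw [hmul, lkp_mul, mul_inv_rev, Equiv.Perm.mul_apply, hp1, h2]
      · rw [hmul, lkp_mul, mul_inv_rev, Equiv.Perm.mul_apply, hp2, h3]

theorem delta_sq_lk (L : ℕ) (hL : m = L + 1) (h2 : 1 ≤ L) :
    lk m (DeltaB m * DeltaB m) (L, L+1) = 2
    ∧ (lkp m (DeltaB m * DeltaB m))⁻¹ L = L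
    ∧ (lkp m (DeltaB m * DeltaB m))⁻¹ (L+1) = L+1 := by
  subst hL
  have hperm := lkp_run (m := L+1) L 1 (by omega) (by omega)
  have hDD : DeltaB (L+1) * DeltaB (L+1) = word (L+1) (List.range' 1 L) ^ (L+1) := by
    rw [Delta_eq]
    exact (delta_pow L h2 (by omega)).symm
  obtain ⟨h1, h2', h3⟩ := desc_X (m := L+1) L rfl L h2 le_rfl
  have hsplit : word (L+1) (List.range' 1 L) ^ (L+1)
      = word (L+1) (List.range' 1 L) ^ L * word (L+1) (List.range' 1 L) := pow_succ _ _
  have hclimb := run_climb1' (m := L+1) L 1 (by omega) (by omega) h2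
  refine ⟨?_, ?_, ?_⟩
  · rw [hDD, hsplit, lk_mul, h1, h2', h3]
    rw [show (1:ℕ) + L = L + 1 from by omega] at hclimb
    rw [hclimb]
    norm_num
  · rw [hDD, hsplit, lkp_mul, mul_inv_rev, Equiv.Perm.mul_apply, h2', hperm]
    split_ifs <;> omega
  · rw [hDD, hsplit, lkp_mul, mul_inv_rev, Equiv.Perm.mul_apply, h3, hperm]
    split_ifs <;> omega

theorem delta_even_lk (L : ℕ) (hL : m = L + 1) (h2 : 1 ≤ L) : ∀ r : ℕ,
    lk m ((DeltaB m)^(2*r)) (L, L+1) = 2*r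
    ∧ (lkp m ((DeltaB m)^(2*r)))⁻¹ L = L
    ∧ (lkp m ((DeltaB m)^(2*r)))⁻¹ (L+1) = L+1 := by
  obtain ⟨hsq1, hsq2, hsq3⟩ := delta_sq_lk L hL h2
  intro r
  induction r with
  | zero =>
    rw [Nat.mul_zero, pow_zero, lk_one, lkp_one]
    refine ⟨rfl, rfl, rfl⟩
  | succ r ih =>
    obtain ⟨i1, i2, i3⟩ := ih
    have hsplit : (DeltaB m)^(2*(r+1)) = (DeltaB m * DeltaB m) * (DeltaB m)^(2*r) := by
      rw [show 2*(r+1) = 2 + 2*r from by ring, pow_add, pow_two]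
    refine ⟨?_, ?_, ?_⟩
    · rw [hsplit, lk_mul, hsq2, hsq3, hsq1, i1]
      push_cast
      ring
    · rw [hsplit, lkp_mul, mul_inv_rev, Equiv.Perm.mul_apply, hsq2, i2]
    · rw [hsplit, lkp_mul, mul_inv_rev, Equiv.Perm.mul_apply, hsq3, i3]

theorem lk_Delta_1m (L : ℕ) (hL : m = L + 2) :
    lk m (DeltaB m) (1, m) = 1 := by
  subst hL
  have hAD : DeltaB (L+2) = ADel (L+2) (L+1) := by
    rw [Delta_eq]
    exact W_eq_AD (L+1) (by omega)
  have hperm := lkp_run (m := L+2) (L+1) 1 (by omega) (by omega)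
  rw [hAD, ADel, ADlist_succ, lk_append]
  have hclimb := run_climb1 (m := L+2) (L+1) 1 (by omega) (by omega) (by omega)
  have e1 : lk (L+2) (word (L+2) (Alist (L+1))) (1, L+2) = 1 := by
    show lk (L+2) (word (L+2) (List.range' 1 (L+1))) (1, L+2) = 1
    rw [show (L+2 : ℕ) = 1 + (L+1) from by omega] at hclimb ⊢
    exact hclimb
  have e2 : (lkp (L+2) (word (L+2) (Alist (L+1))))⁻¹ 1 = L+2 := by
    show (lkp (L+2) (word (L+2) (List.range' 1 (L+1))))⁻¹ 1 = L+2
    rw [hperm]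
    split_ifs <;> omega
  have e3 : (lkp (L+2) (word (L+2) (Alist (L+1))))⁻¹ (L+2) = L+1 := by
    show (lkp (L+2) (word (L+2) (List.range' 1 (L+1))))⁻¹ (L+2) = L+1
    rw [hperm]
    split_ifs <;> omega
  rw [e1, e2, e3]
  have := AD_trace (m := L+2) L (by omega) (L+2) (by omega)
  rw [ADel] at this
  rw [this]
  norm_num

end Braid

namespace Braid

theorem iota_word (n : ℕ) (ι : B n →* B (n + 2))
    (hι : ∀ idx : ℕ, 1 ≤ idx → idx ≤ n - 1 → ι (σb n idx) = σb (n + 2) idx)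
    (l : List ℕ) (hl : ∀ x ∈ l, 1 ≤ x ∧ x ≤ n - 1) :
    ι (word n l) = word (n + 2) l := by
  induction l with
  | nil => simp [word]
  | cons a t ih =>
    rw [word_cons, map_mul, hι a (hl a (by simp)).1 (hl a (by simp)).2,
      ih (fun x hx => hl x (by simp [hx])), word_cons]

end Braid

open Braid in
theorem statement11' (n k : ℕ) (hn : 3 ≤ n) (hk : 1 ≤ k)
    (ι : B n →* B (n + 2))
    (hι : ∀ idx : ℕ, 1 ≤ idx → idx ≤ n - 1 → ι (σb n idx) = σb (n + 2) idx) :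
    ∀ β : B (n + 2), β = ι (deltaB n) ^ (n * k + 1) * (σb (n + 2) (n + 1)) ^ (4 * k + 1) →
      (β ∈ Bpos (n + 2) ∧ (DeltaB (n + 2))⁻¹ * β ∉ Bpos (n + 2)) ∧
      (β⁻¹ * (DeltaB (n + 2)) ^ (4 * k + 1) ∈ Bpos (n + 2) ∧
        β⁻¹ * (DeltaB (n + 2)) ^ (4 * k) ∉ Bpos (n + 2)) := by
  intro β hβ
  set d : B (n+2) := word (n+2) (List.range' 1 (n-1)) with hd_def
  set s : B (n+2) := σb (n+2) (n+1) with hs_def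
  have hdw : ι (deltaB n) = d :=
    iota_word n ι hι (List.range' 1 (n-1)) (fun x hx => by simp at hx; omega)
  have hβw : β = d ^ (n*k+1) * s ^ (4*k+1) := by rw [hβ, hdw]
  have hdpos : d ∈ Bpos (n+2) := word_mem_Bpos (fun x hx => by simp at hx; omega)
  have hspos : s ∈ Bpos (n+2) := sig_mem (by omega) (by omega)
  -- claim A : β positive
  have claimA : β ∈ Bpos (n+2) := by
    rw [hβw]
    exact mul_mem (pow_mem hdpos _) (pow_mem hspos _)
  -- Δ basic facts
  have hΔ : DeltaB (n+2) = Wel (n+2) (n+1) := Delta_eq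
  set D : B (n+2) := Wel (n+2) (n-1) with hD_def
  have hdn : d ^ n = D * D := by
    have h := delta_pow (m := n+2) (n-1) (by omega) (by omega)
    rw [show n-1+1 = n by omega] at h
    exact h
  have hsd : s * d = d * s :=
    word_comm (m := n+2) (j := n+1) (l := List.range' 1 (n-1))
      (fun x hx => by simp at hx; omega)
  have hsD : s * D = D * s :=
    word_comm (m := n+2) (j := n+1) (l := Wlist (n-1))
      (fun x hx => by have := mem_Wlist hx; omega)
  -- Δ factorizations
  obtain ⟨p₁, hp₁, hCC⟩ := R_lem (m := n+2) n (by omega)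
  have hΔfact : DeltaB (n+2) = D * (Cel (n+2) n * Cel (n+2) (n+1)) := by
    have w1 := Wel_succ (m := n+2) n
    have w2 := Wel_succ (m := n+2) (n-1)
    rw [show n-1+1 = n by omega] at w2
    rw [hΔ, w1, w2, mul_assoc]
  have hDpos : D ∈ Bpos (n+2) := word_mem_Bpos (fun x hx => by have := mem_Wlist hx; omega)
  have hDs : (D * s)⁻¹ * DeltaB (n+2) ^ 1 ∈ Bpos (n+2) := by
    rw [pow_one, hΔfact, hCC, show (D * s)⁻¹ * (D * (s * p₁)) = p₁ from by group]
    exact hp₁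
  have hs1 : s⁻¹ * DeltaB (n+2) ^ 1 ∈ Bpos (n+2) := by
    rw [pow_one, hΔfact, hCC, show s⁻¹ * (D * (s * p₁)) = (s⁻¹ * D * s) * p₁ from by group,
      show s⁻¹ * D * s = D from by rw [mul_assoc, ← hsD]; group]
    exact mul_mem hDpos hp₁
  -- ds divisor
  obtain ⟨p₂, hp₂, hS⟩ := S_lem (m := n+2) (n-1) (by omega)
  rw [show n-1+1 = n by omega] at hS
  have hAD : DeltaB (n+2) = Ael (n+2) (n+1) * ADel (n+2) n := by
    have h1 : Wel (n+2) (n+1) = ADel (n+2) (n+1) := W_eq_AD (n+1) (by omega)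
    rw [hΔ, h1, ADel_succ]
  have hA1 : Ael (n+2) (n+1) = d * (σb (n+2) n * s) := by
    have e1 := Ael_succ (m := n+2) n
    have e2 := Ael_succ (m := n+2) (n-1)
    rw [show n-1+1 = n by omega] at e2
    rw [e1, e2, mul_assoc]
    rfl
  have hbraid := braid_rel (m := n+2) (i := n) (by omega) (by omega)
  have hds : (d * s)⁻¹ * DeltaB (n+2) ^ 1 ∈ Bpos (n+2) := by
    rw [pow_one, hAD, hA1, hS,
      show (d * s)⁻¹ * (d * (σb (n+2) n * s) * (σb (n+2) n * p₂))
        = s⁻¹ * (σb (n+2) n * s * σb (n+2) n) * p₂ from by group,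
      show σb (n+2) n * s * σb (n+2) n = s * σb (n+2) n * s from by rw [hs_def]; exact hbraid,
      show s⁻¹ * (s * σb (n+2) n * s) * p₂ = σb (n+2) n * (s * p₂) from by group]
    exact mul_mem (sig_mem (by omega) (by omega)) (mul_mem hspos hp₂)
  -- assemble claim C
  have step1 : ((D * s) * s)⁻¹ * DeltaB (n+2) ^ 2 ∈ Bpos (n+2) := by
    have h := div_mul hDs hs1
    rw [show (1+1 : ℕ) = 2 from rfl] at h
    exact h
  have hblock := div_pow step1 (2*k)
  have hfinal := div_mul hblock hds
  rw [show 2*(2*k)+1 = 4*k+1 by ring] at hfinal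
  have cDs : Commute D s := hsD.symm
  have cds : Commute d s := hsd.symm
  have hβeq : β = ((D * s) * s)^(2*k) * (d * s) := by
    rw [hβw]
    have e1 : ((D * s) * s)^(2*k) = D^(2*k) * (s*s)^(2*k) := by
      rw [mul_assoc]
      exact (cDs.mul_right cDs).mul_pow _
    have e2 : D^(2*k) = d^(n*k) := by
      have hDD : D * D = D^2 := (pow_two D).symm
      rw [pow_mul D 2 k, ← hDD, ← hdn, ← pow_mul]
    have e3 : (s*s)^(2*k) = s^(4*k) := by
      rw [← pow_two, ← pow_mul, show 2*(2*k) = 4*k by ring]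
    rw [e1, e2, e3]
    have e4 : d^(n*k) * s^(4*k) * (d * s) = d^(n*k) * (s^(4*k) * d) * s := by group
    have e5 : s^(4*k) * d = d * s^(4*k) := ((cds.symm).pow_left (4*k)).eq
    rw [e4, e5, show d^(n*k) * (d * s^(4*k)) * s = (d^(n*k) * d) * (s^(4*k) * s) from by group,
      ← pow_succ, ← pow_succ]
  have claimC : β⁻¹ * DeltaB (n+2) ^ (4*k+1) ∈ Bpos (n+2) := by
    rw [hβeq]
    exact hfinal
  -- negative claims via linking numbers
  have hperm_d := lkp_run (m := n+2) (n-1) 1 (by omega) (by omega)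
  have hswap_s : lkp (n+2) s = Equiv.swap (n+1) (n+1+1) := by
    rw [hs_def]
    exact lkp_sigma (by omega) (by omega)
  -- class Q1
  have hd1 : ∀ u v : ℕ, (u ≤ n ∧ (v = n+1 ∨ v = n+2)) →
      lk (n+2) d (u, v) = 0
      ∧ ((lkp (n+2) d)⁻¹ u ≤ n ∧ ((lkp (n+2) d)⁻¹ v = n+1 ∨ (lkp (n+2) d)⁻¹ v = n+2)) := by
    intro u v hQ
    refine ⟨?_, ?_, ?_⟩
    · exact run_skipTop (m := n+2) (n-1) 1 u v (by omega) (by omega) (by omega)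
    · rw [hperm_d u]; split_ifs <;> omega
    · rw [hperm_d v]; split_ifs <;> omega
  have hs1Q : ∀ u v : ℕ, (u ≤ n ∧ (v = n+1 ∨ v = n+2)) →
      lk (n+2) s (u, v) = 0
      ∧ ((lkp (n+2) s)⁻¹ u ≤ n ∧ ((lkp (n+2) s)⁻¹ v = n+1 ∨ (lkp (n+2) s)⁻¹ v = n+2)) := by
    intro u v hQ
    refine ⟨?_, ?_, ?_⟩
    · rw [hs_def, lk_sigma (m := n+2) (i := n+1) (by omega) (by omega)]
      exact eeP_eval_ne ⟨Or.inl (by omega), Or.inl (by omega)⟩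
    · rw [hswap_s, Equiv.swap_inv,
        Equiv.swap_apply_of_ne_of_ne (by omega) (by omega)]
      exact hQ.1
    · rw [hswap_s, Equiv.swap_inv]
      rcases hQ.2 with hv | hv
      · rw [hv, Equiv.swap_apply_left]; omega
      · rw [hv, show n+2 = n+1+1 from rfl, Equiv.swap_apply_right]; omega
  have hlkβ1 : lk (n+2) β (1, n+2) = 0 := by
    have Hd := pow_invariant (m := n+2) d
      (fun p => p.1 ≤ n ∧ (p.2 = n+1 ∨ p.2 = n+2)) 0 hd1 (n*k+1) 1 (n+2)
      ⟨by omega, Or.inr rfl⟩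
    have Hs := pow_invariant (m := n+2) s
      (fun p => p.1 ≤ n ∧ (p.2 = n+1 ∨ p.2 = n+2)) 0 hs1Q (4*k+1) _ _ Hd.2
    rw [hβw, lk_mul', Hd.1, Hs.1]
    ring
  have hΔ1 : lk (n+2) (DeltaB (n+2)) (1, n+2) = 1 := lk_Delta_1m n rfl
  have claimB : (DeltaB (n+2))⁻¹ * β ∉ Bpos (n+2) := by
    intro hmem
    have hβfact : β = DeltaB (n+2) * ((DeltaB (n+2))⁻¹ * β) := by group
    have hval := lk_mul' (m := n+2) (DeltaB (n+2)) ((DeltaB (n+2))⁻¹ * β) 1 (n+2)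
    rw [← hβfact, hlkβ1, hΔ1] at hval
    have hnn := lk_nonneg hmem
      ((lkp (n+2) (DeltaB (n+2)))⁻¹ 1, (lkp (n+2) (DeltaB (n+2)))⁻¹ (n+2))
    linarith
  -- class Q2
  have hd2 : ∀ u v : ℕ, ((u = n+1 ∧ v = n+2) ∨ (u = n+2 ∧ v = n+1)) →
      lk (n+2) d (u, v) = 0
      ∧ (((lkp (n+2) d)⁻¹ u = n+1 ∧ (lkp (n+2) d)⁻¹ v = n+2)
          ∨ ((lkp (n+2) d)⁻¹ u = n+2 ∧ (lkp (n+2) d)⁻¹ v = n+1)) := by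
    intro u v hQ
    refine ⟨?_, ?_⟩
    · exact run_skip (m := n+2) (n-1) 1 u v (by omega) (by omega)
        (Or.inr (by omega)) (Or.inr (by omega))
    · rw [hperm_d u, hperm_d v]
      split_ifs <;> omega
  have hs2Q : ∀ u v : ℕ, ((u = n+1 ∧ v = n+2) ∨ (u = n+2 ∧ v = n+1)) →
      lk (n+2) s (u, v) = 1
      ∧ (((lkp (n+2) s)⁻¹ u = n+1 ∧ (lkp (n+2) s)⁻¹ v = n+2)
          ∨ ((lkp (n+2) s)⁻¹ u = n+2 ∧ (lkp (n+2) s)⁻¹ v = n+1)) := by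
    intro u v hQ
    have hsig : lk (n+2) s (u, v) = eeP (n+1) (n+1+1) (u, v) := by
      rw [hs_def]
      exact lk_sigma (m := n+2) (i := n+1) (by omega) (by omega) (u, v)
    rcases hQ with ⟨hu, hv⟩ | ⟨hu, hv⟩
    · subst hu; subst hv
      refine ⟨?_, ?_⟩
      · rw [hsig, show n+2 = n+1+1 from rfl, eeP_eval_eq1]
      · rw [hswap_s, Equiv.swap_inv, Equiv.swap_apply_left,
          show n+2 = n+1+1 from rfl, Equiv.swap_apply_right]
        right
        exact ⟨rfl, rfl⟩
    · subst hu; subst hv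
      refine ⟨?_, ?_⟩
      · rw [hsig, show n+2 = n+1+1 from rfl, eeP_eval_eq2]
      · rw [hswap_s, Equiv.swap_inv, Equiv.swap_apply_left,
          show n+2 = n+1+1 from rfl, Equiv.swap_apply_right]
        left
        exact ⟨rfl, rfl⟩
  have hlkβ2 : lk (n+2) β (n+1, n+2) = ((4*k+1 : ℕ) : ℤ) := by
    have Hd := pow_invariant (m := n+2) d
      (fun p => (p.1 = n+1 ∧ p.2 = n+2) ∨ (p.1 = n+2 ∧ p.2 = n+1)) 0 hd2 (n*k+1)
      (n+1) (n+2) (Or.inl ⟨rfl, rfl⟩)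
    have Hs := pow_invariant (m := n+2) s
      (fun p => (p.1 = n+1 ∧ p.2 = n+2) ∨ (p.1 = n+2 ∧ p.2 = n+1)) 1 hs2Q (4*k+1)
      _ _ Hd.2
    rw [hβw, lk_mul', Hd.1, Hs.1]
    ring
  have E := delta_even_lk (m := n+2) (n+1) rfl (by omega) (2*k)
  have claimD : β⁻¹ * DeltaB (n+2) ^ (4*k) ∉ Bpos (n+2) := by
    intro hmem
    have hfact : DeltaB (n+2) ^ (4*k) = β * (β⁻¹ * DeltaB (n+2) ^ (4*k)) := by group
    have hval := lk_mul' (m := n+2) β (β⁻¹ * DeltaB (n+2) ^ (4*k)) (n+1) (n+2)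
    rw [← hfact, hlkβ2] at hval
    have hnn := lk_nonneg hmem ((lkp (n+2) β)⁻¹ (n+1), (lkp (n+2) β)⁻¹ (n+2))
    have hE : lk (n+2) (DeltaB (n+2) ^ (4*k)) (n+1, n+2) = ((2*(2*k) : ℕ) : ℤ) := by
      have h := E.1
      rw [show 2*(2*k) = 4*k by ring] at h
      exact h
    rw [hE] at hval
    have hc1 : ((2*(2*k) : ℕ) : ℤ) = 4*k := by push_cast; ring
    have hc2 : ((4*k+1 : ℕ) : ℤ) = 4*k+1 := by push_cast; ring
    linarith
  exact ⟨⟨claimA, claimB⟩, claimC, claimD⟩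


/-- `β` has infimum `0` and canonical length `4k+1`. -/
theorem statement11 (n k : ℕ) (hn : 3 ≤ n) (hk : 1 ≤ k)
    (ι : B n →* B (n + 2))
    (hι : ∀ idx : ℕ, 1 ≤ idx → idx ≤ n - 1 → ι (σb n idx) = σb (n + 2) idx) :
    ∀ β : B (n + 2), β = ι (deltaB n) ^ (n * k + 1) * (σb (n + 2) (n + 1)) ^ (4 * k + 1) →
      (β ∈ Bpos (n + 2) ∧ (DeltaB (n + 2))⁻¹ * β ∉ Bpos (n + 2)) ∧
      (β⁻¹ * (DeltaB (n + 2)) ^ (4 * k + 1) ∈ Bpos (n + 2) ∧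
        β⁻¹ * (DeltaB (n + 2)) ^ (4 * k) ∉ Bpos (n + 2)) :=
  statement11' n k hn hk ι hι
end

section
/- Let n ≥ 3 and k ≥ 1. For every integer m ≥ 1 and every integer j, β^m ≠ Δ_{n+2}^j. (In particular, β is not a periodic braid.) -/
namespace S12
structure G where
  v : Sym2 ℕ → ℤ
  s : Equiv.Perm ℕ

namespace G

theorem ext' {g h : G} (hv : g.v = h.v) (hs : g.s = h.s) : g = h := by
  cases g; cases h; simp_all

lemma map_mul_symm (a b : Equiv.Perm ℕ) (p : Sym2 ℕ) :
    Sym2.map (a * b).symm p = Sym2.map b.symm (Sym2.map a.symm p) := by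
  induction p using Sym2.ind with
  | _ x y => exact Sym2.eq_iff.mpr (Or.inl ⟨rfl, rfl⟩)

instance : Group G where
  mul g h := ⟨fun p => g.v p + h.v (Sym2.map g.s.symm p), g.s * h.s⟩
  one := ⟨0, 1⟩
  inv g := ⟨fun p => - g.v (Sym2.map g.s p), g.s⁻¹⟩
  mul_assoc a b c := by
    refine ext' ?_ (mul_assoc _ _ _)
    funext p
    show (a.v p + b.v _) + c.v (Sym2.map (a.s * b.s).symm p) = a.v p + (b.v _ + c.v _)
    rw [map_mul_symm]; ring
  one_mul a := by
    refine ext' ?_ (one_mul _)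
    funext p
    show 0 + a.v (Sym2.map (1 : Equiv.Perm ℕ).symm p) = a.v p
    induction p using Sym2.ind with
    | _ x y => simp [Sym2.map_pair_eq]; rfl
  mul_one a := by
    refine ext' ?_ (mul_one _)
    funext p
    show a.v p + 0 = a.v p
    ring
  inv_mul_cancel a := by
    refine ext' ?_ (inv_mul_cancel _)
    funext p
    show (-a.v (Sym2.map a.s p)) + a.v (Sym2.map (a.s⁻¹).symm p) = 0
    have : (a.s⁻¹).symm = a.s := rfl
    rw [this]; ring

@[simp] lemma mul_v (g h : G) (p : Sym2 ℕ) :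
    (g * h).v p = g.v p + h.v (Sym2.map g.s.symm p) := rfl
@[simp] lemma mul_s (g h : G) : (g * h).s = g.s * h.s := rfl
@[simp] lemma one_v (p : Sym2 ℕ) : (1 : G).v p = 0 := rfl
@[simp] lemma one_s : (1 : G).s = 1 := rfl

end G

open Equiv

def e (q : Sym2 ℕ) : Sym2 ℕ → ℤ := fun p => if p = q then 1 else 0

def gen (i : ℕ) : G := ⟨e s(i, i + 1), Equiv.swap i (i + 1)⟩

@[simp] lemma gen_v (i : ℕ) : (gen i).v = e s(i, i + 1) := rfl
@[simp] lemma gen_s (i : ℕ) : (gen i).s = Equiv.swap i (i + 1) := rfl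

attribute [simp] G.map_mul_symm

lemma map_symm_map (σ : Equiv.Perm ℕ) (p : Sym2 ℕ) :
    Sym2.map σ.symm (Sym2.map σ p) = p := by
  induction p using Sym2.ind with
  | _ x y => simp [Sym2.map_pair_eq]

lemma map_map_symm (σ : Equiv.Perm ℕ) (p : Sym2 ℕ) :
    Sym2.map σ (Sym2.map σ.symm p) = p := by
  induction p using Sym2.ind with
  | _ x y => simp [Sym2.map_pair_eq]

lemma e_map (σ : Equiv.Perm ℕ) (q p : Sym2 ℕ) :
    e q (Sym2.map σ p) = e (Sym2.map σ.symm q) p := by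
  unfold e
  refine if_congr ⟨fun h => by rw [← h, map_symm_map], fun h => by rw [h, map_map_symm]⟩ rfl rfl

lemma swap_braid (i : ℕ) :
    Equiv.swap i (i+1) * Equiv.swap (i+1) (i+2) * Equiv.swap i (i+1)
      = Equiv.swap (i+1) (i+2) * Equiv.swap i (i+1) * Equiv.swap (i+1) (i+2) := by
  have h1 := Equiv.swap_mul_swap_mul_swap (x := i+2) (y := i+1) (z := i)
    (by omega) (by omega)
  have h2 := Equiv.swap_mul_swap_mul_swap (x := i) (y := i+1) (z := i+2)
    (by omega) (by omega)
  rw [Equiv.swap_comm (i+1) i, Equiv.swap_comm (i+2) (i+1)] at h1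
  rw [Equiv.swap_comm (i+2) i] at h2
  rw [h1, h2]

lemma gen_braid (i : ℕ) :
    gen i * gen (i+1) * gen i = gen (i+1) * gen i * gen (i+1) := by
  have a1 : Equiv.swap i (i+1) i = i + 1 := Equiv.swap_apply_left _ _
  have a2 : Equiv.swap i (i+1) (i+1) = i := Equiv.swap_apply_right _ _
  have a3 : Equiv.swap i (i+1) (i+2) = i + 2 :=
    Equiv.swap_apply_of_ne_of_ne (by omega) (by omega)
  have b1 : Equiv.swap (i+1) (i+2) i = i :=
    Equiv.swap_apply_of_ne_of_ne (by omega) (by omega)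
  have b2 : Equiv.swap (i+1) (i+2) (i+1) = i + 2 := Equiv.swap_apply_left _ _
  have b3 : Equiv.swap (i+1) (i+2) (i+2) = i + 1 := Equiv.swap_apply_right _ _
  refine G.ext' ?_ (by simpa using swap_braid i)
  funext p
  simp only [G.mul_v, G.mul_s, gen_v, gen_s, G.map_mul_symm, Equiv.symm_swap, e_map,
    Sym2.map_pair_eq, a1, a2, a3, b1, b2, b3]
  ring

lemma swap_comm' (i j : ℕ) (h : i + 2 ≤ j) :
    Equiv.swap i (i+1) * Equiv.swap j (j+1) = Equiv.swap j (j+1) * Equiv.swap i (i+1) := by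
  ext x
  simp only [Equiv.Perm.mul_apply, Equiv.swap_apply_def]
  split_ifs <;> omega

lemma gen_comm (i j : ℕ) (h : i + 2 ≤ j) :
    gen i * gen j = gen j * gen i := by
  have a1 : Equiv.swap i (i+1) j = j :=
    Equiv.swap_apply_of_ne_of_ne (by omega) (by omega)
  have a2 : Equiv.swap i (i+1) (j+1) = j + 1 :=
    Equiv.swap_apply_of_ne_of_ne (by omega) (by omega)
  have b1 : Equiv.swap j (j+1) i = i :=
    Equiv.swap_apply_of_ne_of_ne (by omega) (by omega)
  have b2 : Equiv.swap j (j+1) (i+1) = i + 1 :=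
    Equiv.swap_apply_of_ne_of_ne (by omega) (by omega)
  refine G.ext' ?_ (swap_comm' i j h)
  funext p
  simp only [G.mul_v, G.mul_s, gen_v, gen_s, Equiv.symm_swap, e_map,
    Sym2.map_pair_eq, a1, a2, b1, b2]
  ring

def fgen (n : ℕ) : ℕ → G := fun i => if 1 ≤ i ∧ i ≤ n + 1 then gen i else 1

lemma hrels (n : ℕ) : ∀ r ∈ braidRels (n + 2), FreeGroup.lift (fgen n) r = 1 := by
  intro r hr
  rcases hr with ⟨i, h1, h2, rfl⟩ | ⟨i, j, h1, h2, h3, rfl⟩ | ⟨i, hi, rfl⟩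
  · have e1 : fgen n i = gen i := if_pos ⟨h1, by omega⟩
    have e2 : fgen n (i+1) = gen (i+1) := if_pos ⟨by omega, by omega⟩
    simp only [map_mul, map_inv, FreeGroup.lift_apply_of, e1, e2]
    rw [mul_inv_eq_one]
    exact gen_braid i
  · have e1 : fgen n i = gen i := if_pos ⟨h1, by omega⟩
    have e2 : fgen n j = gen j := if_pos ⟨by omega, by omega⟩
    simp only [map_mul, map_inv, FreeGroup.lift_apply_of, e1, e2]
    rw [mul_inv_eq_one]
    exact gen_comm i j h2
  · have e1 : fgen n i = 1 := if_neg (by omega)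
    simp only [FreeGroup.lift_apply_of, e1]

noncomputable def φ (n : ℕ) : B (n + 2) →* G := PresentedGroup.toGroup (hrels n)

lemma φ_of (n i : ℕ) : φ n (σb (n + 2) i) = fgen n i := PresentedGroup.toGroup.of (hrels n)

lemma φ_word (n : ℕ) (l : List ℕ) : φ n (word (n + 2) l) = ((l.map (fgen n)).prod) := by
  unfold word
  rw [MonoidHom.map_list_prod, List.map_map]
  congr 1
  simp [Function.comp, φ_of]

section Block

def Pblk (n : ℕ) (g : G) : Prop :=
  (∀ x, x ≤ n ↔ g.s x ≤ n) ∧ ∀ a b : ℕ, a ≤ n → ¬ b ≤ n → g.v s(a, b) = 0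

lemma Pblk_one (n : ℕ) : Pblk n 1 := by
  constructor
  · intro x; rfl
  · intro a b _ _; rfl

lemma Pblk_mul (n : ℕ) {g h : G} (hg : Pblk n g) (hh : Pblk n h) : Pblk n (g * h) := by
  constructor
  · intro x
    rw [hh.1 x, G.mul_s, Equiv.Perm.mul_apply]
    exact hg.1 _
  · intro a b ha hb
    rw [G.mul_v, hg.2 a b ha hb, Sym2.map_pair_eq]
    have h1 : g.s.symm a ≤ n := by
      rw [hg.1 (g.s.symm a), Equiv.apply_symm_apply]; exact ha
    have h2 : ¬ g.s.symm b ≤ n := by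
      rw [hg.1 (g.s.symm b), Equiv.apply_symm_apply]; exact hb
    rw [hh.2 _ _ h1 h2]
    ring

lemma Pblk_pow (n : ℕ) {g : G} (hg : Pblk n g) (M : ℕ) : Pblk n (g ^ M) := by
  induction M with
  | zero => simpa using Pblk_one n
  | succ M ih => rw [pow_succ]; exact Pblk_mul n ih hg

lemma Pblk_prod (n : ℕ) (L : List G) (h : ∀ g ∈ L, Pblk n g) : Pblk n L.prod := by
  induction L with
  | nil => simpa using Pblk_one n
  | cons a L ih =>
    rw [List.prod_cons]
    exact Pblk_mul n (h a (by simp)) (ih fun g hg => h g (by simp [hg]))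

lemma Pblk_gen (n i : ℕ) (h : i + 1 ≤ n ∨ n + 1 ≤ i) : Pblk n (gen i) := by
  constructor
  · intro x
    rw [gen_s, Equiv.swap_apply_def]
    split_ifs <;> omega
  · intro a b ha hb
    rw [gen_v]
    unfold e
    rw [if_neg]
    rw [Sym2.eq_iff]
    omega

def Ssupp (n : ℕ) (g : G) : Prop :=
  (∀ x, n + 1 ≤ x → g.s x = x) ∧ ∀ a b : ℕ, n + 1 ≤ a ∨ n + 1 ≤ b → g.v s(a, b) = 0

lemma Ssupp_symm_fix (n : ℕ) {g : G} (hg : Ssupp n g) (x : ℕ) (hx : n + 1 ≤ x) :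
    g.s.symm x = x := by
  have := hg.1 x hx
  conv_lhs => rw [← this]
  exact Equiv.symm_apply_apply _ _

lemma Ssupp_one (n : ℕ) : Ssupp n 1 := by
  exact ⟨fun x _ => rfl, fun a b _ => rfl⟩

lemma Ssupp_mul (n : ℕ) {g h : G} (hg : Ssupp n g) (hh : Ssupp n h) : Ssupp n (g * h) := by
  constructor
  · intro x hx
    rw [G.mul_s, Equiv.Perm.mul_apply, hh.1 x hx, hg.1 x hx]
  · intro a b hab
    rw [G.mul_v, hg.2 a b hab, Sym2.map_pair_eq]
    have : h.v s(g.s.symm a, g.s.symm b) = 0 := by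
      apply hh.2
      rcases hab with h1 | h1
      · exact Or.inl (by rw [Ssupp_symm_fix n hg a h1]; exact h1)
      · exact Or.inr (by rw [Ssupp_symm_fix n hg b h1]; exact h1)
    rw [this]; ring

lemma Ssupp_pow (n : ℕ) {g : G} (hg : Ssupp n g) (M : ℕ) : Ssupp n (g ^ M) := by
  induction M with
  | zero => simpa using Ssupp_one n
  | succ M ih => rw [pow_succ]; exact Ssupp_mul n ih hg

lemma Ssupp_prod (n : ℕ) (L : List G) (h : ∀ g ∈ L, Ssupp n g) : Ssupp n L.prod := by
  induction L with
  | nil => simpa using Ssupp_one n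
  | cons a L ih =>
    rw [List.prod_cons]
    exact Ssupp_mul n (h a (by simp)) (ih fun g hg => h g (by simp [hg]))

lemma Ssupp_gen (n i : ℕ) (h : i + 1 ≤ n) : Ssupp n (gen i) := by
  constructor
  · intro x hx
    rw [gen_s]
    exact Equiv.swap_apply_of_ne_of_ne (by omega) (by omega)
  · intro a b hab
    rw [gen_v]
    unfold e
    rw [if_neg]
    rw [Sym2.eq_iff]
    omega

lemma pow_fix (g : G) (p : Sym2 ℕ) (hg : Sym2.map g.s.symm p = p) (M : ℕ) :
    Sym2.map (g ^ M).s.symm p = p ∧ (g ^ M).v p = M * g.v p := by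
  induction M with
  | zero =>
    constructor
    · show Sym2.map (1 : G).s.symm p = p
      rw [G.one_s]
      induction p using Sym2.ind with
      | _ x y => rfl
    · show (1 : G).v p = 0 * g.v p
      rw [G.one_v]; ring
  | succ M ih =>
    rw [pow_succ]
    constructor
    · rw [G.mul_s, G.map_mul_symm, ih.1, hg]
    · rw [G.mul_v, ih.1, ih.2]
      push_cast
      ring

end Block

section Delta

def cyc (t : ℕ) : Equiv.Perm ℕ where
  toFun x := if x = 1 then t + 1 else if 2 ≤ x ∧ x ≤ t + 1 then x - 1 else x
  invFun y := if y = t + 1 then 1 else if 1 ≤ y ∧ y ≤ t then y + 1 else y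
  left_inv := by intro x; simp only []; split_ifs <;> omega
  right_inv := by intro y; simp only []; split_ifs <;> omega

def rev (t : ℕ) : Equiv.Perm ℕ where
  toFun x := if 1 ≤ x ∧ x ≤ t + 1 then t + 2 - x else x
  invFun x := if 1 ≤ x ∧ x ≤ t + 1 then t + 2 - x else x
  left_inv := by intro x; simp only []; split_ifs <;> omega
  right_inv := by intro x; simp only []; split_ifs <;> omega

@[simp] lemma cyc_apply (t x : ℕ) :
    cyc t x = if x = 1 then t + 1 else if 2 ≤ x ∧ x ≤ t + 1 then x - 1 else x := rfl

@[simp] lemma rev_apply (t x : ℕ) :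
    rev t x = if 1 ≤ x ∧ x ≤ t + 1 then t + 2 - x else x := rfl

lemma rev_symm (t : ℕ) : (rev t).symm = rev t := rfl

def uu (t : ℕ) : Sym2 ℕ → ℤ :=
  Sym2.lift ⟨fun a b => if (1 ≤ a ∧ a ≤ t ∧ b = t + 1) ∨ (1 ≤ b ∧ b ≤ t ∧ a = t + 1)
      then 1 else 0, fun a b => if_congr or_comm rfl rfl⟩

@[simp] lemma uu_mk (t a b : ℕ) :
    uu t s(a, b) = if (1 ≤ a ∧ a ≤ t ∧ b = t + 1) ∨ (1 ≤ b ∧ b ≤ t ∧ a = t + 1)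
      then 1 else 0 := rfl

def vvv (t : ℕ) : Sym2 ℕ → ℤ :=
  Sym2.lift ⟨fun a b => if 1 ≤ a ∧ a ≤ t + 1 ∧ 1 ≤ b ∧ b ≤ t + 1 ∧ a ≠ b then 1 else 0,
    fun a b => if_congr (by tauto) rfl rfl⟩

@[simp] lemma vvv_mk (t a b : ℕ) :
    vvv t s(a, b) = if 1 ≤ a ∧ a ≤ t + 1 ∧ 1 ≤ b ∧ b ≤ t + 1 ∧ a ≠ b then 1 else 0 := rfl

def Gt (t : ℕ) : G := ⟨uu t, cyc t⟩
def Dt (t : ℕ) : G := ⟨vvv t, rev t⟩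

lemma Gt_zero : Gt 0 = 1 := by
  refine G.ext' ?_ ?_
  · funext p
    induction p using Sym2.ind with
    | _ x y =>
      show uu 0 s(x, y) = (1 : G).v s(x, y)
      rw [G.one_v, uu_mk, if_neg (by omega)]
  · ext x
    show cyc 0 x = (1 : G).s x
    rw [G.one_s, cyc_apply]
    simp only [Equiv.Perm.coe_one, id_eq]
    split_ifs <;> omega

lemma Dt_zero : Dt 0 = 1 := by
  refine G.ext' ?_ ?_
  · funext p
    induction p using Sym2.ind with
    | _ x y =>
      show vvv 0 s(x, y) = (1 : G).v s(x, y)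
      rw [G.one_v, vvv_mk, if_neg (by omega)]
  · ext x
    show rev 0 x = (1 : G).s x
    rw [G.one_s, rev_apply]
    simp only [Equiv.Perm.coe_one, id_eq]
    split_ifs <;> omega

lemma Gt_step (t : ℕ) : Gt (t + 1) = gen (t + 1) * Gt t := by
  refine G.ext' ?_ ?_
  · funext p
    induction p using Sym2.ind with
    | _ x y =>
      show uu (t+1) s(x, y) = (e s(t+1, t+2)) s(x,y) + uu t (Sym2.map (Equiv.swap (t+1) (t+2)).symm s(x, y))
      simp only [Equiv.symm_swap, Sym2.map_pair_eq, uu_mk, e, Sym2.eq_iff,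
        Equiv.swap_apply_def]
      split_ifs <;> omega
  · show cyc (t + 1) = Equiv.swap (t+1) (t+2) * cyc t
    ext x
    simp only [cyc_apply, Equiv.Perm.mul_apply, Equiv.swap_apply_def]
    split_ifs <;> omega

lemma Dt_step (t : ℕ) : Dt (t + 1) = Dt t * Gt (t + 1) := by
  refine G.ext' ?_ ?_
  · funext p
    induction p using Sym2.ind with
    | _ x y =>
      show vvv (t+1) s(x, y) = vvv t s(x,y) + uu (t+1) (Sym2.map (rev t).symm s(x, y))
      simp only [rev_symm, Sym2.map_pair_eq, vvv_mk, uu_mk, rev_apply]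
      split_ifs <;> omega
  · show rev (t + 1) = rev t * cyc (t + 1)
    ext x
    simp only [rev_apply, cyc_apply, Equiv.Perm.mul_apply]
    split_ifs <;> omega

lemma descList_succ (t : ℕ) : descList (t + 1) 1 = (t + 1) :: descList t 1 := by
  unfold descList
  have h1 : t + 1 + 1 - 1 = t + 1 := by omega
  have h2 : t + 1 - 1 = t := by omega
  rw [h1, h2, List.range'_concat, List.reverse_append]
  simp [Nat.add_comm]

lemma prod_descList (n t : ℕ) (ht : t ≤ n + 1) :
    ((descList t 1).map (fgen n)).prod = Gt t := by
  induction t with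
  | zero =>
    show ((([] : List ℕ)).map (fgen n)).prod = Gt 0
    rw [Gt_zero]
    simp
  | succ t ih =>
    rw [descList_succ, List.map_cons, List.prod_cons, ih (by omega), Gt_step,
      show fgen n (t+1) = gen (t+1) from if_pos ⟨by omega, by omega⟩]

lemma prod_blocks (n t : ℕ) (ht : t ≤ n + 1) :
    (((((List.range' 1 t).map fun s => descList s 1)).flatten).map (fgen n)).prod = Dt t := by
  induction t with
  | zero => simpa using Dt_zero.symm
  | succ t ih =>
    rw [List.range'_concat, List.map_append, List.flatten_append, List.map_append,
      List.prod_append, ih (by omega)]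
    have : 1 + 1 * t = t + 1 := by omega
    rw [this]
    simp only [List.map_cons, List.map_nil, List.flatten_cons, List.flatten_nil,
      List.append_nil]
    rw [prod_descList n (t+1) ht, Dt_step]

lemma φ_Delta (n : ℕ) : φ n (DeltaB (n + 2)) = Dt (n + 1) := by
  unfold DeltaB
  rw [φ_word]
  have : n + 2 - 1 = n + 1 := by omega
  rw [this]
  exact prod_blocks n (n+1) le_rfl

end Delta

section Final

lemma rev_invol (t : ℕ) : rev t * rev t = 1 := by
  ext x
  simp only [Equiv.Perm.mul_apply, rev_apply, Equiv.Perm.coe_one, id_eq]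
  split_ifs <;> omega

lemma map_one_symm (p : Sym2 ℕ) : Sym2.map ((1 : Equiv.Perm ℕ)).symm p = p := by
  induction p using Sym2.ind with
  | _ x y => rfl

noncomputable def em : Multiplicative (Sym2 ℕ → ℤ) →* G where
  toFun w := ⟨Multiplicative.toAdd w, 1⟩
  map_one' := rfl
  map_mul' w w' := by
    refine G.ext' ?_ ?_
    · funext q
      show Multiplicative.toAdd (w * w') q
        = Multiplicative.toAdd w q + Multiplicative.toAdd w' (Sym2.map ((1 : Equiv.Perm ℕ)).symm q)
      rw [map_one_symm]
      rfl
    · show (1 : Equiv.Perm ℕ) = 1 * 1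
      rw [one_mul]

lemma em_v (w : Sym2 ℕ → ℤ) (q : Sym2 ℕ) : (em (Multiplicative.ofAdd w)).v q = w q := rfl

lemma Dt_v (t : ℕ) : (Dt t).v = vvv t := rfl
lemma Dt_s (t : ℕ) : (Dt t).s = rev t := rfl

end Final

end S12
/-- no positive power of `β` is a power of `Δ_{n+2}`; in particular `β` is not
periodic. -/
theorem statement12 (n k : ℕ) (hn : 3 ≤ n) (hk : 1 ≤ k)
    (ι : B n →* B (n + 2))
    (hι : ∀ idx : ℕ, 1 ≤ idx → idx ≤ n - 1 → ι (σb n idx) = σb (n + 2) idx) :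
    ∀ β : B (n + 2), β = ι (deltaB n) ^ (n * k + 1) * (σb (n + 2) (n + 1)) ^ (4 * k + 1) →
      ∀ m : ℕ, 1 ≤ m → ∀ j : ℤ, β ^ m ≠ (DeltaB (n + 2)) ^ j := by
  intro β hβ m hm j hEq
  -- image of ι δ
  have hWform : ι (deltaB n) = word (n + 2) (List.range' 1 (n - 1)) := by
    unfold deltaB word
    rw [MonoidHom.map_list_prod, List.map_map]
    congr 1
    apply List.map_congr_left
    intro i hi
    obtain ⟨t, ht, rfl⟩ := List.mem_range'.mp hi
    exact hι _ (by omega) (by omega)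
  set W := S12.φ n (ι (deltaB n)) with hWdef
  have hW : W = ((List.range' 1 (n - 1)).map (S12.fgen n)).prod := by
    rw [hWdef, hWform, S12.φ_word]
  have hWS : S12.Ssupp n W := by
    rw [hW]
    apply S12.Ssupp_prod
    intro g hg
    simp only [List.mem_map] at hg
    obtain ⟨i, hi, rfl⟩ := hg
    obtain ⟨t, ht, rfl⟩ := List.mem_range'.mp hi
    rw [show S12.fgen n (1 + 1 * t) = S12.gen (1 + 1 * t) from if_pos ⟨by omega, by omega⟩]
    exact S12.Ssupp_gen n _ (by omega)
  have hWP : S12.Pblk n W := by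
    rw [hW]
    apply S12.Pblk_prod
    intro g hg
    simp only [List.mem_map] at hg
    obtain ⟨i, hi, rfl⟩ := hg
    obtain ⟨t, ht, rfl⟩ := List.mem_range'.mp hi
    rw [show S12.fgen n (1 + 1 * t) = S12.gen (1 + 1 * t) from if_pos ⟨by omega, by omega⟩]
    exact S12.Pblk_gen n _ (by omega)
  have hgN : S12.φ n (σb (n + 2) (n + 1)) = S12.gen (n + 1) := by
    rw [S12.φ_of]
    exact if_pos ⟨by omega, by omega⟩
  set A := S12.φ n β with hAdef
  have hAform : A = W ^ (n * k + 1) * (S12.gen (n + 1)) ^ (4 * k + 1) := by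
    rw [hAdef, hβ, map_mul, map_pow, map_pow, hgN, hWdef]
  have hPA : S12.Pblk n A := by
    rw [hAform]
    exact S12.Pblk_mul n (S12.Pblk_pow n hWP _)
      (S12.Pblk_pow n (S12.Pblk_gen n (n + 1) (by omega)) _)
  -- fixed pair p' = s(n+1, n+2)
  have hgenfix : Sym2.map (S12.gen (n + 1)).s.symm s(n + 1, n + 2) = s(n + 1, n + 2) := by
    rw [S12.gen_s, Equiv.symm_swap, Sym2.map_pair_eq, Equiv.swap_apply_left,
      Equiv.swap_apply_right]
    exact Sym2.eq_swap
  have hXS : S12.Ssupp n (W ^ (n * k + 1)) := S12.Ssupp_pow n hWS _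
  have hXfix : Sym2.map ((W ^ (n * k + 1)).s).symm s(n + 1, n + 2) = s(n + 1, n + 2) := by
    rw [Sym2.map_pair_eq, S12.Ssupp_symm_fix n hXS (n + 1) le_rfl,
      S12.Ssupp_symm_fix n hXS (n + 2) (by omega)]
  have hgenpow := S12.pow_fix (S12.gen (n + 1)) s(n + 1, n + 2) hgenfix (4 * k + 1)
  have hgenv : (S12.gen (n + 1)).v s(n + 1, n + 2) = 1 := if_pos rfl
  have hAv : A.v s(n + 1, n + 2) = ((4 * k + 1 : ℕ) : ℤ) := by
    rw [hAform, S12.G.mul_v, hXS.2 (n + 1) (n + 2) (Or.inl le_rfl), hXfix, hgenpow.2, hgenv]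
    ring
  have hAfix : Sym2.map (A.s).symm s(n + 1, n + 2) = s(n + 1, n + 2) := by
    rw [hAform, S12.G.mul_s, S12.G.map_mul_symm, hXfix, hgenpow.1]
  -- Delta side
  have hD : S12.φ n (DeltaB (n + 2)) = S12.Dt (n + 1) := S12.φ_Delta n
  set D := S12.Dt (n + 1) with hDdef
  have hZs : (D * D).s = 1 := by
    rw [S12.G.mul_s, hDdef, S12.Dt_s]
    exact S12.rev_invol (n + 1)
  have hZ : D * D = S12.em (Multiplicative.ofAdd ((D * D).v)) := S12.G.ext' rfl hZs
  have h1 : A ^ m = (S12.φ n (DeltaB (n + 2))) ^ j := by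
    rw [hAdef, ← map_pow, hEq, map_zpow]
  have h2 : A ^ (m * 2) = (D * D) ^ j := by
    rw [pow_mul, h1, hD, sq, (Commute.refl D).mul_zpow]
  have hzpow : (D * D) ^ j = S12.em (Multiplicative.ofAdd (j • (D * D).v)) := by
    conv_lhs => rw [hZ]
    rw [← map_zpow, ← ofAdd_zsmul]
  have hv : (A ^ (m * 2)).v = j • (D * D).v := by
    rw [h2, hzpow]
    rfl
  have hwp : (D * D).v s(1, n + 2) = 2 := by
    rw [S12.G.mul_v, hDdef, S12.Dt_v, S12.Dt_s, S12.rev_symm, Sym2.map_pair_eq]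
    simp only [S12.vvv_mk, S12.rev_apply]
    split_ifs <;> omega
  have hwp' : (D * D).v s(n + 1, n + 2) = 2 := by
    rw [S12.G.mul_v, hDdef, S12.Dt_v, S12.Dt_s, S12.rev_symm, Sym2.map_pair_eq]
    simp only [S12.vvv_mk, S12.rev_apply]
    split_ifs <;> omega
  have e1 : (0 : ℤ) = j * 2 := by
    have h0 : (A ^ (m * 2)).v s(1, n + 2) = 0 :=
      (S12.Pblk_pow n hPA (m * 2)).2 1 (n + 2) (by omega) (by omega)
    rw [hv] at h0
    rw [← h0]
    simp only [Pi.smul_apply, hwp, smul_eq_mul]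
  have e2 : ((m * 2 : ℕ) : ℤ) * ((4 * k + 1 : ℕ) : ℤ) = j * 2 := by
    have h0 := (S12.pow_fix A s(n + 1, n + 2) hAfix (m * 2)).2
    rw [hAv, hv] at h0
    rw [← h0]
    simp only [Pi.smul_apply, hwp', smul_eq_mul]
  have hj : j = 0 := by omega
  rw [hj, zero_mul] at e2
  have h3 : (m * 2) * (4 * k + 1) = 0 := by exact_mod_cast e2
  rcases Nat.mul_eq_zero.mp h3 with h4 | h4 <;> omega
end

section
/- Let n ≥ 3, r ≥ 1, and let (s_1,…,s_r) be a left-weighted sequence of proper simple factors in B_n. Then in B_{n+2} the sequence of r+2 elements (ι(Δ_n)σ_{n+1}, ι(s_1)σ_{n+1}, ι(s_2)σ_{n+1}, …, ι(s_r)σ_{n+1}, σ_{n+1}) is a left-weighted sequence of proper simple factors, and its product equals ι(Δ_n s_1 s_2 ⋯ s_r) σ_{n+1}^{r+2}. -/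
-- ### basic relations
lemma relquot {m : ℕ} {r : FreeGroup ℕ} (h : r ∈ braidRels m) :
    PresentedGroup.mk (braidRels m) r = 1 := by
  apply (QuotientGroup.eq_one_iff _).2
  exact Subgroup.subset_normalClosure h

lemma mk_of {m : ℕ} (i : ℕ) : PresentedGroup.mk (braidRels m) (FreeGroup.of i) = σb m i := rfl

lemma braid_rel {m i : ℕ} (h1 : 1 ≤ i) (h2 : i + 2 ≤ m) :
    σb m i * σb m (i+1) * σb m i = σb m (i+1) * σb m i * σb m (i+1) := by
  have := relquot (m := m) (r := FreeGroup.of i * FreeGroup.of (i + 1) * FreeGroup.of i *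
              (FreeGroup.of (i + 1) * FreeGroup.of i * FreeGroup.of (i + 1))⁻¹)
    (Or.inl ⟨i, h1, h2, rfl⟩)
  simp only [map_mul, map_inv, mk_of] at this
  rw [mul_inv_eq_one] at this
  exact this

lemma comm_rel {m i j : ℕ} (h1 : 1 ≤ i) (h2 : i + 2 ≤ j) (h3 : j + 1 ≤ m) :
    σb m i * σb m j = σb m j * σb m i := by
  have := relquot (m := m) (r := FreeGroup.of i * FreeGroup.of j *
      (FreeGroup.of j * FreeGroup.of i)⁻¹) (Or.inr (Or.inl ⟨i, j, h1, h2, h3, rfl⟩))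
  simp only [map_mul, map_inv, mk_of] at this
  rw [mul_inv_eq_one] at this
  exact this

lemma σb_one {m i : ℕ} (h : i = 0 ∨ m ≤ i) : σb m i = 1 :=
  relquot (Or.inr (Or.inr ⟨i, h, rfl⟩))


-- ### words and positivity
lemma word_nil {m : ℕ} : word m [] = 1 := rfl
lemma word_cons {m : ℕ} (a : ℕ) (l : List ℕ) : word m (a :: l) = σb m a * word m l := by
  simp [word]
lemma word_append {m : ℕ} (l l' : List ℕ) : word m (l ++ l') = word m l * word m l' := by
  simp [word]
lemma σb_pos {m i : ℕ} : σb m i ∈ Bpos m := by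
  rcases Nat.lt_or_ge i 1 with h | h
  · interval_cases i
    · rw [σb_one (Or.inl rfl)]; exact one_mem _
  rcases Nat.lt_or_ge i m with h2 | h2
  · exact Submonoid.subset_closure ⟨i, h, by omega, rfl⟩
  · rw [σb_one (Or.inr h2)]; exact one_mem _
lemma word_pos {m : ℕ} (l : List ℕ) : word m l ∈ Bpos m := by
  induction l with
  | nil => exact one_mem _
  | cons a l ih => rw [word_cons]; exact mul_mem σb_pos ih
lemma Bpos_le_word {m : ℕ} {x : B m} (h : x ∈ Bpos m) :
    ∃ l : List ℕ, (∀ a ∈ l, 1 ≤ a ∧ a ≤ m - 1) ∧ x = word m l := by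
  induction h using Submonoid.closure_induction with
  | mem x hx => obtain ⟨i, h1, h2, rfl⟩ := hx; exact ⟨[i], by simp [h1, h2], by simp [word_cons, word_nil]⟩
  | one => exact ⟨[], by simp, rfl⟩
  | mul x y _ _ hx hy =>
      obtain ⟨l, hl, rfl⟩ := hx; obtain ⟨l', hl', rfl⟩ := hy
      exact ⟨l ++ l', by intro a ha; rcases List.mem_append.1 ha with h | h; exacts [hl a h, hl' a h],
        (word_append l l').symm⟩

-- ### generation
lemma B_induction {m : ℕ} {C : B m → Prop} (x : B m) (h1 : C 1)
    (hof : ∀ i, C (σb m i)) (hinv : ∀ x, C x → C x⁻¹)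
    (hmul : ∀ x y, C x → C y → C (x * y)) : C x := by
  have : x ∈ Subgroup.closure (Set.range (PresentedGroup.of (rels := braidRels m))) := by
    rw [PresentedGroup.closure_range_of]; trivial
  induction this using Subgroup.closure_induction with
  | mem x hx => obtain ⟨i, rfl⟩ := hx; exact hof i
  | one => exact h1
  | inv x _ hx => exact hinv x hx
  | mul x y _ _ hx hy => exact hmul x y hx hy

lemma hom_ext {m : ℕ} {G : Type*} [Group G] {φ ψ : B m →* G}
    (h : ∀ i, φ (σb m i) = ψ (σb m i)) : φ = ψ := PresentedGroup.ext h

-- ### commute lemmas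
lemma commute_σb_word {m j : ℕ} {l : List ℕ} (h : ∀ a ∈ l, a + 2 ≤ j) :
    Commute (σb m j) (word m l) := by
  induction l with
  | nil => rw [word_nil]; exact Commute.one_right _
  | cons a l ih =>
      rw [word_cons]
      refine Commute.mul_right ?_ (ih fun a ha => h a (List.mem_cons_of_mem _ ha))
      have ha := h a (List.mem_cons_self)
      rcases Nat.lt_or_ge a 1 with h0 | h0
      · interval_cases a; rw [σb_one (Or.inl rfl)]; exact Commute.one_right _
      rcases Nat.lt_or_ge j m with hj | hj
      · exact (comm_rel h0 ha (by omega)).symm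
      · rw [σb_one (Or.inr hj)]; exact Commute.one_left _
-- ### descList and blocks
lemma descList_zero : descList 0 1 = [] := by simp [descList]
lemma descList_succ_cons (t : ℕ) : descList (t+1) 1 = (t+1) :: descList t 1 := by
  simp only [descList, Nat.add_sub_cancel]
  rw [List.range'_concat]
  simp only [one_mul, List.reverse_append, List.reverse_cons, List.reverse_nil,
    List.nil_append, List.singleton_append]
  rw [Nat.add_comm 1 t]
lemma descList_concat_one (t : ℕ) (h : 1 ≤ t) : descList t 1 = descList t 2 ++ [1] := by
  simp only [descList]
  obtain ⟨s, rfl⟩ := Nat.exists_eq_add_of_le h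
  rw [show 1 + s + 1 - 1 = s + 1 by omega, List.range'_succ]
  simp [Nat.add_comm 1 s]
lemma mem_descList {a t : ℕ} (h : a ∈ descList t 1) : 1 ≤ a ∧ a ≤ t := by
  simp only [descList, List.mem_reverse, List.mem_range'_1] at h
  omega

lemma garside_aux {G : Type*} [Group G] {x y u v : G} (hb : x*y*x = y*x*y)
    (hc : y*u = u*y) : y⁻¹ * (x*u*(y*v)) = x*y*(x⁻¹*(u*v)) := by
  have h1 : y⁻¹*(x*y) = x*y*x⁻¹ := by
    have h := congrArg (fun z => y⁻¹ * z * x⁻¹) hb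
    simpa [mul_assoc] using h
  have h3 : x*u*(y*v) = x*y*(u*v) := by
    have e : x*u*(y*v) = x*(u*y)*v := by group
    rw [e, ← hc]
    group
  calc y⁻¹ * (x*u*(y*v)) = y⁻¹*((x*y)*(u*v)) := by rw [h3]
    _ = (y⁻¹*(x*y))*(u*v) := by group
    _ = x*y*x⁻¹*(u*v) := by rw [h1]
    _ = x*y*(x⁻¹*(u*v)) := by group

def bw (m t : ℕ) : B m := word m (descList t 1)
lemma bw_zero {m : ℕ} : bw m 0 = 1 := by rw [bw, descList_zero, word_nil]
lemma bw_succ {m : ℕ} (t : ℕ) : bw m (t+1) = σb m (t+1) * bw m t := by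
  rw [bw, descList_succ_cons, word_cons]; rfl
lemma bw_pos {m t : ℕ} : bw m t ∈ Bpos m := word_pos _

def DkList (k : ℕ) : List ℕ := ((List.range' 1 k).map fun t => descList t 1).flatten
def Dk (m k : ℕ) : B m := word m (DkList k)
lemma DeltaB_eq_Dk {m : ℕ} : DeltaB m = Dk m (m-1) := rfl
lemma Dk_zero {m : ℕ} : Dk m 0 = 1 := rfl
lemma Dk_succ {m : ℕ} (k : ℕ) : Dk m (k+1) = Dk m k * bw m (k+1) := by
  rw [Dk, DkList, List.range'_concat]
  simp only [one_mul, List.map_append, List.flatten_append, word_append, List.map_cons,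
    List.map_nil, List.flatten_cons, List.flatten_nil, List.append_nil]
  rw [Nat.add_comm 1 k]
  rfl
lemma Dk_pos {m k : ℕ} : Dk m k ∈ Bpos m := word_pos _
lemma mem_DkList {a k : ℕ} (h : a ∈ DkList k) : 1 ≤ a ∧ a ≤ k := by
  simp only [DkList, List.mem_flatten, List.mem_map] at h
  obtain ⟨_, ⟨t, ht, rfl⟩, ha⟩ := h
  have := mem_descList ha
  simp only [List.mem_range'_1] at ht
  omega

lemma commute_σb_bw {m j t : ℕ} (h : t + 2 ≤ j) : Commute (σb m j) (bw m t) :=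
  commute_σb_word (fun a ha => by have := mem_descList ha; omega)
lemma commute_σb_Dk {m j k : ℕ} (h : k + 2 ≤ j) : Commute (σb m j) (Dk m k) :=
  commute_σb_word (fun a ha => by have := mem_DkList ha; omega)

-- ρ-commutation: σ_i (σ_t ⋯ σ_1) = (σ_t ⋯ σ_1) σ_{i+1}  for 1 ≤ i, i+1 ≤ t, t+1 ≤ m
lemma RC {m : ℕ} : ∀ t i : ℕ, 1 ≤ i → i + 1 ≤ t → t + 1 ≤ m →
    σb m i * bw m t = bw m t * σb m (i+1) := by
  intro t
  induction t with
  | zero => intro i h1 h2; omega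
  | succ t ih =>
      intro i h1 h2 hm
      rcases Nat.lt_or_ge (i+1) (t+1) with hlt | hge
      · -- i + 1 ≤ t
        rw [bw_succ, ← mul_assoc, comm_rel h1 (by omega) hm, mul_assoc,
          ih i h1 (by omega) (by omega)]
        group
      · -- i = t
        have hit : t = i := by omega
        subst hit
        obtain ⟨s, rfl⟩ := Nat.exists_eq_add_of_le h1
        rw [Nat.add_comm 1 s]
        have hc : Commute (σb m (s+1+1)) (bw m s) := commute_σb_bw (by omega)
        rw [bw_succ, bw_succ, ← mul_assoc, ← mul_assoc, braid_rel (by omega) (by omega),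
          mul_assoc, mul_assoc, hc.eq]
        group

-- C-lemma
lemma CL {m : ℕ} : ∀ k, 1 ≤ k → k + 1 ≤ m →
    (σb m k)⁻¹ * (bw m (k-1) * bw m k) ∈ Bpos m := by
  intro k
  induction k with
  | zero => omega
  | succ k ih =>
      intro _ hm
      rcases Nat.lt_or_ge k 1 with hk | hk
      · -- k = 0 : σ_1⁻¹ * (bw 0 * bw 1) = 1
        interval_cases k
        simp only [Nat.add_sub_cancel, bw_zero, one_mul, bw_succ, bw_zero, mul_one]
        rw [inv_mul_cancel]; exact one_mem _
      · -- k ≥ 1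
        have e1 : bw m (k+1-1) = σb m k * bw m (k-1) := by
          rw [Nat.add_sub_cancel]
          obtain ⟨s, rfl⟩ := Nat.exists_eq_add_of_le hk
          rw [Nat.add_comm 1 s, bw_succ]; rfl
        have e2 : bw m (k+1) = σb m (k+1) * bw m k := bw_succ k
        rw [e1, e2]
        have hc : Commute (σb m (k+1)) (bw m (k-1)) := commute_σb_bw (by omega)
        have hb := braid_rel (m := m) (i := k) hk (by omega)
        have key : (σb m (k+1))⁻¹ * (σb m k * bw m (k-1) * (σb m (k+1) * bw m k))
            = σb m k * σb m (k+1) * ((σb m k)⁻¹ * (bw m (k-1) * bw m k)) :=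
          garside_aux hb hc.eq
        rw [key]
        exact mul_mem (mul_mem σb_pos σb_pos) (ih hk (by omega))

-- S(Δ) : σ_j ≼ Dk k
lemma SD {m : ℕ} : ∀ k, k + 1 ≤ m → ∀ j, 1 ≤ j → j ≤ k →
    (σb m j)⁻¹ * Dk m k ∈ Bpos m := by
  intro k
  induction k with
  | zero => omega
  | succ k ih =>
      intro hm j h1 h2
      rcases Nat.lt_or_ge j (k+1) with hlt | hge
      · rw [Dk_succ, ← mul_assoc]
        exact mul_mem (ih (by omega) j h1 (by omega)) bw_pos
      · have : j = k + 1 := by omega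
        subst this
        rcases Nat.lt_or_ge k 1 with hk | hk
        · interval_cases k
          rw [Dk_succ, Dk_zero, one_mul, bw_succ, bw_zero, mul_one, inv_mul_cancel]
          exact one_mem _
        · have e1 : Dk m (k+1) = Dk m (k-1) * (bw m k * bw m (k+1)) := by
            obtain ⟨s, rfl⟩ := Nat.exists_eq_add_of_le hk
            rw [Nat.add_comm 1 s, Dk_succ, Dk_succ]
            simp only [Nat.add_sub_cancel]
            group
          rw [e1]
          have hc : Commute ((σb m (k+1))⁻¹) (Dk m (k-1)) :=
            (commute_σb_Dk (by omega)).inv_left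
          rw [← mul_assoc, hc.eq, mul_assoc]
          refine mul_mem Dk_pos ?_
          have := CL (m := m) (k+1) (by omega) (by omega)
          simpa using this
lemma FD {m : ℕ} : ∀ k, k + 1 ≤ m → ∀ j, 1 ≤ j → j ≤ k →
    Dk m k * (σb m j)⁻¹ ∈ Bpos m := by
  intro k
  induction k with
  | zero => omega
  | succ k ih =>
      intro hm j h1 h2
      rcases Nat.lt_or_ge j 2 with hj | hj
      · -- j = 1
        interval_cases j
        rw [Dk_succ, bw, descList_concat_one _ (by omega), word_append, mul_assoc]
        have : word m [1] * (σb m 1)⁻¹ = 1 := by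
          rw [word_cons, word_nil, mul_one, mul_inv_cancel]
        rw [mul_assoc, this, mul_one]
        exact mul_mem Dk_pos (word_pos _)
      · -- j ≥ 2
        have hrc := RC (m := m) (k+1) (j-1) (by omega) (by omega) (by omega)
        have hj1 : j - 1 + 1 = j := by omega
        rw [hj1] at hrc
        -- σ_{j-1} bw(k+1) = bw(k+1) σ_j  ⇒  bw(k+1) σ_j⁻¹ = σ_{j-1}⁻¹ bw(k+1)
        have e : bw m (k+1) * (σb m j)⁻¹ = (σb m (j-1))⁻¹ * bw m (k+1) := by
          have h := congrArg (fun z => (σb m (j-1))⁻¹ * z * (σb m j)⁻¹) hrc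
          simpa [mul_assoc] using h
        rw [Dk_succ, mul_assoc, e, ← mul_assoc]
        exact mul_mem (ih (by omega) (j-1) (by omega) (by omega)) bw_pos
-- ### exponent sum homomorphism
def eB (m : ℕ) : B m →* Multiplicative ℤ :=
  PresentedGroup.toGroup (f := fun i => Multiplicative.ofAdd (if 1 ≤ i ∧ i + 1 ≤ m then (1:ℤ) else 0))
    (by
      intro r hr
      rcases hr with ⟨i, h1, h2, rfl⟩ | ⟨i, j, h1, h2, h3, rfl⟩ | ⟨i, hi, rfl⟩
      · simp only [map_mul, map_inv, FreeGroup.lift_apply_of]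
        rw [if_pos (show 1 ≤ i ∧ i + 1 ≤ m by omega),
          if_pos (show 1 ≤ i + 1 ∧ i + 1 + 1 ≤ m by omega)]
        generalize Multiplicative.ofAdd (1:ℤ) = x
        group
      · simp only [map_mul, map_inv, FreeGroup.lift_apply_of]
        generalize Multiplicative.ofAdd (if 1 ≤ i ∧ i + 1 ≤ m then (1:ℤ) else 0) = x
        generalize Multiplicative.ofAdd (if 1 ≤ j ∧ j + 1 ≤ m then (1:ℤ) else 0) = y
        rw [mul_comm x y]
        group
      · simp only [FreeGroup.lift_apply_of]
        rw [if_neg (by omega)]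
        rfl)

lemma eB_σb {m i : ℕ} : eB m (σb m i) = Multiplicative.ofAdd (if 1 ≤ i ∧ i + 1 ≤ m then (1:ℤ) else 0) :=
  PresentedGroup.toGroup.of _

def ec {m : ℕ} (x : B m) : ℤ := Multiplicative.toAdd (eB m x)
lemma ec_mul {m : ℕ} (x y : B m) : ec (x * y) = ec x + ec y := by
  simp [ec, map_mul]
lemma ec_one {m : ℕ} : ec (1 : B m) = 0 := by simp [ec]
lemma ec_inv {m : ℕ} (x : B m) : ec x⁻¹ = - ec x := by simp [ec]
lemma ec_σb {m i : ℕ} : ec (σb m i) = if 1 ≤ i ∧ i + 1 ≤ m then 1 else 0 := by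
  simp [ec, eB_σb]
lemma ec_σb_valid {m i : ℕ} (h1 : 1 ≤ i) (h2 : i + 1 ≤ m) : ec (σb m i) = 1 := by
  rw [ec_σb, if_pos ⟨h1, h2⟩]
lemma ec_nonneg {m : ℕ} {x : B m} (h : x ∈ Bpos m) : 0 ≤ ec x := by
  induction h using Submonoid.closure_induction with
  | mem x hx => obtain ⟨i, h1, h2, rfl⟩ := hx; rw [ec_σb_valid h1 (by omega)]; omega
  | one => rw [ec_one]
  | mul x y _ _ hx hy => rw [ec_mul]; omega

lemma ec_pos_ne_one {m : ℕ} {x : B m} (h : x ∈ Bpos m) (hc : 0 < ec x) : x ≠ 1 := by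
  intro he; rw [he, ec_one] at hc; omega

lemma ec_bw {m t : ℕ} (h : t + 1 ≤ m) : ec (bw m t) = t := by
  induction t with
  | zero => simp [bw_zero, ec_one]
  | succ t ih =>
      rw [bw_succ, ec_mul, ec_σb_valid (by omega) (by omega), ih (by omega)]
      omega
-- ### permutation swap lemmas
lemma swap_conj (π : Equiv.Perm ℕ) (a b : ℕ) :
    π * Equiv.swap a b * π⁻¹ = Equiv.swap (π a) (π b) := (Equiv.swap_apply_apply π a b).symm

lemma swap_braid (i : ℕ) :
    Equiv.swap i (i+1) * Equiv.swap (i+1) (i+2) * Equiv.swap i (i+1)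
      = Equiv.swap (i+1) (i+2) * Equiv.swap i (i+1) * Equiv.swap (i+1) (i+2) := by
  have h1 := swap_conj (Equiv.swap i (i+1)) (i+1) (i+2)
  have h2 := swap_conj (Equiv.swap (i+1) (i+2)) i (i+1)
  rw [Equiv.swap_inv] at h1 h2
  rw [show (Equiv.swap i (i+1)) (i+1) = i from Equiv.swap_apply_right _ _,
    show (Equiv.swap i (i+1)) (i+2) = i+2 from Equiv.swap_apply_of_ne_of_ne (by omega) (by omega)] at h1
  rw [show (Equiv.swap (i+1) (i+2)) i = i from Equiv.swap_apply_of_ne_of_ne (by omega) (by omega),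
    show (Equiv.swap (i+1) (i+2)) (i+1) = i+2 from Equiv.swap_apply_left _ _] at h2
  rw [h1, h2]

lemma swap_comm_far {i j : ℕ} (h : i + 2 ≤ j) :
    Equiv.swap i (i+1) * Equiv.swap j (j+1) = Equiv.swap j (j+1) * Equiv.swap i (i+1) := by
  have h1 := swap_conj (Equiv.swap i (i+1)) j (j+1)
  rw [Equiv.swap_inv,
    show (Equiv.swap i (i+1)) j = j from Equiv.swap_apply_of_ne_of_ne (by omega) (by omega),
    show (Equiv.swap i (i+1)) (j+1) = j+1 from Equiv.swap_apply_of_ne_of_ne (by omega) (by omega)] at h1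
  calc Equiv.swap i (i+1) * Equiv.swap j (j+1)
      = (Equiv.swap i (i+1) * Equiv.swap j (j+1) * Equiv.swap i (i+1)) * (Equiv.swap i (i+1))⁻¹ := by
        group
    _ = Equiv.swap j (j+1) * (Equiv.swap i (i+1))⁻¹ := by rw [h1]
    _ = Equiv.swap j (j+1) * Equiv.swap i (i+1) := by rw [Equiv.swap_inv]


-- ### the linking-number semidirect product
abbrev Lgrp : Type := ℕ × ℕ → Multiplicative ℤ

def permActL : Equiv.Perm ℕ →* MulAut Lgrp where
  toFun π :=
    { toFun := fun f p => f (π⁻¹ p.1, π⁻¹ p.2)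
      invFun := fun f p => f (π p.1, π p.2)
      left_inv := fun f => by funext p; simp
      right_inv := fun f => by funext p; simp
      map_mul' := fun f g => rfl }
  map_one' := by ext f p; simp
  map_mul' := fun π ρ => by ext f p; simp

abbrev Vgrp : Type := Lgrp ⋊[permActL] Equiv.Perm ℕ

def epair (a b : ℕ) : Lgrp :=
  fun p => if (p.1 = a ∧ p.2 = b) ∨ (p.1 = b ∧ p.2 = a) then Multiplicative.ofAdd (1:ℤ) else 1

lemma permActL_epair (π : Equiv.Perm ℕ) (a b : ℕ) :
    permActL π (epair a b) = epair (π a) (π b) := by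
  funext p
  show epair a b (π⁻¹ p.1, π⁻¹ p.2) = _
  simp only [epair]
  congr 1
  simp only [eq_iff_iff]
  constructor
  · rintro (⟨h1, h2⟩ | ⟨h1, h2⟩)
    · exact Or.inl ⟨by rw [← h1]; simp, by rw [← h2]; simp⟩
    · exact Or.inr ⟨by rw [← h1]; simp, by rw [← h2]; simp⟩
  · rintro (⟨h1, h2⟩ | ⟨h1, h2⟩)
    · exact Or.inl ⟨by rw [h1]; simp, by rw [h2]; simp⟩
    · exact Or.inr ⟨by rw [h1]; simp, by rw [h2]; simp⟩

def Φgen (m i : ℕ) : Vgrp :=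
  if 1 ≤ i ∧ i + 1 ≤ m then ⟨epair i (i+1), Equiv.swap i (i+1)⟩ else 1

lemma Vmk_mul (f g : Lgrp) (π ρ : Equiv.Perm ℕ) :
    (⟨f, π⟩ * ⟨g, ρ⟩ : Vgrp) = ⟨f * permActL π g, π * ρ⟩ := rfl

lemma ΦB_rels (m : ℕ) : ∀ r ∈ braidRels m, FreeGroup.lift (Φgen m) r = 1 := by
  intro r hr
  rcases hr with ⟨i, h1, h2, rfl⟩ | ⟨i, j, h1, h2, h3, rfl⟩ | ⟨i, hi, rfl⟩
  · simp only [map_mul, map_inv, FreeGroup.lift_apply_of, mul_inv_eq_one]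
    rw [Φgen, Φgen, if_pos (show 1 ≤ i ∧ i + 1 ≤ m by omega),
      if_pos (show 1 ≤ i + 1 ∧ i + 1 + 1 ≤ m by omega)]
    rw [Vmk_mul, Vmk_mul, Vmk_mul, Vmk_mul, SemidirectProduct.ext_iff]
    constructor
    · -- left components
      dsimp only
      have e1 : Equiv.swap i (i+1) i = i+1 := Equiv.swap_apply_left _ _
      have e2 : Equiv.swap i (i+1) (i+1) = i := Equiv.swap_apply_right _ _
      have e3 : Equiv.swap i (i+1) (i+1+1) = i+1+1 :=
        Equiv.swap_apply_of_ne_of_ne (by omega) (by omega)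
      have e4 : Equiv.swap (i+1) (i+1+1) (i+1) = i+1+1 := Equiv.swap_apply_left _ _
      have e5 : Equiv.swap (i+1) (i+1+1) (i+1+1) = i+1 := Equiv.swap_apply_right _ _
      have e6 : Equiv.swap (i+1) (i+1+1) i = i :=
        Equiv.swap_apply_of_ne_of_ne (by omega) (by omega)
      simp only [map_mul, MulAut.mul_apply, permActL_epair, e1, e2, e3, e4, e5, e6]
      ac_rfl
    · exact swap_braid i
  · simp only [map_mul, map_inv, FreeGroup.lift_apply_of, mul_inv_eq_one]
    rw [Φgen, Φgen, if_pos (show 1 ≤ i ∧ i + 1 ≤ m by omega),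
      if_pos (show 1 ≤ j ∧ j + 1 ≤ m by omega)]
    rw [Vmk_mul, Vmk_mul, SemidirectProduct.ext_iff]
    constructor
    · rw [permActL_epair, permActL_epair]
      have e1 : Equiv.swap i (i+1) j = j := Equiv.swap_apply_of_ne_of_ne (by omega) (by omega)
      have e2 : Equiv.swap i (i+1) (j+1) = j+1 := Equiv.swap_apply_of_ne_of_ne (by omega) (by omega)
      have e3 : Equiv.swap j (j+1) i = i := Equiv.swap_apply_of_ne_of_ne (by omega) (by omega)
      have e4 : Equiv.swap j (j+1) (i+1) = i+1 := Equiv.swap_apply_of_ne_of_ne (by omega) (by omega)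
      rw [e1, e2, e3, e4, mul_comm]
    · exact swap_comm_far h2
  · simp only [FreeGroup.lift_apply_of]
    rw [Φgen, if_neg (by omega)]

def ΦB (m : ℕ) : B m →* Vgrp := PresentedGroup.toGroup (ΦB_rels m)

lemma ΦB_σb {m i : ℕ} : ΦB m (σb m i) = Φgen m i := PresentedGroup.toGroup.of _

lemma ΦB_nonneg {m : ℕ} {x : B m} (h : x ∈ Bpos m) :
    ∀ p : ℕ × ℕ, (0:ℤ) ≤ Multiplicative.toAdd ((ΦB m x).left p) := by
  induction h using Submonoid.closure_induction with
  | mem x hx =>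
      obtain ⟨i, h1, h2, rfl⟩ := hx
      intro p
      rw [ΦB_σb, Φgen, if_pos (by omega)]
      show (0:ℤ) ≤ Multiplicative.toAdd (epair i (i+1) p)
      rw [epair]
      split_ifs <;> simp
  | one => intro p; simp
  | mul x y _ _ hx hy =>
      intro p
      rw [map_mul, SemidirectProduct.mul_left]
      show (0:ℤ) ≤ Multiplicative.toAdd ((ΦB m x).left p *
        (ΦB m y).left ((ΦB m x).right⁻¹ p.1, (ΦB m x).right⁻¹ p.2))
      rw [toAdd_mul]
      have := hx p
      have := hy ((ΦB m x).right⁻¹ p.1, (ΦB m x).right⁻¹ p.2)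
      omega
-- ### Finset action and counting
def actF (π : Equiv.Perm ℕ) (S : Finset ℕ) : Finset ℕ := S.map π.toEmbedding

lemma mem_actF {π : Equiv.Perm ℕ} {S : Finset ℕ} {x : ℕ} :
    x ∈ actF π S ↔ π⁻¹ x ∈ S := Finset.mem_map_equiv

lemma actF_mul (π ρ : Equiv.Perm ℕ) (S : Finset ℕ) :
    actF (π * ρ) S = actF π (actF ρ S) := by
  ext x; simp only [mem_actF, mul_inv_rev, Equiv.Perm.mul_apply]

lemma actF_one (S : Finset ℕ) : actF 1 S = S := by
  ext x; simp [mem_actF]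

lemma mem_actF_swap {a b x : ℕ} {S : Finset ℕ} :
    x ∈ actF (Equiv.swap a b) S ↔ Equiv.swap a b x ∈ S := by
  rw [mem_actF, Equiv.swap_inv]

lemma actF_swap_eq_self {a b : ℕ} {S : Finset ℕ} (ha : a ∉ S) (hb : b ∉ S) :
    actF (Equiv.swap a b) S = S := by
  ext x
  rw [mem_actF_swap]
  rcases eq_or_ne x a with rfl | hxa
  · rw [Equiv.swap_apply_left]; simp [ha, hb]
  rcases eq_or_ne x b with rfl | hxb
  · rw [Equiv.swap_apply_right]; simp [ha, hb]
  · rw [Equiv.swap_apply_of_ne_of_ne hxa hxb]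

def kS (m : ℕ) (S : Finset ℕ) : ℕ := (S.filter (fun s => 1 ≤ s ∧ s ≤ m)).card
def cntS (S : Finset ℕ) (i : ℕ) : ℕ := (S.filter (fun s => 1 ≤ s ∧ s < i)).card

lemma filter_actF (π : Equiv.Perm ℕ) (S : Finset ℕ) (p : ℕ → Prop) [DecidablePred p] :
    (actF π S).filter p = actF π (S.filter (fun x => p (π x))) := by
  rw [actF, Finset.filter_map, actF]
  rfl

lemma kS_actF_swap {m a b : ℕ} (S : Finset ℕ) (ha : 1 ≤ a ∧ a ≤ m) (hb : 1 ≤ b ∧ b ≤ m) :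
    kS m (actF (Equiv.swap a b) S) = kS m S := by
  rw [kS, filter_actF, actF, Finset.card_map, kS]
  congr 1
  apply Finset.filter_congr
  intro x _
  rcases eq_or_ne x a with rfl | hxa
  · rw [Equiv.swap_apply_left]; simp [ha, hb]
  rcases eq_or_ne x b with rfl | hxb
  · rw [Equiv.swap_apply_right]; simp [ha, hb]
  · rw [Equiv.swap_apply_of_ne_of_ne hxa hxb]

lemma cntS_actF_swap {a b t : ℕ} (S : Finset ℕ)
    (hab : (1 ≤ a ∧ a < t) ↔ (1 ≤ b ∧ b < t)) :
    cntS (actF (Equiv.swap a b) S) t = cntS S t := by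
  rw [cntS, filter_actF, actF, Finset.card_map, cntS]
  congr 1
  apply Finset.filter_congr
  intro x _
  rcases eq_or_ne x a with rfl | hxa
  · rw [Equiv.swap_apply_left]; tauto
  rcases eq_or_ne x b with rfl | hxb
  · rw [Equiv.swap_apply_right]; tauto
  · rw [Equiv.swap_apply_of_ne_of_ne hxa hxb]

lemma cntS_le {S : Finset ℕ} {i : ℕ} : cntS S i + 1 ≤ i ∨ cntS S i = 0 := by
  rcases Nat.lt_or_ge 0 i with h | h
  · left
    have hsub : S.filter (fun s => 1 ≤ s ∧ s < i) ⊆ Finset.Ico 1 i := by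
      intro x hx
      simp only [Finset.mem_filter] at hx
      simp only [Finset.mem_Ico]
      omega
    have := Finset.card_le_card hsub
    rw [Nat.card_Ico] at this
    rw [cntS]
    omega
  · right
    rw [cntS]
    convert Finset.card_empty
    rw [Finset.filter_eq_empty_iff]
    intro x _
    omega

lemma cntS_succ (S : Finset ℕ) (i : ℕ) (h1 : 1 ≤ i) :
    cntS S (i+1) = cntS S i + (if i ∈ S then 1 else 0) := by
  rw [cntS, cntS]
  have : S.filter (fun s => 1 ≤ s ∧ s < i + 1)
      = (S.filter (fun s => 1 ≤ s ∧ s < i)) ∪ (S.filter (fun s => s = i)) := by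
    ext x
    simp only [Finset.mem_union, Finset.mem_filter]
    constructor
    · rintro ⟨hx, h2, h3⟩
      rcases Nat.lt_or_ge x i with h4 | h4
      · exact Or.inl ⟨hx, h2, h4⟩
      · exact Or.inr ⟨hx, by omega⟩
    · rintro (⟨hx, h2, h3⟩ | ⟨hx, h2⟩) <;> exact ⟨hx, by omega⟩
  rw [this, Finset.card_union_of_disjoint]
  · congr 1
    rw [Finset.filter_eq']
    split_ifs <;> simp
  · rw [Finset.disjoint_filter]
    intro x _ hx
    omega

lemma cnt_between {S : Finset ℕ} {i j d : ℕ}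
    (hex : ∀ s, i ≤ s → s < i + d → s ∉ S) (hij : i + d ≤ j) :
    cntS S j ≤ cntS S i + (j - i - d) := by
  rw [cntS, cntS, ← Finset.card_filter_add_card_filter_not
    (s := S.filter (fun s => 1 ≤ s ∧ s < j)) (p := fun s => s < i)]
  have e1 : (S.filter (fun s => 1 ≤ s ∧ s < j)).filter (fun s => s < i)
      = S.filter (fun s => 1 ≤ s ∧ s < i) := by
    rw [Finset.filter_filter]
    apply Finset.filter_congr
    intro x _
    omega
  have e2 : ((S.filter (fun s => 1 ≤ s ∧ s < j)).filter (fun s => ¬ s < i)).card ≤ j - i - d := by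
    have hsub : (S.filter (fun s => 1 ≤ s ∧ s < j)).filter (fun s => ¬ s < i)
        ⊆ Finset.Ico (i+d) j := by
      intro x hx
      simp only [Finset.mem_filter] at hx
      obtain ⟨⟨hxS, _, hxj⟩, hxi⟩ := hx
      have := hex x
      simp only [Finset.mem_Ico]
      by_contra hc
      have : x < i + d := by omega
      exact hex x (by omega) this hxS
    have := Finset.card_le_card hsub
    rw [Nat.card_Ico] at this
    omega
  rw [e1]
  omega

lemma kS_eq_cntS {m : ℕ} (S : Finset ℕ) : kS m S = cntS S (m+1) := by
  rw [kS, cntS]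
  congr 1
  apply Finset.filter_congr
  intro x _
  omega
-- ### helper commute in B n
lemma σb_comm_far {n a b : ℕ} (h : a + 2 ≤ b) : σb n a * σb n b = σb n b * σb n a := by
  rcases Nat.lt_or_ge a 1 with h0 | h0
  · interval_cases a <;> rw [σb_one (Or.inl rfl)] <;> rw [one_mul, mul_one]
  rcases Nat.lt_or_ge b n with hb | hb
  · exact comm_rel h0 h (by omega)
  · rw [σb_one (Or.inr hb), one_mul, mul_one]

-- ### the strand-forgetting wreath homomorphism
abbrev Agrp (n : ℕ) : Type := Finset ℕ → B n

def permActA (n : ℕ) : Equiv.Perm ℕ →* MulAut (Agrp n) where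
  toFun π :=
    { toFun := fun f S => f (actF π⁻¹ S)
      invFun := fun f S => f (actF π S)
      left_inv := fun f => by
        funext S
        show f (actF π⁻¹ (actF π S)) = f S
        rw [← actF_mul, inv_mul_cancel, actF_one]
      right_inv := fun f => by
        funext S
        show f (actF π (actF π⁻¹ S)) = f S
        rw [← actF_mul, mul_inv_cancel, actF_one]
      map_mul' := fun f g => rfl }
  map_one' := by ext f S; simp [actF_one]
  map_mul' := fun π ρ => by
    ext f S
    show f (actF (π * ρ)⁻¹ S) = f (actF ρ⁻¹ (actF π⁻¹ S))
    rw [mul_inv_rev, actF_mul]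

abbrev Wgrp (n : ℕ) : Type := Agrp n ⋊[permActA n] Equiv.Perm ℕ

def gθ (n i : ℕ) (S : Finset ℕ) : B n :=
  if kS (n+2) S = 2 ∧ i ∉ S ∧ (i+1) ∉ S then σb n (i - cntS S i) else 1

def Θgen (n i : ℕ) : Wgrp n :=
  if 1 ≤ i ∧ i + 1 ≤ n + 2 then ⟨gθ n i, Equiv.swap i (i+1)⟩ else 1

lemma gθ_pos {n i : ℕ} {S : Finset ℕ} (hk : kS (n+2) S = 2) (h1 : i ∉ S) (h2 : (i+1) ∉ S) :
    gθ n i S = σb n (i - cntS S i) := if_pos ⟨hk, h1, h2⟩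
lemma gθ_neg {n i : ℕ} {S : Finset ℕ} (h : ¬(kS (n+2) S = 2 ∧ i ∉ S ∧ (i+1) ∉ S)) :
    gθ n i S = 1 := if_neg h

lemma Wmk_mul {n : ℕ} (f g : Agrp n) (π ρ : Equiv.Perm ℕ) :
    (⟨f, π⟩ * ⟨g, ρ⟩ : Wgrp n) = ⟨f * (permActA n π) g, π * ρ⟩ := rfl

lemma permActA_apply {n : ℕ} (π : Equiv.Perm ℕ) (f : Agrp n) (S : Finset ℕ) :
    (permActA n π f) S = f (actF π⁻¹ S) := rfl

lemma ΘB_rels (n : ℕ) : ∀ r ∈ braidRels (n+2), FreeGroup.lift (Θgen n) r = 1 := by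
  intro r hr
  rcases hr with ⟨i, h1, h2, rfl⟩ | ⟨i, j, h1, h2, h3, rfl⟩ | ⟨i, hi, rfl⟩
  · -- braid relation
    simp only [map_mul, map_inv, FreeGroup.lift_apply_of, mul_inv_eq_one]
    rw [Θgen, Θgen, if_pos (show 1 ≤ i ∧ i + 1 ≤ n + 2 by omega),
      if_pos (show 1 ≤ i + 1 ∧ i + 1 + 1 ≤ n + 2 by omega)]
    rw [Wmk_mul, Wmk_mul, Wmk_mul, Wmk_mul, SemidirectProduct.ext_iff]
    refine ⟨?_, swap_braid i⟩
    funext S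
    simp only [Pi.mul_apply, permActA_apply, map_mul, MulAut.mul_apply, mul_inv_rev,
      Equiv.swap_inv, actF_mul]
    set c := cntS S i with hc
    have hkT1 : kS (n+2) (actF (Equiv.swap i (i+1)) S) = kS (n+2) S :=
      kS_actF_swap S (by omega) (by omega)
    have hkU1 : kS (n+2) (actF (Equiv.swap (i+1) (i+1+1)) S) = kS (n+2) S :=
      kS_actF_swap S (by omega) (by omega)
    have hkT2 : kS (n+2) (actF (Equiv.swap (i+1) (i+1+1)) (actF (Equiv.swap i (i+1)) S))
        = kS (n+2) S := by rw [kS_actF_swap _ (by omega) (by omega), hkT1]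
    have hkU2 : kS (n+2) (actF (Equiv.swap i (i+1)) (actF (Equiv.swap (i+1) (i+1+1)) S))
        = kS (n+2) S := by rw [kS_actF_swap _ (by omega) (by omega), hkU1]
    have sw1L : Equiv.swap i (i+1) i = i+1 := Equiv.swap_apply_left _ _
    have sw1R : Equiv.swap i (i+1) (i+1) = i := Equiv.swap_apply_right _ _
    have sw1O : Equiv.swap i (i+1) (i+1+1) = i+1+1 :=
      Equiv.swap_apply_of_ne_of_ne (by omega) (by omega)
    have sw2L : Equiv.swap (i+1) (i+1+1) (i+1) = i+1+1 := Equiv.swap_apply_left _ _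
    have sw2R : Equiv.swap (i+1) (i+1+1) (i+1+1) = i+1 := Equiv.swap_apply_right _ _
    have sw2O : Equiv.swap (i+1) (i+1+1) i = i :=
      Equiv.swap_apply_of_ne_of_ne (by omega) (by omega)
    have miT1 : i ∈ actF (Equiv.swap i (i+1)) S ↔ i+1 ∈ S := by rw [mem_actF_swap, sw1L]
    have mi1T1 : i+1 ∈ actF (Equiv.swap i (i+1)) S ↔ i ∈ S := by rw [mem_actF_swap, sw1R]
    have mi2T1 : i+1+1 ∈ actF (Equiv.swap i (i+1)) S ↔ i+1+1 ∈ S := by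
      rw [mem_actF_swap, sw1O]
    have miT2 : i ∈ actF (Equiv.swap (i+1) (i+1+1)) (actF (Equiv.swap i (i+1)) S) ↔ i+1 ∈ S := by
      rw [mem_actF_swap, sw2O, miT1]
    have mi1T2 : i+1 ∈ actF (Equiv.swap (i+1) (i+1+1)) (actF (Equiv.swap i (i+1)) S)
        ↔ i+1+1 ∈ S := by rw [mem_actF_swap, sw2L, mi2T1]
    have miU1 : i ∈ actF (Equiv.swap (i+1) (i+1+1)) S ↔ i ∈ S := by rw [mem_actF_swap, sw2O]
    have mi1U1 : i+1 ∈ actF (Equiv.swap (i+1) (i+1+1)) S ↔ i+1+1 ∈ S := by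
      rw [mem_actF_swap, sw2L]
    have mi2U1 : i+1+1 ∈ actF (Equiv.swap (i+1) (i+1+1)) S ↔ i+1 ∈ S := by
      rw [mem_actF_swap, sw2R]
    have mi1U2 : i+1 ∈ actF (Equiv.swap i (i+1)) (actF (Equiv.swap (i+1) (i+1+1)) S)
        ↔ i ∈ S := by rw [mem_actF_swap, sw1R, miU1]
    have mi2U2 : i+1+1 ∈ actF (Equiv.swap i (i+1)) (actF (Equiv.swap (i+1) (i+1+1)) S)
        ↔ i+1 ∈ S := by rw [mem_actF_swap, sw1O, mi2U1]
    have miU2 : i ∈ actF (Equiv.swap i (i+1)) (actF (Equiv.swap (i+1) (i+1+1)) S)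
        ↔ i+1+1 ∈ S := by rw [mem_actF_swap, sw1L, mi1U1]
    have cT1 : cntS (actF (Equiv.swap i (i+1)) S) i = c := cntS_actF_swap S (by omega)
    have cU1 : cntS (actF (Equiv.swap (i+1) (i+1+1)) S) i = c := cntS_actF_swap S (by omega)
    have cT2 : cntS (actF (Equiv.swap (i+1) (i+1+1)) (actF (Equiv.swap i (i+1)) S)) i = c := by
      rw [cntS_actF_swap _ (by omega), cT1]
    have cU2 : cntS (actF (Equiv.swap i (i+1)) (actF (Equiv.swap (i+1) (i+1+1)) S)) i = c := by
      rw [cntS_actF_swap _ (by omega), cU1]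
    by_cases hk : kS (n+2) S = 2
    case neg =>
      rw [gθ_neg (fun h => hk h.1), gθ_neg (fun h => hk (hkT1 ▸ h.1)),
        gθ_neg (fun h => hk (hkT2 ▸ h.1)), gθ_neg (fun h => hk h.1),
        gθ_neg (fun h => hk (hkU1 ▸ h.1)), gθ_neg (fun h => hk (hkU2 ▸ h.1))]
    case pos =>
    have hcle : c + 1 ≤ i := by
      rcases cntS_le (S := S) (i := i) with h | h
      · omega
      · rw [← hc] at h; omega
    by_cases hA : i ∈ S <;> by_cases hB : i+1 ∈ S <;> by_cases hC : i+1+1 ∈ S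
    · -- A B C
      rw [gθ_neg (fun h => h.2.1 hA), gθ_neg (fun h => h.2.2 (mi2T1.2 hC)),
        gθ_neg (fun h => h.2.1 (miT2.2 hB)), gθ_neg (fun h => h.2.1 hB),
        gθ_neg (fun h => h.2.1 (miU1.2 hA)), gθ_neg (fun h => h.2.1 (mi1U2.2 hA))]
    · -- A B ¬C
      rw [gθ_neg (fun h => h.2.1 hA), gθ_neg (fun h => h.2.1 (mi1T1.2 hA)),
        gθ_neg (fun h => h.2.1 (miT2.2 hB)), gθ_neg (fun h => h.2.1 hB),
        gθ_neg (fun h => h.2.1 (miU1.2 hA)), gθ_neg (fun h => h.2.1 (mi1U2.2 hA))]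
    · -- A ¬B C
      rw [gθ_neg (fun h => h.2.1 hA), gθ_neg (fun h => h.2.1 (mi1T1.2 hA)),
        gθ_neg (fun h => h.2.2 (mi1T2.2 hC)), gθ_neg (fun h => h.2.2 hC),
        gθ_neg (fun h => h.2.2 (mi1U1.2 hC)), gθ_neg (fun h => h.2.1 (mi1U2.2 hA))]
    · -- A ¬B ¬C : LHS = 1*1*σ(i-c), RHS = σ(i+1-(c+1))*1*1
      rw [gθ_neg (fun h => h.2.1 hA), gθ_neg (fun h => h.2.1 (mi1T1.2 hA)),
        gθ_pos (hkT2.trans hk) (fun h => hB (miT2.1 h)) (fun h => hC (mi1T2.1 h)),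
        gθ_pos hk hB hC,
        gθ_neg (fun h => h.2.1 (miU1.2 hA)), gθ_neg (fun h => h.2.1 (mi1U2.2 hA))]
      rw [cT2, cntS_succ S i h1, if_pos hA]
      simp only [one_mul, mul_one]
      congr 1
      omega
    · -- ¬A B C
      rw [gθ_neg (fun h => h.2.2 hB), gθ_neg (fun h => h.2.2 (mi2T1.2 hC)),
        gθ_neg (fun h => h.2.1 (miT2.2 hB)), gθ_neg (fun h => h.2.1 hB),
        gθ_neg (fun h => h.2.2 (mi1U1.2 hC)), gθ_neg (fun h => h.2.2 (mi2U2.2 hB))]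
    · -- ¬A B ¬C : LHS = 1*σ(i+1-(c+1))*1, RHS = 1*σ(i-c)*1
      rw [gθ_neg (fun h => h.2.2 hB),
        gθ_pos (hkT1.trans hk) (fun h => hA (mi1T1.1 h)) (fun h => hC (mi2T1.1 h)),
        gθ_neg (fun h => h.2.1 (miT2.2 hB)), gθ_neg (fun h => h.2.1 hB),
        gθ_pos (hkU1.trans hk) (fun h => hA (miU1.1 h)) (fun h => hC (mi1U1.1 h)),
        gθ_neg (fun h => h.2.2 (mi2U2.2 hB))]
      rw [cntS_succ _ i h1, if_pos (miT1.2 hB), cT1, cU1]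
      simp only [one_mul, mul_one]
      congr 1
      omega
    · -- ¬A ¬B C : LHS = σ(i-c)*1*1, RHS = 1*1*σ(i+1-(c+1))
      rw [gθ_pos hk hA hB, gθ_neg (fun h => h.2.2 (mi2T1.2 hC)),
        gθ_neg (fun h => h.2.2 (mi1T2.2 hC)), gθ_neg (fun h => h.2.2 hC),
        gθ_neg (fun h => h.2.2 (mi1U1.2 hC)),
        gθ_pos (hkU2.trans hk) (fun h => hA (mi1U2.1 h)) (fun h => hB (mi2U2.1 h))]
      rw [cntS_succ _ i h1, if_pos (miU2.2 hC), cU2]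
      simp only [one_mul, mul_one]
      congr 1
      omega
    · -- ¬A ¬B ¬C : braid relation
      rw [gθ_pos hk hA hB,
        gθ_pos (hkT1.trans hk) (fun h => hA (mi1T1.1 h)) (fun h => hC (mi2T1.1 h)),
        gθ_pos (hkT2.trans hk) (fun h => hB (miT2.1 h)) (fun h => hC (mi1T2.1 h)),
        gθ_pos hk hB hC,
        gθ_pos (hkU1.trans hk) (fun h => hA (miU1.1 h)) (fun h => hC (mi1U1.1 h)),
        gθ_pos (hkU2.trans hk) (fun h => hA (mi1U2.1 h)) (fun h => hB (mi2U2.1 h))]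
      have hbound : i - c + 2 ≤ n := by
        have hex : ∀ s, i ≤ s → s < i + 3 → s ∉ S := by
          intro s hs1 hs2
          have : s = i ∨ s = i + 1 ∨ s = i + 1 + 1 := by omega
          rcases this with rfl | rfl | rfl
          exacts [hA, hB, hC]
        have hcb := cnt_between hex (show i + 3 ≤ n + 2 + 1 by omega)
        have hk2 := kS_eq_cntS (m := n+2) S
        omega
      have eT1 : cntS (actF (Equiv.swap i (i+1)) S) (i+1) = c := by
        rw [cntS_succ _ i h1, if_neg (fun h => hB (miT1.1 h)), cT1, add_zero]
      have eU2 : cntS (actF (Equiv.swap i (i+1)) (actF (Equiv.swap (i+1) (i+1+1)) S)) (i+1)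
          = c := by
        rw [cntS_succ _ i h1, if_neg (fun h => hC (miU2.1 h)), cU2, add_zero]
      have eS : cntS S (i+1) = c := by
        rw [cntS_succ S i h1, if_neg hA, add_zero, ← hc]
      rw [eT1, eU2, eS, cT2, cU1]
      have e1 : i + 1 - c = (i - c) + 1 := by omega
      rw [e1]
      exact braid_rel (by omega) hbound
  · -- commuting relation
    simp only [map_mul, map_inv, FreeGroup.lift_apply_of, mul_inv_eq_one]
    rw [Θgen, Θgen, if_pos (show 1 ≤ i ∧ i + 1 ≤ n + 2 by omega),
      if_pos (show 1 ≤ j ∧ j + 1 ≤ n + 2 by omega)]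
    rw [Wmk_mul, Wmk_mul, SemidirectProduct.ext_iff]
    refine ⟨?_, swap_comm_far h2⟩
    funext S
    simp only [Pi.mul_apply, permActA_apply, Equiv.swap_inv]
    have kT : kS (n+2) (actF (Equiv.swap i (i+1)) S) = kS (n+2) S :=
      kS_actF_swap S (by omega) (by omega)
    have kU : kS (n+2) (actF (Equiv.swap j (j+1)) S) = kS (n+2) S :=
      kS_actF_swap S (by omega) (by omega)
    have mjT : j ∈ actF (Equiv.swap i (i+1)) S ↔ j ∈ S := by
      rw [mem_actF_swap, Equiv.swap_apply_of_ne_of_ne (by omega) (by omega)]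
    have mj1T : j+1 ∈ actF (Equiv.swap i (i+1)) S ↔ j+1 ∈ S := by
      rw [mem_actF_swap, Equiv.swap_apply_of_ne_of_ne (by omega) (by omega)]
    have miU : i ∈ actF (Equiv.swap j (j+1)) S ↔ i ∈ S := by
      rw [mem_actF_swap, Equiv.swap_apply_of_ne_of_ne (by omega) (by omega)]
    have mi1U : i+1 ∈ actF (Equiv.swap j (j+1)) S ↔ i+1 ∈ S := by
      rw [mem_actF_swap, Equiv.swap_apply_of_ne_of_ne (by omega) (by omega)]
    have cjT : cntS (actF (Equiv.swap i (i+1)) S) j = cntS S j :=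
      cntS_actF_swap S (by omega)
    have ciU : cntS (actF (Equiv.swap j (j+1)) S) i = cntS S i :=
      cntS_actF_swap S (by omega)
    have ej : gθ n j (actF (Equiv.swap i (i+1)) S) = gθ n j S := by
      rw [gθ, gθ, kT, cjT]
      simp only [mjT, mj1T]
    have ei : gθ n i (actF (Equiv.swap j (j+1)) S) = gθ n i S := by
      rw [gθ, gθ, kU, ciU]
      simp only [miU, mi1U]
    rw [ej, ei]
    by_cases hk : kS (n+2) S = 2
    case neg =>
      rw [gθ_neg (fun h => hk h.1), gθ_neg (fun h => hk h.1)]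
    case pos =>
    by_cases hA : i ∈ S
    · rw [gθ_neg (fun h => h.2.1 hA), one_mul, mul_one]
    by_cases hB : i+1 ∈ S
    · rw [gθ_neg (fun h => h.2.2 hB), one_mul, mul_one]
    by_cases hjA : j ∈ S
    · rw [gθ_neg (fun h => h.2.1 hjA) (S := S) (i := j), one_mul, mul_one]
    by_cases hjB : j+1 ∈ S
    · rw [gθ_neg (fun h => h.2.2 hjB) (S := S) (i := j), one_mul, mul_one]
    rw [gθ_pos hk hA hB, gθ_pos hk hjA hjB]
    have hcle : cntS S i + 1 ≤ i := by
      rcases cntS_le (S := S) (i := i) with h | h <;> omega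
    have hcb : cntS S j ≤ cntS S i + (j - i - 2) := by
      apply cnt_between _ h2
      intro s hs1 hs2
      have : s = i ∨ s = i + 1 := by omega
      rcases this with rfl | rfl
      exacts [hA, hB]
    exact σb_comm_far (by omega)
  · simp only [FreeGroup.lift_apply_of]
    rw [Θgen, if_neg (by omega)]
def ΘB (n : ℕ) : B (n+2) →* Wgrp n := PresentedGroup.toGroup (ΘB_rels n)
lemma ΘB_σb {n i : ℕ} : ΘB n (σb (n+2) i) = Θgen n i := PresentedGroup.toGroup.of _

lemma ΘB_left_pos {n : ℕ} {x : B (n+2)} (h : x ∈ Bpos (n+2)) :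
    ∀ S : Finset ℕ, (ΘB n x).left S ∈ Bpos n := by
  induction h using Submonoid.closure_induction with
  | mem x hx =>
      obtain ⟨i, hi1, hi2, rfl⟩ := hx
      intro S
      rw [ΘB_σb, Θgen, if_pos (by omega)]
      show gθ n i S ∈ Bpos n
      rw [gθ]
      split_ifs
      · exact σb_pos
      · exact one_mem _
  | one => intro S; rw [map_one]; exact one_mem _
  | mul x y _ _ hx hy =>
      intro S
      rw [map_mul, SemidirectProduct.mul_left]
      exact mul_mem (hx S) (hy _)

def S₀ (n : ℕ) : Finset ℕ := {n+1, n+2}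

lemma mem_S₀ {n x : ℕ} : x ∈ S₀ n ↔ (x = n+1 ∨ x = n+2) := by
  simp [S₀]

lemma kS_S₀ (n : ℕ) : kS (n+2) (S₀ n) = 2 := by
  rw [kS]
  rw [Finset.filter_true_of_mem (by intro x hx; rw [mem_S₀] at hx; omega)]
  rw [S₀, Finset.card_insert_of_notMem (by rw [Finset.mem_singleton]; omega),
    Finset.card_singleton]

lemma cntS_S₀ {n i : ℕ} (h : i ≤ n + 1) : cntS (S₀ n) i = 0 := by
  rw [cntS]
  convert Finset.card_empty
  rw [Finset.filter_eq_empty_iff]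
  intro x hx
  rw [mem_S₀] at hx
  omega

lemma actF_fix_inv {π : Equiv.Perm ℕ} {S : Finset ℕ} (h : actF π S = S) :
    actF π⁻¹ S = S := by
  conv_lhs => rw [← h]
  rw [← actF_mul, inv_mul_cancel, actF_one]

section Embed

variable {n : ℕ} (hn : 3 ≤ n) (ι : B n →* B (n + 2))
  (hι : ∀ idx : ℕ, 1 ≤ idx → idx ≤ n - 1 → ι (σb n idx) = σb (n + 2) idx)

include hn hι

lemma theta_iota : ∀ u : B n,
    actF (ΘB n (ι u)).right (S₀ n) = S₀ n ∧ (ΘB n (ι u)).left (S₀ n) = u := by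
  intro u
  induction u using B_induction with
  | h1 =>
      rw [map_one, map_one]
      constructor
      · show actF (1 : Wgrp n).right (S₀ n) = S₀ n
        rw [SemidirectProduct.one_right, actF_one]
      · show (1 : Wgrp n).left (S₀ n) = 1
        rw [SemidirectProduct.one_left]
        rfl
  | hof i =>
      rcases Nat.lt_or_ge i 1 with h0 | h0
      · interval_cases i
        rw [σb_one (Or.inl rfl), map_one, map_one]
        constructor
        · rw [SemidirectProduct.one_right, actF_one]
        · rw [SemidirectProduct.one_left]; rfl
      rcases Nat.lt_or_ge i n with hlt | hge
      · -- valid index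
        rw [hι i h0 (by omega), ΘB_σb, Θgen, if_pos (by omega)]
        constructor
        · show actF (Equiv.swap i (i+1)) (S₀ n) = S₀ n
          apply actF_swap_eq_self
          · rw [mem_S₀]; omega
          · rw [mem_S₀]; omega
        · show gθ n i (S₀ n) = σb n i
          rw [gθ_pos (kS_S₀ n) (by rw [mem_S₀]; omega) (by rw [mem_S₀]; omega),
            cntS_S₀ (by omega), Nat.sub_zero]
      · rw [σb_one (Or.inr hge), map_one, map_one]
        constructor
        · rw [SemidirectProduct.one_right, actF_one]
        · rw [SemidirectProduct.one_left]
          rfl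
  | hinv x hx =>
      obtain ⟨hx1, hx2⟩ := hx
      rw [map_inv, map_inv]
      constructor
      · show actF (ΘB n (ι x)).right⁻¹ (S₀ n) = S₀ n
        exact actF_fix_inv hx1
      · rw [SemidirectProduct.inv_left]
        show ((ΘB n (ι x)).left⁻¹) (actF ((ΘB n (ι x)).right⁻¹)⁻¹ (S₀ n)) = x⁻¹
        rw [inv_inv, hx1]
        show ((ΘB n (ι x)).left (S₀ n))⁻¹ = x⁻¹
        rw [hx2]
  | hmul x y hx hy =>
      obtain ⟨hx1, hx2⟩ := hx
      obtain ⟨hy1, hy2⟩ := hy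
      rw [map_mul, map_mul]
      constructor
      · rw [SemidirectProduct.mul_right]
        show actF ((ΘB n (ι x)).right * (ΘB n (ι y)).right) (S₀ n) = S₀ n
        rw [actF_mul, hy1, hx1]
      · rw [SemidirectProduct.mul_left]
        show (ΘB n (ι x)).left (S₀ n) *
          ((ΘB n (ι y)).left) (actF (ΘB n (ι x)).right⁻¹ (S₀ n)) = x * y
        rw [actF_fix_inv hx1, hx2, hy2]

-- the crucial reflection lemma
lemma reflect_pos {j : ℕ} (hj1 : 1 ≤ j) (hj2 : j ≤ n - 1) (s' : B n)
    (h : (σb (n+2) j)⁻¹ * (ι s' * σb (n+2) (n+1)) ∈ Bpos (n+2)) :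
    (σb n j)⁻¹ * s' ∈ Bpos n := by
  have hpos := ΘB_left_pos h (S₀ n)
  rw [map_mul, map_mul, map_inv] at hpos
  rw [SemidirectProduct.mul_left, SemidirectProduct.inv_left] at hpos
  rw [ΘB_σb] at hpos
  obtain ⟨hι1, hι2⟩ := theta_iota hn ι hι s'
  have hjv : Θgen n j = ⟨gθ n j, Equiv.swap j (j+1)⟩ := by rw [Θgen, if_pos (by omega)]
  have hτ : ΘB n (σb (n+2) (n+1)) = ⟨gθ n (n+1), Equiv.swap (n+1) (n+1+1)⟩ := by
    rw [ΘB_σb, Θgen, if_pos (by omega)]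
  have hfix : actF (Equiv.swap j (j+1)) (S₀ n) = S₀ n :=
    actF_swap_eq_self (by rw [mem_S₀]; omega) (by rw [mem_S₀]; omega)
  have e1 : ((permActA n (Θgen n j).right⁻¹) (Θgen n j).left⁻¹) (S₀ n) = (σb n j)⁻¹ := by
    rw [hjv, permActA_apply]
    show ((gθ n j)⁻¹) (actF (Equiv.swap j (j+1))⁻¹⁻¹ (S₀ n)) = _
    rw [inv_inv, hfix]
    show (gθ n j (S₀ n))⁻¹ = _
    rw [gθ_pos (kS_S₀ n) (by rw [mem_S₀]; omega) (by rw [mem_S₀]; omega),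
      cntS_S₀ (by omega), Nat.sub_zero]
  have e2 : actF (Θgen n j).right (S₀ n) = S₀ n := by rw [hjv]; exact hfix
  rw [Pi.mul_apply, e1, SemidirectProduct.inv_right, permActA_apply, inv_inv, e2,
    SemidirectProduct.mul_left, Pi.mul_apply, hι2, permActA_apply,
    actF_fix_inv hι1, hτ] at hpos
  have e3 : gθ n (n+1) (S₀ n) = 1 := gθ_neg (fun hh => hh.2.1 (by rw [mem_S₀]; omega))
  show (σb n j)⁻¹ * s' ∈ Bpos n
  have : (σb n j)⁻¹ * s' = (σb n j)⁻¹ * (s' * gθ n (n+1) (S₀ n)) := by rw [e3, mul_one]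
  rw [this]
  exact hpos

end Embed
-- ### good properties of Φ on the image of ι and obstructions
section Phi

variable {n : ℕ}

def goodV (n : ℕ) (v : Vgrp) : Prop :=
  (∀ x, n+1 ≤ x → v.right x = x) ∧
  (∀ a b : ℕ, n+1 ≤ a ∨ n+1 ≤ b → v.left (a, b) = 1)

lemma goodV_right_inv {v : Vgrp} (h : goodV n v) {x : ℕ} (hx : n+1 ≤ x) :
    v.right⁻¹ x = x := by
  have := h.1 x hx
  calc v.right⁻¹ x = v.right⁻¹ (v.right x) := by rw [this]
    _ = x := by simp

lemma goodV_right_inv_small {v : Vgrp} (h : goodV n v) {x : ℕ} (hx : x ≤ n) :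
    v.right⁻¹ x ≤ n := by
  by_contra hc
  have hbig : n + 1 ≤ v.right⁻¹ x := by omega
  have := h.1 _ hbig
  rw [show v.right (v.right⁻¹ x) = x from Equiv.apply_symm_apply _ x] at this
  omega

lemma goodV_one : goodV n 1 := by
  constructor
  · intro x _
    show (1 : Vgrp).right x = x
    rw [SemidirectProduct.one_right]
    rfl
  · intro a b _
    show (1 : Vgrp).left (a, b) = 1
    rw [SemidirectProduct.one_left]
    rfl

lemma goodV_mul {v w : Vgrp} (hv : goodV n v) (hw : goodV n w) : goodV n (v * w) := by
  constructor
  · intro x hx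
    rw [SemidirectProduct.mul_right]
    show v.right (w.right x) = x
    rw [hw.1 x hx, hv.1 x hx]
  · intro a b hab
    rw [SemidirectProduct.mul_left, Pi.mul_apply]
    show v.left (a, b) * (permActL v.right w.left) (a, b) = 1
    rw [hv.2 a b hab]
    show 1 * w.left (v.right⁻¹ a, v.right⁻¹ b) = 1
    rw [one_mul]
    apply hw.2
    rcases hab with h | h
    · exact Or.inl (by rw [goodV_right_inv hv h]; exact h)
    · exact Or.inr (by rw [goodV_right_inv hv h]; exact h)

lemma goodV_inv {v : Vgrp} (hv : goodV n v) : goodV n v⁻¹ := by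
  constructor
  · intro x hx
    rw [SemidirectProduct.inv_right]
    exact goodV_right_inv hv hx
  · intro a b hab
    rw [SemidirectProduct.inv_left]
    show (v.left⁻¹) ((v.right⁻¹)⁻¹ a, (v.right⁻¹)⁻¹ b) = 1
    rw [inv_inv]
    show (v.left (v.right a, v.right b))⁻¹ = 1
    have : v.left (v.right a, v.right b) = 1 := by
      apply hv.2
      rcases hab with h | h
      · exact Or.inl (by rw [hv.1 a h]; exact h)
      · exact Or.inr (by rw [hv.1 b h]; exact h)
    rw [this, inv_one]

variable (hn : 3 ≤ n) (ι : B n →* B (n + 2))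
  (hι : ∀ idx : ℕ, 1 ≤ idx → idx ≤ n - 1 → ι (σb n idx) = σb (n + 2) idx)

include hn hι in
lemma phi_iota_good : ∀ u : B n, goodV n (ΦB (n+2) (ι u)) := by
  intro u
  induction u using B_induction with
  | h1 => rw [map_one, map_one]; exact goodV_one
  | hinv x hx => rw [map_inv, map_inv]; exact goodV_inv hx
  | hmul x y hx hy => rw [map_mul, map_mul]; exact goodV_mul hx hy
  | hof i =>
      rcases Nat.lt_or_ge i 1 with h0 | h0
      · interval_cases i
        rw [σb_one (Or.inl rfl), map_one, map_one]; exact goodV_one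
      rcases Nat.lt_or_ge i n with hlt | hge
      · rw [hι i h0 (by omega), ΦB_σb, Φgen, if_pos (by omega)]
        constructor
        · intro x hx
          show Equiv.swap i (i+1) x = x
          exact Equiv.swap_apply_of_ne_of_ne (by omega) (by omega)
        · intro a b hab
          show epair i (i+1) (a, b) = 1
          rw [epair]
          apply if_neg
          rintro (⟨ha, hb⟩ | ⟨ha, hb⟩) <;> omega
      · rw [σb_one (Or.inr hge), map_one, map_one]; exact goodV_one

lemma lk_obstruction {y : B (n+2)} (hgood : goodV n (ΦB (n+2) y)) (hn3 : 1 ≤ n) :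
    (σb (n+2) n)⁻¹ * (y * σb (n+2) (n+1)) ∉ Bpos (n+2) := by
  intro h
  have hp := ΦB_nonneg h (n, n+1)
  rw [map_mul, map_mul, map_inv, ΦB_σb, ΦB_σb] at hp
  rw [Φgen, if_pos (show 1 ≤ n ∧ n + 1 ≤ n+2 by omega),
    Φgen, if_pos (show 1 ≤ n+1 ∧ n+1+1 ≤ n+2 by omega)] at hp
  rw [SemidirectProduct.mul_left, Pi.mul_apply, SemidirectProduct.inv_left,
    SemidirectProduct.inv_right] at hp
  have swL : Equiv.swap n (n+1) n = n+1 := Equiv.swap_apply_left _ _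
  have swR : Equiv.swap n (n+1) (n+1) = n := Equiv.swap_apply_right _ _
  have e1 : ((permActL (⟨epair n (n+1), Equiv.swap n (n+1)⟩ : Vgrp).right⁻¹)
      (⟨epair n (n+1), Equiv.swap n (n+1)⟩ : Vgrp).left⁻¹) (n, n+1)
      = (Multiplicative.ofAdd (1:ℤ))⁻¹ := by
    show ((epair n (n+1))⁻¹) (((Equiv.swap n (n+1))⁻¹)⁻¹ n, ((Equiv.swap n (n+1))⁻¹)⁻¹ (n+1))
      = _
    rw [inv_inv]
    show ((epair n (n+1)) (Equiv.swap n (n+1) n, Equiv.swap n (n+1) (n+1)))⁻¹ = _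
    rw [swL, swR, epair, if_pos (Or.inr ⟨rfl, rfl⟩)]
  rw [e1] at hp
  have e2 : ((permActL ((⟨epair n (n+1), Equiv.swap n (n+1)⟩ : Vgrp).right⁻¹))
      ((ΦB (n+2) y) * (⟨epair (n+1) (n+1+1), Equiv.swap (n+1) (n+1+1)⟩ : Vgrp)).left) (n, n+1)
      = ((ΦB (n+2) y) * (⟨epair (n+1) (n+1+1), Equiv.swap (n+1) (n+1+1)⟩ : Vgrp)).left
          (n+1, n) := by
    show ((ΦB (n+2) y) * _).left (((Equiv.swap n (n+1))⁻¹)⁻¹ n, ((Equiv.swap n (n+1))⁻¹)⁻¹ (n+1)) = _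
    rw [inv_inv, swL, swR]
  rw [e2, SemidirectProduct.mul_left, Pi.mul_apply] at hp
  rw [hgood.2 (n+1) n (Or.inl (le_refl _)), one_mul] at hp
  have e3 : ((permActL (ΦB (n+2) y).right) (epair (n+1) (n+1+1))) (n+1, n) = 1 := by
    show epair (n+1) (n+1+1) ((ΦB (n+2) y).right⁻¹ (n+1), (ΦB (n+2) y).right⁻¹ n) = 1
    rw [goodV_right_inv hgood (le_refl _)]
    have hb : (ΦB (n+2) y).right⁻¹ n ≤ n := goodV_right_inv_small hgood (le_refl _)
    rw [epair]
    apply if_neg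
    rintro (⟨ha, hbb⟩ | ⟨ha, hbb⟩) <;> omega
  rw [e3, mul_one] at hp
  simp at hp

end Phi
section Embed2

variable {n : ℕ} (hn : 3 ≤ n) (ι : B n →* B (n + 2))
  (hι : ∀ idx : ℕ, 1 ≤ idx → idx ≤ n - 1 → ι (σb n idx) = σb (n + 2) idx)

include hn hι

lemma commute_tau : ∀ u : B n, Commute (ι u) (σb (n+2) (n+1)) := by
  intro u
  induction u using B_induction with
  | h1 => rw [map_one]; exact Commute.one_left _
  | hinv x hx => rw [map_inv]; exact hx.inv_left
  | hmul x y hx hy => rw [map_mul]; exact hx.mul_left hy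
  | hof i =>
      rcases Nat.lt_or_ge i 1 with h0 | h0
      · interval_cases i
        rw [σb_one (Or.inl rfl), map_one]; exact Commute.one_left _
      rcases Nat.lt_or_ge i n with hlt | hge
      · rw [hι i h0 (by omega)]
        exact comm_rel h0 (by omega) (by omega)
      · rw [σb_one (Or.inr hge), map_one]; exact Commute.one_left _

lemma ι_pos {u : B n} (h : u ∈ Bpos n) : ι u ∈ Bpos (n+2) := by
  induction h using Submonoid.closure_induction with
  | mem x hx =>
      obtain ⟨i, h1, h2, rfl⟩ := hx
      rw [hι i h1 h2]
      exact σb_pos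
  | one => rw [map_one]; exact one_mem _
  | mul x y _ _ hx hy => rw [map_mul]; exact mul_mem hx hy

lemma ι_word {l : List ℕ} (h : ∀ a ∈ l, 1 ≤ a ∧ a ≤ n - 1) :
    ι (word n l) = word (n+2) l := by
  induction l with
  | nil => rw [word_nil, word_nil, map_one]
  | cons a l ih =>
      rw [word_cons, word_cons, map_mul,
        hι a (h a (List.mem_cons_self)).1 (h a (List.mem_cons_self)).2,
        ih (fun b hb => h b (List.mem_cons_of_mem _ hb))]

lemma ι_Dk {k : ℕ} (hk : k ≤ n - 1) : ι (Dk n k) = Dk (n+2) k := by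
  rw [Dk, Dk]
  exact ι_word hn ι hι (fun a ha => by have := mem_DkList ha; omega)

lemma ι_Delta : ι (DeltaB n) = Dk (n+2) (n-1) := by
  rw [DeltaB_eq_Dk]
  exact ι_Dk hn ι hι (le_refl _)

lemma Delta_decomp : DeltaB (n+2) = ι (DeltaB n) * (bw (n+2) n * bw (n+2) (n+1)) := by
  rw [ι_Delta hn ι hι, DeltaB_eq_Dk]
  obtain ⟨n', rfl⟩ : ∃ n', n = n' + 1 := ⟨n - 1, by omega⟩
  have e1 : n' + 1 + 2 - 1 = (n' + 1) + 1 := by omega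
  have e2 : n' + 1 - 1 = n' := by omega
  rw [e1, e2, Dk_succ, Dk_succ, mul_assoc]

lemma ec_ι (u : B n) : ec (ι u) = ec u := by
  have : (eB (n+2)).comp ι = eB n := by
    apply hom_ext
    intro i
    rcases Nat.lt_or_ge i 1 with h0 | h0
    · interval_cases i
      rw [MonoidHom.comp_apply, σb_one (Or.inl rfl), map_one, map_one, map_one]
    rcases Nat.lt_or_ge i n with hlt | hge
    · rw [MonoidHom.comp_apply, hι i h0 (by omega), eB_σb, eB_σb,
        if_pos (by omega), if_pos (by omega)]
    · rw [MonoidHom.comp_apply, σb_one (Or.inr hge), map_one, map_one, map_one]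
  rw [ec, ec, ← this, MonoidHom.comp_apply]

lemma ec_DeltaM : ec (DeltaB (n+2)) = ec (DeltaB n) + (2 * n + 1) := by
  rw [Delta_decomp hn ι hι, ec_mul, ec_mul, ec_ι hn ι hι,
    ec_bw (by omega), ec_bw (by omega)]
  push_cast
  ring

-- simplicity of ι s * τ
lemma simple_tau {s : B n} (hs : bLe n s (DeltaB n)) :
    bLe (n+2) (ι s * σb (n+2) (n+1)) (DeltaB (n+2)) := by
  rw [bLe]
  have key : (ι s * σb (n+2) (n+1))⁻¹ * DeltaB (n+2)
      = ι (s⁻¹ * DeltaB n) *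
        ((σb (n+2) (n+1))⁻¹ * (bw (n+2) (n+1-1) * bw (n+2) (n+1))) := by
    have hc : ι (DeltaB n) * (σb (n+2) (n+1))⁻¹
        = (σb (n+2) (n+1))⁻¹ * ι (DeltaB n) := ((commute_tau hn ι hι (DeltaB n)).inv_right).eq
    have e2 : n + 1 - 1 = n := by omega
    have hc1 : (σb (n+2) (n+1))⁻¹ * (ι s)⁻¹ = (ι s)⁻¹ * (σb (n+2) (n+1))⁻¹ :=
      ((commute_tau hn ι hι s).inv_left.inv_right).eq.symm
    rw [Delta_decomp hn ι hι, map_mul, map_inv, e2]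
    calc (ι s * σb (n+2) (n+1))⁻¹ * (ι (DeltaB n) * (bw (n+2) n * bw (n+2) (n+1)))
        = ((σb (n+2) (n+1))⁻¹ * (ι s)⁻¹) * ι (DeltaB n) * (bw (n+2) n * bw (n+2) (n+1)) := by
          rw [mul_inv_rev]; group
      _ = ((ι s)⁻¹ * (σb (n+2) (n+1))⁻¹) * ι (DeltaB n) * (bw (n+2) n * bw (n+2) (n+1)) := by
          rw [hc1]
      _ = (ι s)⁻¹ * (ι (DeltaB n) * (σb (n+2) (n+1))⁻¹) * (bw (n+2) n * bw (n+2) (n+1)) := by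
          rw [mul_assoc ((ι s)⁻¹), ← hc]
      _ = (ι s)⁻¹ * ι (DeltaB n) *
          ((σb (n+2) (n+1))⁻¹ * (bw (n+2) n * bw (n+2) (n+1))) := by group
  rw [key]
  exact mul_mem (ι_pos hn ι hι hs) (CL (n+1) (by omega) (by omega))

end Embed2
section Final

variable {n : ℕ} (hn : 3 ≤ n) (ι : B n →* B (n + 2))
  (hι : ∀ idx : ℕ, 1 ≤ idx → idx ≤ n - 1 → ι (σb n idx) = σb (n + 2) idx)

include hn hι

lemma startset_iotatau (s' : B n) (j : ℕ)
    (hj : j ∈ startSet (n+2) (ι s' * σb (n+2) (n+1))) :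
    j = n+1 ∨ (1 ≤ j ∧ j ≤ n-1 ∧ bLe n (σb n j) s') := by
  obtain ⟨hj1, hj2, hj3⟩ := hj
  rcases Nat.lt_or_ge j n with hlt | hge
  · rcases Nat.lt_or_ge j (n-1+1) with hlt2 | hge2
    · exact Or.inr ⟨hj1, by omega, reflect_pos hn ι hι hj1 (by omega) s' hj3⟩
    ·
      omega
  · rcases Nat.lt_or_ge j (n+1) with hlt2 | hge2
    · -- j = n
      have hjn : j = n := by omega
      rw [hjn] at hj3
      exact absurd hj3 (lk_obstruction (phi_iota_good hn ι hι s') (by omega))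
    · left; omega

lemma startset_tau (j : ℕ) (hj : j ∈ startSet (n+2) (σb (n+2) (n+1))) : j = n+1 := by
  obtain ⟨hj1, hj2, hj3⟩ := hj
  rcases Nat.lt_or_ge j n with hlt | hge
  · exfalso
    have h' : (σb (n+2) j)⁻¹ * (ι 1 * σb (n+2) (n+1)) ∈ Bpos (n+2) := by
      rw [map_one, one_mul]; exact hj3
    have := reflect_pos hn ι hι hj1 (by omega) 1 h'
    rw [mul_one] at this
    have hebound := ec_nonneg this
    rw [ec_inv, ec_σb_valid hj1 (by omega)] at hebound
    omega
  · rcases Nat.lt_or_ge j (n+1) with hlt2 | hge2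
    · exfalso
      have hjn : j = n := by omega
      rw [hjn] at hj3
      have h' : (σb (n+2) n)⁻¹ * ((1 : B (n+2)) * σb (n+2) (n+1)) ∈ Bpos (n+2) := by
        rw [one_mul]; exact hj3
      exact lk_obstruction (by rw [map_one]; exact goodV_one) (by omega) h'
    · omega

lemma finset_iotatau {s : B n} (hs : s ∈ Bpos n) (j : ℕ)
    (hj : j = n+1 ∨ (1 ≤ j ∧ j ≤ n-1 ∧ bGe n s (σb n j))) :
    j ∈ finishSet (n+2) (ι s * σb (n+2) (n+1)) := by
  rcases hj with rfl | ⟨h1, h2, h3⟩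
  · refine ⟨by omega, by omega, ?_⟩
    rw [bGe, mul_inv_cancel_right]
    exact ι_pos hn ι hι hs
  · refine ⟨h1, by omega, ?_⟩
    rw [bGe]
    have hcm : Commute (σb (n+2) j) (σb (n+2) (n+1)) :=
      comm_rel h1 (by omega) (by omega)
    have key : (ι s * σb (n+2) (n+1)) * (σb (n+2) j)⁻¹
        = ι (s * (σb n j)⁻¹) * σb (n+2) (n+1) := by
      rw [map_mul, map_inv, hι j h1 h2, mul_assoc, ← hcm.inv_left.eq, ← mul_assoc]
    rw [key]
    exact mul_mem (ι_pos hn ι hι h3) σb_pos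

end Final
section Final2

variable {n : ℕ} (hn : 3 ≤ n) (ι : B n →* B (n + 2))
  (hι : ∀ idx : ℕ, 1 ≤ idx → idx ≤ n - 1 → ι (σb n idx) = σb (n + 2) idx)

include hn hι

lemma ec_tau : ec (σb (n+2) (n+1)) = 1 := ec_σb_valid (by omega) (by omega)

lemma ec_le_Delta {s : B n} (hs : bLe n s (DeltaB n)) : ec s ≤ ec (DeltaB n) := by
  have h1 : DeltaB n = s * (s⁻¹ * DeltaB n) := by group
  have h2 := ec_nonneg hs
  calc ec s ≤ ec s + ec (s⁻¹ * DeltaB n) := by omega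
    _ = ec (DeltaB n) := by rw [← ec_mul, ← h1]

lemma y_ne_one {s : B n} (hs : s ∈ Bpos n) : ι s * σb (n+2) (n+1) ≠ 1 := by
  intro h
  have := congrArg ec h
  rw [ec_mul, ec_ι hn ι hι, ec_tau hn ι hι, ec_one] at this
  have := ec_nonneg hs
  omega

lemma y_ne_Delta {s : B n} (hs : bLe n s (DeltaB n)) :
    ι s * σb (n+2) (n+1) ≠ DeltaB (n+2) := by
  intro h
  have he := congrArg ec h
  rw [ec_mul, ec_ι hn ι hι, ec_tau hn ι hι, ec_DeltaM hn ι hι] at he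
  have := ec_le_Delta hn ι hι hs
  omega

lemma tau_ne_one : σb (n+2) (n+1) ≠ (1 : B (n+2)) := by
  intro h
  have := congrArg ec h
  rw [ec_tau hn ι hι, ec_one] at this
  omega

lemma tau_ne_Delta : σb (n+2) (n+1) ≠ DeltaB (n+2) := by
  intro h
  have he := congrArg ec h
  rw [ec_tau hn ι hι, ec_DeltaM hn ι hι] at he
  have : (0:ℤ) ≤ ec (DeltaB n) := ec_nonneg (word_pos _)
  omega

lemma Delta_n_pos : DeltaB n ∈ Bpos n := word_pos _

lemma Delta_n_le_self : bLe n (DeltaB n) (DeltaB n) := by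
  rw [bLe, inv_mul_cancel]; exact one_mem _

lemma tau_simple : isSimple (n+2) (σb (n+2) (n+1)) := by
  constructor
  · exact σb_pos
  · rw [bLe]
    have hD : DeltaB (n+2) = Dk (n+2) (n+1) := by
      rw [DeltaB_eq_Dk]
      congr 1
    rw [hD]
    exact SD (n+1) (by omega) (n+1) (by omega) (le_refl _)

lemma iotatau_simple {s : B n} (hs : isSimple n s) :
    isSimple (n+2) (ι s * σb (n+2) (n+1)) :=
  ⟨mul_mem (ι_pos hn ι hι hs.1) σb_pos, simple_tau hn ι hι hs.2⟩

-- startSet of any element of the family is contained in finishSet of ι Δ τ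
lemma head_fin (j : ℕ) (hj : j = n+1 ∨ (1 ≤ j ∧ j ≤ n-1)) :
    j ∈ finishSet (n+2) (ι (DeltaB n) * σb (n+2) (n+1)) := by
  apply finset_iotatau hn ι hι (Delta_n_pos hn ι hι)
  rcases hj with rfl | ⟨h1, h2⟩
  · exact Or.inl rfl
  · refine Or.inr ⟨h1, h2, ?_⟩
    rw [bGe]
    have hD : DeltaB n = Dk n (n-1) := DeltaB_eq_Dk
    rw [hD]
    exact FD (n-1) (by omega) j h1 h2

lemma chain_tail (l : List (B n)) (hsimp : ∀ s ∈ l, isSimple n s)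
    (hch : List.Chain' (fun a b => startSet n b ⊆ finishSet n a) l) :
    List.Chain' (fun a b => startSet (n+2) b ⊆ finishSet (n+2) a)
      ((l.map (fun s => ι s * σb (n+2) (n+1))) ++ [σb (n+2) (n+1)]) := by
  induction l with
  | nil => exact List.isChain_singleton _
  | cons s l ih =>
      rw [List.map_cons, List.cons_append]; show List.IsChain _ (_ :: _); rw [List.isChain_cons]
      constructor
      · -- relation between ι s τ and the head of the rest
        intro b hb
        cases l with
        | nil =>
            simp only [List.map_nil, List.nil_append, List.head?_cons, Option.mem_some_iff] at hb
            subst hb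
            intro j hj
            have := startset_tau hn ι hι j hj
            exact finset_iotatau hn ι hι (hsimp s (List.mem_cons_self)).1 j (Or.inl this)
        | cons s' l' =>
            simp only [List.map_cons, List.cons_append, List.head?_cons,
              Option.mem_some_iff] at hb
            subst hb
            intro j hj
            rcases startset_iotatau hn ι hι s' j hj with h | ⟨h1, h2, h3⟩
            · exact finset_iotatau hn ι hι (hsimp s (List.mem_cons_self)).1 j (Or.inl h)
            · have hrel : startSet n s' ⊆ finishSet n s := (List.isChain_cons_cons.1 hch).1
              have hjs : j ∈ startSet n s' := ⟨h1, h2, h3⟩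
              have := hrel hjs
              exact finset_iotatau hn ι hι (hsimp s (List.mem_cons_self)).1 j
                (Or.inr ⟨this.1, this.2.1, this.2.2⟩)
      · apply ih
        · intro x hx; exact hsimp x (List.mem_cons_of_mem _ hx)
        · exact List.IsChain.tail hch

lemma prod_map_tau (l : List (B n)) :
    (l.map (fun s => ι s * σb (n+2) (n+1))).prod
      = ι l.prod * (σb (n+2) (n+1)) ^ l.length := by
  induction l with
  | nil => simp
  | cons s l ih =>
      rw [List.map_cons, List.prod_cons, ih, List.prod_cons, List.length_cons, map_mul]
      have hc : σb (n+2) (n+1) * ι l.prod = ι l.prod * σb (n+2) (n+1) :=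
        (commute_tau hn ι hι l.prod).eq.symm
      calc ι s * σb (n+2) (n+1) * (ι l.prod * σb (n+2) (n+1) ^ l.length)
          = ι s * (σb (n+2) (n+1) * ι l.prod) * σb (n+2) (n+1) ^ l.length := by group
        _ = ι s * (ι l.prod * σb (n+2) (n+1)) * σb (n+2) (n+1) ^ l.length := by rw [hc]
        _ = ι s * ι l.prod * σb (n+2) (n+1) ^ (l.length + 1) := by
            rw [pow_succ']
            group
  
end Final2

/-- if `(s_1,…,s_r)` is a left-weighted sequence of proper simple factors in
`B_n`, then `(ι(Δ_n)σ_{n+1}, ι(s_1)σ_{n+1}, …, ι(s_r)σ_{n+1}, σ_{n+1})` is one in `B_{n+2}`,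
with product `ι(Δ_n s_1 ⋯ s_r) σ_{n+1}^{r+2}`. -/
theorem statement17 (n r : ℕ) (hn : 3 ≤ n) (hr : 1 ≤ r)
    (ι : B n →* B (n + 2))
    (hι : ∀ idx : ℕ, 1 ≤ idx → idx ≤ n - 1 → ι (σb n idx) = σb (n + 2) idx)
    (ss : List (B n)) (hlen : ss.length = r) (hlw : LWSeq n ss) :
    ∀ ys : List (B (n + 2)),
      ys = (ι (DeltaB n) * σb (n + 2) (n + 1)) ::
             ((ss.map fun s => ι s * σb (n + 2) (n + 1)) ++ [σb (n + 2) (n + 1)]) →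
      LWSeq (n + 2) ys ∧
      ys.prod = ι (DeltaB n * ss.prod) * (σb (n + 2) (n + 1)) ^ (r + 2) := by
  intro ys hys
  subst hys
  constructor
  · constructor
    · -- all elements are proper simple factors
      intro y hy
      rcases List.mem_cons.1 hy with rfl | hy2
      · exact ⟨iotatau_simple hn ι hι ⟨Delta_n_pos hn ι hι, Delta_n_le_self hn ι hι⟩,
          y_ne_one hn ι hι (Delta_n_pos hn ι hι),
          y_ne_Delta hn ι hι (Delta_n_le_self hn ι hι)⟩
      rcases List.mem_append.1 hy2 with hy3 | hy4
      · obtain ⟨s, hs, rfl⟩ := List.mem_map.1 hy3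
        obtain ⟨hsimp, _, _⟩ := hlw.1 s hs
        exact ⟨iotatau_simple hn ι hι hsimp, y_ne_one hn ι hι hsimp.1,
          y_ne_Delta hn ι hι hsimp.2⟩
      · have : y = σb (n+2) (n+1) := by simpa using hy4
        subst this
        exact ⟨tau_simple hn ι hι, tau_ne_one hn ι hι, tau_ne_Delta hn ι hι⟩
    · -- the chain condition
      show List.IsChain _ (_ :: _); rw [List.isChain_cons]
      constructor
      · intro b hb
        cases ss with
        | nil => simp at hlen; omega
        | cons s1 rest =>
            simp only [List.map_cons, List.cons_append, List.head?_cons,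
              Option.mem_some_iff] at hb
            subst hb
            intro j hj
            rcases startset_iotatau hn ι hι s1 j hj with h | ⟨h1, h2, _⟩
            · exact head_fin hn ι hι j (Or.inl h)
            · exact head_fin hn ι hι j (Or.inr ⟨h1, h2⟩)
      · exact chain_tail hn ι hι ss (fun s hs => (hlw.1 s hs).1) hlw.2
  · -- the product formula
    rw [List.prod_cons, List.prod_append, List.prod_singleton, prod_map_tau hn ι hι, hlen,
      map_mul]
    have hc : σb (n+2) (n+1) * ι ss.prod = ι ss.prod * σb (n+2) (n+1) :=
      (commute_tau hn ι hι ss.prod).eq.symm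
    calc ι (DeltaB n) * σb (n+2) (n+1) * (ι ss.prod * σb (n+2) (n+1) ^ r * σb (n+2) (n+1))
        = ι (DeltaB n) * (σb (n+2) (n+1) * ι ss.prod) *
            (σb (n+2) (n+1) ^ r * σb (n+2) (n+1)) := by group
      _ = ι (DeltaB n) * (ι ss.prod * σb (n+2) (n+1)) *
            (σb (n+2) (n+1) ^ r * σb (n+2) (n+1)) := by rw [hc]
      _ = ι (DeltaB n) * ι ss.prod * σb (n+2) (n+1) ^ (r + 2) := by
            rw [show r + 2 = r + 1 + 1 from rfl, pow_succ, pow_succ]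
            group
end
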